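/- arXiv:1805.01562 — 5 statements merged into one kernel-verified Lean document; each statement's English description precedes it below -/
import Mathlib

section
/- Let n ≥ sk+1. The number of s-separated k-subsets of a circle with n elements that contain the fixed element 1 is C(n - sk - 1, k - 1). -/
/-- Circular distance between `a` and `b` on a circle of `n` elements labeled `1,...,n`. -/
def circDist (n a b : ℕ) : ℕ := min (max a b - min a b) (n - (max a b - min a b))

/-- A subset of the circle `{1,...,n}` is `s`-separated if any two distinct elements
have circular distance at least `s+1`. -/
def IsSepCircle (n s : ℕ) (S : Finset ℕ) : Prop :=
  ∀ a ∈ S, ∀ b ∈ S, a ≠ b → s + 1 ≤ circDist n a b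

/-!
Write an `s`-separated set containing `1` as `1 = a₀ < a₁ < ⋯ < a_{k-1}`. Circular separation
says exactly that consecutive elements differ by at least `s + 1` and that `a_{k-1} ≤ n - s`.
Replacing `aᵢ` by `aᵢ - s i` (where `i` is the number of elements below `aᵢ`) turns these sets
bijectively into the arbitrary `k`-subsets of `[1, n - s k]` containing `1`; the inverse adds
`s i` back. Those subsets are counted by choosing the other `k - 1` elements in `[2, n - s k]`.
-/

open Finset

def IsGapped (d : ℕ) (S : Finset ℕ) : Prop :=
  ∀ a ∈ S, ∀ b ∈ S, a < b → a + d ≤ b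

def rank (S : Finset ℕ) (a : ℕ) : ℕ := #{x ∈ S | x < a}

section rank

variable {S : Finset ℕ} {a b d : ℕ}

lemma rank_mono (S : Finset ℕ) : Monotone (rank S) := fun _ _ hab =>
  card_le_card <| monotone_filter_right S fun _ _ hx => lt_of_lt_of_le hx hab

lemma rank_lt_rank (ha : a ∈ S) (hab : a < b) : rank S a < rank S b := by
  refine card_lt_card <| (ssubset_iff_of_subset ?_).2 ⟨a, ?_, by simp⟩
  · exact monotone_filter_right S fun _ _ hx => hx.trans hab
  · simpa using ⟨ha, hab⟩

lemma rank_eq_zero (h : ∀ x ∈ S, a ≤ x) : rank S a = 0 := by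
  simpa [rank, filter_eq_empty_iff] using h

lemma rank_lt_card (ha : a ∈ S) : rank S a < #S :=
  card_lt_card <| (ssubset_iff_of_subset (filter_subset _ S)).2 ⟨a, ha, by simp⟩

lemma rank_max' (h : S.Nonempty) : rank S (S.max' h) = #S - 1 := by
  rw [← card_erase_of_mem (S.max'_mem h), rank]
  congr 1
  ext x
  simp only [mem_filter, mem_erase]
  exact ⟨fun hx => ⟨hx.2.ne, hx.1⟩, fun hx => ⟨hx.2, (S.le_max' x hx.2).lt_of_ne hx.1⟩⟩

lemma rank_image {φ : ℕ → ℕ} (hφ : StrictMonoOn φ S) (ha : a ∈ S) :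
    rank (S.image φ) (φ a) = rank S a := by
  rw [rank, filter_image, card_image_of_injOn (hφ.injOn.mono (filter_subset _ S)), rank]
  congr 1
  exact filter_congr fun x hx => hφ.lt_iff_lt hx ha

lemma rank_add_card_filter_Ico (hab : a ≤ b) :
    rank S a + #{x ∈ S | x ∈ Ico a b} = rank S b := by
  rw [rank, rank, ← card_union_of_disjoint, ← filter_or]
  · exact congrArg card <| filter_congr fun x _ => by simp only [mem_Ico]; omega
  · exact disjoint_filter.2 fun x _ hx => by simp only [mem_Ico]; omega

/-- The intervals `[x, x + d)`, `x ∈ S ∩ [a, b)`, are disjoint and lie in `[a, b)`. -/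
lemma IsGapped.mul_card_filter_Ico_le (h : IsGapped d S) (hb : b ∈ S) :
    d * #{x ∈ S | x ∈ Ico a b} ≤ b - a := by
  set U := {x ∈ S | x ∈ Ico a b}
  have hU : ∀ x ∈ U, x ∈ S ∧ a ≤ x ∧ x < b := by simp [U]
  have hdisj : (U : Set ℕ).PairwiseDisjoint fun x => Ico x (x + d) := by
    intro x hx y hy hxy
    rcases hxy.lt_or_gt with hlt | hlt
    · have := h x (hU x hx).1 y (hU y hy).1 hlt
      exact disjoint_left.2 fun z hz hz' => by simp only [mem_Ico] at hz hz'; omega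
    · have := h y (hU y hy).1 x (hU x hx).1 hlt
      exact disjoint_left.2 fun z hz hz' => by simp only [mem_Ico] at hz hz'; omega
  calc d * #U = #(U.biUnion fun x => Ico x (x + d)) := by
        rw [card_biUnion hdisj]; simp [mul_comm]
    _ ≤ #(Ico a b) := by
        refine card_le_card <| biUnion_subset.2 fun x hx => Ico_subset_Ico (hU x hx).2.1 ?_
        exact h x (hU x hx).1 b hb (hU x hx).2.2
    _ = b - a := Nat.card_Ico a b

lemma IsGapped.mul_rank_sub_le (h : IsGapped d S) (hb : b ∈ S) (hab : a ≤ b) :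
    d * (rank S b - rank S a) ≤ b - a := by
  rw [← rank_add_card_filter_Ico (S := S) hab, Nat.add_sub_cancel_left]
  exact h.mul_card_filter_Ico_le hb

lemma IsGapped.mul_rank_le (h : IsGapped d S) (hb : b ∈ S) : d * rank S b ≤ b := by
  simpa [rank_eq_zero (a := 0) (S := S) (fun x _ => x.zero_le)] using
    h.mul_rank_sub_le hb b.zero_le

end rank

def squeeze (s : ℕ) (S : Finset ℕ) : Finset ℕ := S.image fun a => a - s * rank S a

def spread (s : ℕ) (T : Finset ℕ) : Finset ℕ := T.image fun b => b + s * rank T b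

section squeeze

variable {s : ℕ} {S T : Finset ℕ}

lemma strictMono_add_mul_rank (s : ℕ) (T : Finset ℕ) : StrictMono fun b => b + s * rank T b :=
  fun a b hab => by
    have := Nat.mul_le_mul_left s (rank_mono T hab.le)
    dsimp only
    omega

lemma IsGapped.strictMonoOn_sub_mul_rank (h : IsGapped (s + 1) S) :
    StrictMonoOn (fun a => a - s * rank S a) S := by
  intro a ha b hb hab
  have hrank := rank_lt_rank ha hab
  have hgap := h.mul_rank_sub_le hb hab.le
  have ha' := h.mul_rank_le ha
  have hsplit : s * rank S b = s * rank S a + s * (rank S b - rank S a) := by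
    rw [← Nat.mul_add, Nat.add_sub_cancel' hrank.le]
  rw [add_one_mul] at hgap ha'
  dsimp only
  omega

lemma squeeze_spread (s : ℕ) (T : Finset ℕ) : squeeze s (spread s T) = T := by
  rw [squeeze, spread, image_image]
  refine (image_congr fun b hb => ?_).trans image_id
  simp [rank_image ((strictMono_add_mul_rank s T).strictMonoOn _) hb]

lemma IsGapped.spread_squeeze (h : IsGapped (s + 1) S) : spread s (squeeze s S) = S := by
  rw [squeeze, spread, image_image]
  refine (image_congr fun a ha => ?_).trans image_id
  have := h.mul_rank_le ha
  rw [add_one_mul] at this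
  simp only [Function.comp_apply, rank_image h.strictMonoOn_sub_mul_rank ha, id]
  omega

lemma isGapped_spread (s : ℕ) (T : Finset ℕ) : IsGapped (s + 1) (spread s T) := by
  simp only [IsGapped, spread, forall_mem_image]
  intro a ha b hb hab
  rw [(strictMono_add_mul_rank s T).lt_iff_lt] at hab
  have := Nat.mul_le_mul_left s (rank_lt_rank ha hab)
  rw [Nat.mul_succ] at this
  omega

lemma card_spread (s : ℕ) (T : Finset ℕ) : #(spread s T) = #T :=
  card_image_of_injective T (strictMono_add_mul_rank s T).injective

lemma IsGapped.card_squeeze (h : IsGapped (s + 1) S) : #(squeeze s S) = #S :=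
  card_image_of_injOn h.strictMonoOn_sub_mul_rank.injOn

lemma bijOn_squeeze (s a b k : ℕ) :
    Set.BijOn (squeeze s) {S | S ⊆ Icc a (b + s * k) ∧ #S = k + 1 ∧ IsGapped (s + 1) S ∧ a ∈ S}
      {T | T ⊆ Icc a b ∧ #T = k + 1 ∧ a ∈ T} := by
  refine Set.InvOn.bijOn (f' := spread s) ⟨fun S hS => hS.2.2.1.spread_squeeze,
    fun T _ => squeeze_spread s T⟩ ?_ ?_
  · rintro S ⟨hS, hcard, hgap, ha⟩
    have hmin : ∀ x ∈ S, a ≤ x := fun x hx => (mem_Icc.1 (hS hx)).1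
    refine ⟨?_, hcard ▸ hgap.card_squeeze, mem_image.2 ⟨a, ha, by simp [rank_eq_zero hmin]⟩⟩
    have hne : S.Nonempty := ⟨a, ha⟩
    have hmax := (mem_Icc.1 (hS (S.max'_mem hne))).2
    simp only [squeeze, image_subset_iff, mem_Icc]
    intro x hx
    -- the upper bound is the value `max' S - s k` of the monotone map at the maximum
    have hle := hgap.strictMonoOn_sub_mul_rank.monotoneOn hx (S.max'_mem hne) (S.le_max' x hx)
    have hlow : s * rank S x + rank S x ≤ x - a := by
      simpa [rank_eq_zero hmin, add_one_mul] using hgap.mul_rank_sub_le hx (hmin x hx)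
    simp only [rank_max' hne, hcard, Nat.add_sub_cancel] at hle
    have := hmin x hx
    omega
  · rintro T ⟨hT, hcard, ha⟩
    refine ⟨?_, card_spread s T ▸ hcard, isGapped_spread s T, ?_⟩
    · simp only [spread, image_subset_iff, mem_Icc]
      intro x hx
      have := (mem_Icc.1 (hT hx))
      have := Nat.mul_le_mul_left s (Nat.lt_succ_iff.1 (hcard ▸ rank_lt_card hx))
      omega
    · exact mem_image.2 ⟨a, ha, by simp [rank_eq_zero fun x hx => (mem_Icc.1 (hT hx)).1]⟩

end squeeze

lemma ncard_subsets_Icc_of_mem_left {a b : ℕ} (hab : a ≤ b) (k : ℕ) :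
    {T : Finset ℕ | T ⊆ Icc a b ∧ #T = k + 1 ∧ a ∈ T}.ncard = (b - a).choose k := by
  have hbij : Set.BijOn (insert a) ↑(powersetCard k (Ioc a b))
      {T : Finset ℕ | T ⊆ Icc a b ∧ #T = k + 1 ∧ a ∈ T} := by
    have hnotMem : ∀ U ∈ powersetCard k (Ioc a b), a ∉ U := fun U hU haU => by
      simpa using (mem_powersetCard.1 hU).1 haU
    refine Set.InvOn.bijOn (f' := fun T => T.erase a)
      ⟨fun U hU => erase_insert (hnotMem U hU), fun T hT => insert_erase hT.2.2⟩ ?_ ?_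
    · intro U hU
      obtain ⟨hsub, hcard⟩ := mem_powersetCard.1 hU
      refine ⟨insert_subset (left_mem_Icc.2 hab) (hsub.trans Ioc_subset_Icc_self), ?_,
        mem_insert_self a U⟩
      rw [card_insert_of_notMem (hnotMem U hU), hcard]
    · rintro T ⟨hsub, hcard, ha⟩
      refine mem_powersetCard.2
        ⟨fun x hx => ?_, by rw [card_erase_of_mem ha, hcard, Nat.add_sub_cancel]⟩
      obtain ⟨hxa, hxT⟩ := mem_erase.1 hx
      have := mem_Icc.1 (hsub hxT)
      exact mem_Ioc.2 ⟨by omega, this.2⟩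
  rw [← hbij.ncard_eq, Set.ncard_coe_finset, card_powersetCard, Nat.card_Ioc]

lemma circDist_comm (n a b : ℕ) : circDist n a b = circDist n b a := by
  rw [circDist, circDist, max_comm, min_comm a]

lemma circDist_of_lt {n a b : ℕ} (h : a < b) : circDist n a b = min (b - a) (n - (b - a)) := by
  rw [circDist, max_eq_right h.le, min_eq_left h.le]

lemma isSepCircle_iff {n s : ℕ} {S : Finset ℕ} (hsn : s < n) (hS : S ⊆ Icc 1 n) (h1 : 1 ∈ S) :
    IsSepCircle n s S ↔ IsGapped (s + 1) S ∧ S ⊆ Icc 1 (n - s) := by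
  constructor
  · intro hsep
    refine ⟨fun a ha b hb hab => ?_, fun x hx => ?_⟩
    · have := hsep a ha b hb hab.ne
      rw [circDist_of_lt hab] at this
      omega
    · have hx' := mem_Icc.1 (hS hx)
      rw [mem_Icc]
      rcases eq_or_ne x 1 with rfl | hx1
      · omega
      · have := hsep 1 h1 x hx hx1.symm
        rw [circDist_of_lt (by omega)] at this
        omega
  · rintro ⟨hgap, hS'⟩ a ha b hb hab
    wlog hlt : a < b generalizing a b
    · rw [circDist_comm]
      exact this b hb a ha hab.symm (by omega)
    have := hgap a ha b hb hlt
    have := mem_Icc.1 (hS' ha)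
    have := mem_Icc.1 (hS' hb)
    rw [circDist_of_lt hlt]
    omega

theorem stmt_3_general (n s k : ℕ) (hk : 1 ≤ k) (hn : s * k + 1 ≤ n) :
    {S : Finset ℕ | S ⊆ Finset.Icc 1 n ∧ S.card = k ∧ IsSepCircle n s S ∧ 1 ∈ S}.ncard =
      (n - s * k - 1).choose (k - 1) := by
  obtain ⟨j, rfl⟩ : ∃ j, k = j + 1 := ⟨k - 1, by omega⟩
  rw [mul_add_one] at hn ⊢
  have hsn : s < n := by omega
  have hset : {S : Finset ℕ | S ⊆ Icc 1 n ∧ #S = j + 1 ∧ IsSepCircle n s S ∧ 1 ∈ S} =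
      {S | S ⊆ Icc 1 (n - (s * j + s) + s * j) ∧ #S = j + 1 ∧ IsGapped (s + 1) S ∧ 1 ∈ S} := by
    ext S
    rw [show n - (s * j + s) + s * j = n - s by omega]
    constructor
    · rintro ⟨hS, hcard, hsep, h1⟩
      obtain ⟨hgap, hS'⟩ := (isSepCircle_iff hsn hS h1).1 hsep
      exact ⟨hS', hcard, hgap, h1⟩
    · rintro ⟨hS', hcard, hgap, h1⟩
      have hS := hS'.trans (Icc_subset_Icc_right (Nat.sub_le n s))
      exact ⟨hS, hcard, (isSepCircle_iff hsn hS h1).2 ⟨hgap, hS'⟩, h1⟩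
  rw [hset, (bijOn_squeeze s 1 _ j).ncard_eq, ncard_subsets_Icc_of_mem_left (by omega),
    Nat.add_sub_cancel]

/-- Talbot: for `n ≥ sk+1`, the number of `s`-separated `k`-subsets of a circle of
`n` elements containing the fixed element `1` is `C(n - sk - 1, k - 1)`. -/
theorem stmt_3 (n s k : ℕ) (hs : 1 ≤ s) (hk : 1 ≤ k) (hn : s * k + 1 ≤ n) :
    {S : Finset ℕ | S ⊆ Finset.Icc 1 n ∧ S.card = k ∧ IsSepCircle n s S ∧ 1 ∈ S}.ncard =
      (n - s * k - 1).choose (k - 1) :=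
  stmt_3_general n s k hk hn
end

section
/- Let n ≥ sk+1. The number of s-separated k-subsets of a circle with n elements is (n/(n-sk)) * C(n-sk, k). -/
open Finset

def IsSepLine (s : ℕ) (S : Finset ℕ) : Prop := ∀ a ∈ S, ∀ b ∈ S, a < b → a + s < b

instance (s : ℕ) (S : Finset ℕ) : Decidable (IsSepLine s S) := by
  unfold IsSepLine; infer_instance

def sepSubsets (s k : ℕ) (I : Finset ℕ) : Finset (Finset ℕ) :=
  {S ∈ I.powersetCard k | IsSepLine s S}

lemma isSepLine_insert {s a : ℕ} {T : Finset ℕ} :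
    IsSepLine s (insert a T) ↔
      IsSepLine s T ∧ ∀ b ∈ T, b ≠ a → a + s < b ∨ b + s < a := by
  simp only [IsSepLine, forall_mem_insert]
  grind

lemma isSepLine_map_addRight {s m : ℕ} {S : Finset ℕ} :
    IsSepLine s (S.map (addRightEmbedding m)) ↔ IsSepLine s S := by
  simp [IsSepLine, add_right_comm _ m s]

lemma card_sepSubsets_map_addRight (s k m : ℕ) (I : Finset ℕ) :
    #(sepSubsets s k (I.map (addRightEmbedding m))) = #(sepSubsets s k I) := by
  rw [sepSubsets, powersetCard_map, filter_map, card_map]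
  simp only [Function.comp_def, RelEmbedding.coe_toEmbedding, mapEmbedding_apply,
    isSepLine_map_addRight]
  rfl

lemma card_filter_mem_eq_card_of_insert {α : Type*} [DecidableEq α]
    {F G : Finset (Finset α)} {a : α}
    (hG : ∀ T ∈ G, a ∉ T) (h : ∀ T, a ∉ T → (insert a T ∈ F ↔ T ∈ G)) :
    #{S ∈ F | a ∈ S} = #G := by
  refine card_nbij' (fun S => S.erase a) (insert a) ?_ ?_ ?_ ?_
  · intro S hS
    rw [mem_coe, mem_filter] at hS
    rw [mem_coe, ← h _ (notMem_erase a S), insert_erase hS.2]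
    exact hS.1
  · intro T hT
    rw [mem_coe, mem_filter]
    exact ⟨(h T (hG T hT)).2 hT, mem_insert_self a T⟩
  · intro S hS
    exact insert_erase (mem_filter.1 hS).2
  · intro T hT
    exact erase_insert (hG T hT)

lemma sepSubsets_zero (s : ℕ) (I : Finset ℕ) : sepSubsets s 0 I = {∅} := by
  simp [sepSubsets, powersetCard_zero, IsSepLine]

lemma card_sepSubsets_range_succ (s k L : ℕ) :
    #(sepSubsets s (k + 1) (range (L + 1))) =
      #(sepSubsets s (k + 1) (range L)) + #(sepSubsets s k (range (L - s))) := by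
  rw [← card_filter_add_card_filter_not (p := (L ∈ ·)), add_comm]
  congr 1
  · congr 1
    ext S
    simp only [sepSubsets, mem_filter, mem_powersetCard, range_add_one]
    constructor
    · rintro ⟨⟨⟨hS, hk⟩, hsep⟩, hL⟩
      exact ⟨⟨(subset_insert_iff_of_notMem hL).1 hS, hk⟩, hsep⟩
    · rintro ⟨⟨hS, hk⟩, hsep⟩
      exact ⟨⟨⟨hS.trans (subset_insert _ _), hk⟩, hsep⟩, fun h => by simpa using hS h⟩
  · refine card_filter_mem_eq_card_of_insert (fun T hT hL => ?_) (fun T hL => ?_)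
    · simp only [sepSubsets, mem_filter, mem_powersetCard] at hT
      have := mem_range.1 (hT.1.1 hL)
      omega
    · simp only [sepSubsets, mem_filter, mem_powersetCard, card_insert_of_notMem hL,
        isSepLine_insert, subset_iff, mem_range]
      constructor
      · rintro ⟨⟨hT, hk⟩, hsep, hfar⟩
        refine ⟨⟨fun b hb => ?_, by omega⟩, hsep⟩
        have := hT (mem_insert_of_mem hb)
        have := hfar b hb (by rintro rfl; exact hL hb)
        omega
      · rintro ⟨⟨hT, hk⟩, hsep⟩
        refine ⟨⟨fun b hb => ?_, by omega⟩, hsep, fun b hb _ => ?_⟩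
        · rcases mem_insert.1 hb with rfl | hb
          · omega
          · have := hT hb
            omega
        · have := hT hb
          omega

lemma card_sepSubsets_range (s k L : ℕ) :
    #(sepSubsets s k (range L)) = (L - s * (k - 1)).choose k := by
  induction L using Nat.strong_induction_on generalizing k with
  | _ L ih =>
  rcases k with _ | k
  · simp [sepSubsets_zero]
  rcases L with _ | L
  · simp [sepSubsets]
  rw [card_sepSubsets_range_succ, ih L (by omega), ih (L - s) (by omega)]
  rcases k with _ | k
  · simp
  simp only [Nat.add_sub_cancel]
  rw [show L - s - s * k = L - s * (k + 1) by rw [Nat.mul_succ]; omega]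
  rcases Nat.lt_or_ge L (s * (k + 1)) with hL | hL
  · simp [show L - s * (k + 1) = 0 by omega, show L + 1 - s * (k + 1) = 0 by omega]
  · rw [show L + 1 - s * (k + 1) = L - s * (k + 1) + 1 by omega, Nat.choose_succ_succ', add_comm]

lemma card_sepSubsets_Ico (s k a b : ℕ) :
    #(sepSubsets s k (Ico a b)) = (b - a - s * (k - 1)).choose k := by
  have : Ico a b = (range (b - a)).map (addRightEmbedding a) := by
    rw [range_eq_Ico, map_add_right_Ico, zero_add]
    rcases le_or_gt a b with h | h
    · rw [Nat.sub_add_cancel h]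
    · rw [Ico_eq_empty_of_le h.le, Nat.sub_eq_zero_of_le h.le, zero_add, Ico_self]
  rw [this, card_sepSubsets_map_addRight, card_sepSubsets_range]

instance (n s : ℕ) (S : Finset ℕ) : Decidable (IsSepCircle n s S) := by
  unfold IsSepCircle; infer_instance

def sepCircleSubsets (n s k : ℕ) : Finset (Finset ℕ) :=
  {S ∈ (Icc 1 n).powersetCard k | IsSepCircle n s S}

/-- The second conjunct is the separation along the arc from `b` back around to `a`. -/
lemma isSepCircle_iff_s4 {n s : ℕ} {S : Finset ℕ} :
    IsSepCircle n s S ↔ ∀ a ∈ S, ∀ b ∈ S, a < b → a + s < b ∧ b + s < n + a := by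
  unfold IsSepCircle circDist
  constructor
  · intro h a ha b hb hab
    have := h a ha b hb hab.ne
    omega
  · intro h a ha b hb hab
    rcases hab.lt_or_gt with hab | hab
    · have := h a ha b hb hab
      omega
    · have := h b hb a ha hab
      omega

lemma isSepCircle_iff_isSepLine_of_subset_Ico {n s lo hi : ℕ} {S : Finset ℕ}
    (hS : S ⊆ Ico lo hi) (hwidth : hi + s ≤ n + lo) : IsSepCircle n s S ↔ IsSepLine s S := by
  rw [isSepCircle_iff_s4]
  refine forall₅_congr fun a ha b hb hab => and_iff_left ?_
  have := mem_Ico.1 (hS ha)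
  have := mem_Ico.1 (hS hb)
  omega

lemma card_filter_disjoint_sepCircleSubsets (n s k : ℕ) :
    #{S ∈ sepCircleSubsets n s k | Disjoint (Icc 1 s) S} = (n - s * k).choose k := by
  have hsub {S : Finset ℕ} :
      S ⊆ Icc 1 n ∧ Disjoint (Icc 1 s) S ↔ S ⊆ Ico (s + 1) (n + 1) := by
    simp only [subset_iff, disjoint_right, mem_Icc, mem_Ico, ← forall_and]
    exact forall₂_congr fun x _ => by omega
  have hfilter : {S ∈ sepCircleSubsets n s k | Disjoint (Icc 1 s) S} =
      sepSubsets s k (Ico (s + 1) (n + 1)) := by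
    ext S
    simp only [sepCircleSubsets, sepSubsets, mem_filter, mem_powersetCard]
    constructor
    · rintro ⟨⟨⟨hS, hk⟩, hsep⟩, hdisj⟩
      have hS' := hsub.1 ⟨hS, hdisj⟩
      exact ⟨⟨hS', hk⟩, (isSepCircle_iff_isSepLine_of_subset_Ico hS' (by omega)).1 hsep⟩
    · rintro ⟨⟨hS', hk⟩, hsep⟩
      obtain ⟨hS, hdisj⟩ := hsub.2 hS'
      exact ⟨⟨⟨hS, hk⟩, (isSepCircle_iff_isSepLine_of_subset_Ico hS' (by omega)).2 hsep⟩,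
        hdisj⟩
  rw [hfilter, card_sepSubsets_Ico]
  rcases k with _ | k
  · simp
  · rw [Nat.add_sub_cancel, Nat.mul_succ]
    congr 1
    omega

lemma insert_mem_sepCircleSubsets_iff {n s j a : ℕ} {T : Finset ℕ} (ha : a ∈ Icc 1 s)
    (hsn : s < n) (haT : a ∉ T) :
    insert a T ∈ sepCircleSubsets n s (j + 1) ↔
      T ∈ sepSubsets s j (Ico (a + s + 1) (n + a - s)) := by
  have hTa : ∀ b ∈ T, b ≠ a := fun b hb h => haT (h ▸ hb)
  rw [mem_Icc] at ha
  simp only [sepCircleSubsets, sepSubsets, mem_filter, mem_powersetCard, card_insert_of_notMem haT,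
    insert_subset_iff, add_left_inj]
  constructor
  · rintro ⟨⟨⟨-, -⟩, rfl⟩, hsep⟩
    rw [isSepCircle_iff_s4] at hsep
    have hfar : ∀ b ∈ T, a + s < b ∧ b + s < n + a := fun b hb => by
      rcases (hTa b hb).lt_or_gt with hlt | hgt
      · have := hsep b (mem_insert_of_mem hb) a (mem_insert_self a T) hlt
        omega
      · exact hsep a (mem_insert_self a T) b (mem_insert_of_mem hb) hgt
    refine ⟨⟨fun b hb => ?_, rfl⟩, fun b hb c hc hbc =>
      (hsep b (mem_insert_of_mem hb) c (mem_insert_of_mem hc) hbc).1⟩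
    have := hfar b hb
    rw [mem_Ico]
    omega
  · rintro ⟨⟨hT, rfl⟩, hsep⟩
    have hT' : ∀ b ∈ T, a + s < b ∧ b < n + a - s := fun b hb => by
      have := mem_Ico.1 (hT hb)
      omega
    have hwindow : insert a T ⊆ Ico a (n + a - s) := by
      intro b hb
      rw [mem_Ico]
      rcases mem_insert.1 hb with rfl | hb
      · omega
      · have := hT' b hb
        omega
    refine ⟨⟨⟨by rw [mem_Icc]; omega, fun b hb => ?_⟩, rfl⟩, ?_⟩
    · have := hT' b hb
      rw [mem_Icc]
      omega
    · rw [isSepCircle_iff_isSepLine_of_subset_Ico hwindow (by omega), isSepLine_insert]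
      exact ⟨hsep, fun b hb _ => Or.inl (hT' b hb).1⟩

lemma card_filter_mem_sepCircleSubsets {n s j a : ℕ} (ha : a ∈ Icc 1 s) (hn : s * (j + 1) < n) :
    #{S ∈ sepCircleSubsets n s (j + 1) | a ∈ S} = (n - s * (j + 1) - 1).choose j := by
  have hsn : s < n := lt_of_le_of_lt (Nat.le_mul_of_pos_right s j.succ_pos) hn
  have hG : ∀ T ∈ sepSubsets s j (Ico (a + s + 1) (n + a - s)), a ∉ T := fun T hT haT => by
    have := mem_Ico.1 ((mem_powersetCard.1 (mem_filter.1 hT).1).1 haT)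
    omega
  rw [card_filter_mem_eq_card_of_insert hG fun T haT => insert_mem_sepCircleSubsets_iff ha hsn haT,
    card_sepSubsets_Ico]
  rcases j with _ | j
  · simp
  · have := mem_Icc.1 ha
    have : s * (j + 1 + 1) = s * j + s + s := by ring
    rw [Nat.add_sub_cancel]
    congr 1
    omega

lemma card_sepCircleSubsets {n s j : ℕ} (hn : s * (j + 1) < n) :
    #(sepCircleSubsets n s (j + 1)) =
      (n - s * (j + 1)).choose (j + 1) + s * (n - s * (j + 1) - 1).choose j := by
  have hbiUnion : {S ∈ sepCircleSubsets n s (j + 1) | ¬Disjoint (Icc 1 s) S} =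
      (Icc 1 s).biUnion fun a => {S ∈ sepCircleSubsets n s (j + 1) | a ∈ S} := by
    ext S
    simp only [mem_filter, mem_biUnion, not_disjoint_iff]
    tauto
  have hdisj : (Icc 1 s : Set ℕ).PairwiseDisjoint
      fun a => {S ∈ sepCircleSubsets n s (j + 1) | a ∈ S} := by
    intro a ha b hb hab
    simp only [Function.onFun, disjoint_left, mem_filter, sepCircleSubsets, isSepCircle_iff_s4]
    rintro S ⟨⟨-, hsep⟩, haS⟩ ⟨-, hbS⟩
    have := mem_Icc.1 ha
    have := mem_Icc.1 hb
    rcases hab.lt_or_gt with hlt | hgt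
    · have := hsep a haS b hbS hlt
      omega
    · have := hsep b hbS a haS hgt
      omega
  rw [← card_filter_add_card_filter_not (p := fun S => Disjoint (Icc 1 s) S),
    card_filter_disjoint_sepCircleSubsets, hbiUnion, card_biUnion hdisj,
    sum_congr rfl fun a ha => card_filter_mem_sepCircleSubsets ha hn, sum_const, Nat.card_Icc,
    Nat.add_sub_cancel, smul_eq_mul]

theorem stmt_4_general (n s k : ℕ) (hk : 1 ≤ k) (hn : s * k + 1 ≤ n) :
    (({S : Finset ℕ | S ⊆ Finset.Icc 1 n ∧ S.card = k ∧ IsSepCircle n s S}.ncard : ℚ)) =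
      (n : ℚ) / ((n : ℚ) - (s : ℚ) * (k : ℚ)) * ((n - s * k).choose k : ℚ) := by
  obtain ⟨j, rfl⟩ := Nat.exists_eq_add_of_le' hk
  obtain ⟨m, hm⟩ : ∃ m, n - s * (j + 1) = m + 1 := ⟨n - s * (j + 1) - 1, by omega⟩
  have hset : {S : Finset ℕ | S ⊆ Icc 1 n ∧ S.card = j + 1 ∧ IsSepCircle n s S} =
      ↑(sepCircleSubsets n s (j + 1)) := by
    ext S
    simp [sepCircleSubsets, mem_powersetCard, and_assoc]
  have hdenom : (n : ℚ) - s * (j + 1 : ℕ) = (m + 1 : ℕ) := by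
    rw [← hm, Nat.cast_sub (by omega), Nat.cast_mul]
  have hcount : (#(sepCircleSubsets n s (j + 1)) * (m + 1) : ℕ) = n * (m + 1).choose (j + 1) := by
    rw [card_sepCircleSubsets (by omega), hm, Nat.add_sub_cancel, add_mul, mul_assoc,
      mul_comm (m.choose j), Nat.add_one_mul_choose_eq, show n = m + 1 + s * (j + 1) by omega]
    ring
  rw [hset, Set.ncard_coe_finset, hdenom, hm, div_mul_eq_mul_div, eq_div_iff (by positivity)]
  exact_mod_cast hcount

/-- Mansour–Sun: for `n ≥ sk+1`, the number of `s`-separated `k`-subsets of a circle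
of `n` elements is `(n/(n-sk)) * C(n-sk, k)`. -/
theorem stmt_4 (n s k : ℕ) (hs : 1 ≤ s) (hk : 1 ≤ k) (hn : s * k + 1 ≤ n) :
    (({S : Finset ℕ | S ⊆ Finset.Icc 1 n ∧ S.card = k ∧ IsSepCircle n s S}.ncard : ℚ)) =
      (n : ℚ) / ((n : ℚ) - (s : ℚ) * (k : ℚ)) * ((n - s * k).choose k : ℚ) :=
  stmt_4_general n s k hk hn
end

section
/- Let p ≥ 1, n1 ≥ sk+1 and ni ≥ sk for i = 2,...,p, and let N = n1 + ... + np. The number of s-separated k-subsets of the disjoint union of p circles of sizes n1,...,np that contain the fixed element (1,1) equals C(N - sk - 1, k - 1). -/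
/-- The disjoint union of `p` circles, the `i`-th with elements `{1,...,n i}×{i}`. -/
def multiCircles (p : ℕ) (n : ℕ → ℕ) : Finset (ℕ × ℕ) :=
  (Finset.Icc 1 p).biUnion fun i => (Finset.Icc 1 (n i)) ×ˢ ({i} : Finset ℕ)

/-- A subset of the circles is `s`-separated if no two of its elements lie in the same
circle (the `i`-th circle having `n i` elements) at circular distance at most `s`. -/
def IsSepMulti (n : ℕ → ℕ) (s : ℕ) (A : Finset (ℕ × ℕ)) : Prop :=
  ∀ x ∈ A, ∀ y ∈ A, x ≠ y → x.2 = y.2 → s + 1 ≤ circDist (n x.2) x.1 y.1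

/-!
Cutting a circle at a chosen point turns cyclic separation into linear separation on an
interval, and the `s`-separated `b`-subsets of an interval of length `L` number
`C(L - s(b - 1), b)`. Hence a circle of size `m` has `C(m - s(a + 1) - 1, a)` separated
`(a + 1)`-subsets through a fixed point, and `C(m - sb, b) + s C(m - sb - 1, b - 1)` separated
`b`-subsets in all (such a subset either avoids `1, …, s` or contains exactly one of them).

Splitting off the last circle gives `count_{p+1}(k) = ∑_b cyc(n_{p+1}, b) count_p(k - b)`. Both
counts extend to polynomials in the circle size via `Ring.choose` over `ℤ`, and the convolution
`∑_b cyc(N, b) pointed(m, c - b) = pointed(m + N, c)` holds identically: by induction on `c`,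
both sides have the same first difference in `N` (Pascal's rule), and they agree at `N = 0`,
where `cyc(0, b) = 0` for `b > 0`. The size hypotheses make the polynomial values the true counts.
-/

open Finset
open scoped Classical

namespace Separated

lemma circDist_comm (m x y : ℕ) : circDist m x y = circDist m y x := by
  unfold circDist
  rw [max_comm, min_comm x y]

lemma le_circDist_iff {m s x y : ℕ} (h : x < y) :
    s + 1 ≤ circDist m x y ↔ x + s < y ∧ y + s < m + x := by
  rw [circDist, max_eq_right h.le, min_eq_left h.le]
  omega

def IsLinSep (s : ℕ) (T : Finset ℕ) : Prop := ∀ x ∈ T, ∀ y ∈ T, x < y → x + s < y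

def IsCycSep (s m : ℕ) (Y : Finset ℕ) : Prop :=
  ∀ x ∈ Y, ∀ y ∈ Y, x ≠ y → s + 1 ≤ circDist m x y

lemma isCycSep_iff {s m : ℕ} {Y : Finset ℕ} :
    IsCycSep s m Y ↔ ∀ x ∈ Y, ∀ y ∈ Y, x < y → x + s < y ∧ y + s < m + x := by
  refine ⟨fun h x hx y hy hxy => (le_circDist_iff hxy).1 (h x hx y hy hxy.ne),
    fun h x hx y hy hxy => ?_⟩
  rcases hxy.lt_or_gt with hxy | hxy
  · exact (le_circDist_iff hxy).2 (h x hx y hy hxy)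
  · rw [circDist_comm]
    exact (le_circDist_iff hxy).2 (h y hy x hx hxy)

lemma IsCycSep.eq_of_le_of_le {s m y z : ℕ} {Y : Finset ℕ} (h : IsCycSep s m Y) (hy : y ∈ Y)
    (hz : z ∈ Y) (hys : y ≤ s) (hzs : z ≤ s) : y = z := by
  by_contra hyz
  rcases Nat.lt_or_gt_of_ne hyz with hlt | hlt
  · have := (isCycSep_iff.1 h y hy z hz hlt).1
    omega
  · have := (isCycSep_iff.1 h z hz y hy hlt).1
    omega

noncomputable def linSepSets (s a L b : ℕ) : Finset (Finset ℕ) :=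
  {T ∈ powersetCard b (Ioc a (a + L)) | IsLinSep s T}

noncomputable def cycSepSets (s m b : ℕ) : Finset (Finset ℕ) :=
  {Y ∈ powersetCard b (Icc 1 m) | IsCycSep s m Y}

section Counting

variable {s : ℕ}

lemma mem_linSepSets {a L b : ℕ} {T : Finset ℕ} :
    T ∈ linSepSets s a L b ↔ T ⊆ Ioc a (a + L) ∧ #T = b ∧ IsLinSep s T := by
  rw [linSepSets, mem_filter, mem_powersetCard, and_assoc]

lemma mem_cycSepSets {m b : ℕ} {Y : Finset ℕ} :
    Y ∈ cycSepSets s m b ↔ Y ⊆ Icc 1 m ∧ #Y = b ∧ IsCycSep s m Y := by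
  rw [cycSepSets, mem_filter, mem_powersetCard, and_assoc]

lemma linSepSets_zero_right (a L : ℕ) : linSepSets s a L 0 = {∅} := by
  ext T
  simp only [mem_linSepSets, card_eq_zero, mem_singleton]
  constructor
  · exact fun h => h.2.1
  · rintro rfl
    simp [IsLinSep]

lemma linSepSets_zero_succ (a b : ℕ) : linSepSets s a 0 (b + 1) = ∅ := by
  ext T
  simp only [mem_linSepSets, add_zero, Ioc_self, subset_empty, notMem_empty, iff_false]
  rintro ⟨rfl, h, -⟩
  simp at h

lemma filter_notMem_linSepSets (a L b : ℕ) :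
    {T ∈ linSepSets s a (L + 1) b | a + L + 1 ∉ T} = linSepSets s a L b := by
  ext T
  simp only [mem_filter, mem_linSepSets, subset_iff, mem_Ioc]
  constructor
  · rintro ⟨⟨hT, hc, hsep⟩, htop⟩
    refine ⟨fun x hx => ?_, hc, hsep⟩
    have := hT hx
    have : x ≠ a + L + 1 := fun h => htop (h ▸ hx)
    omega
  · rintro ⟨hT, hc, hsep⟩
    refine ⟨⟨fun x hx => ?_, hc, hsep⟩, fun h => ?_⟩
    · have := hT hx
      omega
    · have := hT h
      omega

/-- Once the top point `a + L + 1` is chosen, the other points lie in `(a, a + L - s]`. -/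
lemma card_filter_mem_linSepSets (a L b : ℕ) :
    #{T ∈ linSepSets s a (L + 1) (b + 1) | a + L + 1 ∈ T} = #(linSepSets s a (L - s) b) := by
  set top := a + L + 1
  refine card_nbij' (·.erase top) (insert top) ?_ ?_ ?_ ?_
  · intro T hT
    simp only [coe_filter, Set.mem_ofPred_eq, mem_coe, mem_linSepSets, subset_iff,
      mem_Ioc] at hT ⊢
    obtain ⟨⟨hT, hc, hsep⟩, htop⟩ := hT
    refine ⟨fun x hx => ?_, by rw [card_erase_of_mem htop, hc]; rfl,
      fun x hx y hy => hsep x (mem_of_mem_erase hx) y (mem_of_mem_erase hy)⟩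
    obtain ⟨hne, hx⟩ := mem_erase.1 hx
    have := hT hx
    have := hsep x hx top htop (by omega)
    omega
  · intro T hT
    simp only [coe_filter, Set.mem_ofPred_eq, mem_coe, mem_linSepSets, subset_iff,
      mem_Ioc] at hT ⊢
    obtain ⟨hT, hc, hsep⟩ := hT
    have htop : top ∉ T := fun h => by have := hT h; omega
    refine ⟨⟨fun x hx => ?_, by rw [card_insert_of_notMem htop, hc], ?_⟩,
      mem_insert_self _ _⟩
    · rcases mem_insert.1 hx with rfl | hx
      · omega
      · have := hT hx
        omega
    · intro x hx y hy hxy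
      rcases mem_insert.1 hx with rfl | hx' <;> rcases mem_insert.1 hy with rfl | hy'
      · omega
      · have := hT hy'
        omega
      · have := hT hx'
        omega
      · exact hsep x hx' y hy' hxy
  · intro T hT
    exact insert_erase (mem_filter.1 hT).2
  · intro T hT
    refine erase_insert fun h => ?_
    have := (mem_linSepSets.1 hT).1 h
    simp only [mem_Ioc] at this
    omega

lemma card_linSepSets_succ_succ (a L b : ℕ) :
    #(linSepSets s a (L + 1) (b + 1)) =
      #(linSepSets s a L (b + 1)) + #(linSepSets s a (L - s) b) := by
  rw [← card_filter_add_card_filter_not (p := fun T => a + L + 1 ∈ T), add_comm,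
    filter_notMem_linSepSets, card_filter_mem_linSepSets]

lemma card_linSepSets (a L b : ℕ) : #(linSepSets s a L b) = (L - s * (b - 1)).choose b := by
  induction b generalizing L with
  | zero => simp [linSepSets_zero_right]
  | succ b ihb =>
    induction L with
    | zero => simp [linSepSets_zero_succ]
    | succ L ihL =>
      rw [card_linSepSets_succ_succ, ihL, ihb]
      rcases b with _ | b
      · simp
      · simp only [Nat.add_sub_cancel]
        rcases le_or_gt (s * (b + 1)) L with h | h
        · rw [show L + 1 - s * (b + 1) = L - s * (b + 1) + 1 by omega, Nat.choose_succ_succ',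
            show L - s - s * b = L - s * (b + 1) by rw [Nat.mul_succ]; omega, add_comm]
        · rw [Nat.choose_eq_zero_of_lt (by omega : L + 1 - s * (b + 1) < b + 1 + 1),
            Nat.choose_eq_zero_of_lt (by omega : L - s * (b + 1) < b + 1 + 1),
            Nat.choose_eq_zero_of_lt (by rw [Nat.mul_succ] at h; omega : L - s - s * b < b + 1)]

/-- For `y ≤ s + 1` the other points of `Y` lie strictly between `y + s` and `y + m - s`. -/
lemma card_filter_mem_cycSepSets {m y : ℕ} (b : ℕ) (hy : y ∈ Icc 1 (s + 1)) (hym : y ≤ m) :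
    #{Y ∈ cycSepSets s m (b + 1) | y ∈ Y} = (m - s * (b + 1) - 1).choose b := by
  rw [mem_Icc] at hy
  have hbij : #{Y ∈ cycSepSets s m (b + 1) | y ∈ Y} =
      #(linSepSets s (y + s) (m - (2 * s + 1)) b) := by
    refine card_nbij' (·.erase y) (insert y) ?_ ?_ ?_ ?_
    · intro Y hY
      simp only [coe_filter, Set.mem_ofPred_eq, mem_coe, mem_cycSepSets, mem_linSepSets,
        subset_iff, mem_Icc, mem_Ioc, isCycSep_iff] at hY ⊢
      obtain ⟨⟨hY, hc, hsep⟩, hyY⟩ := hY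
      refine ⟨fun x hx => ?_, by rw [card_erase_of_mem hyY, hc]; rfl,
        fun x hx z hz hxz => (hsep x (mem_of_mem_erase hx) z (mem_of_mem_erase hz) hxz).1⟩
      obtain ⟨hne, hx⟩ := mem_erase.1 hx
      have := hY hx
      rcases Nat.lt_or_gt_of_ne hne with hxy | hxy
      · have := hsep x hx y hyY hxy
        omega
      · have := hsep y hyY x hx hxy
        omega
    · intro T hT
      simp only [coe_filter, Set.mem_ofPred_eq, mem_coe, mem_cycSepSets, mem_linSepSets,
        subset_iff, mem_Icc, mem_Ioc, isCycSep_iff] at hT ⊢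
      obtain ⟨hT, hc, hsep⟩ := hT
      have hyT : y ∉ T := fun h => by have := hT h; omega
      refine ⟨⟨fun x hx => ?_, by rw [card_insert_of_notMem hyT, hc], ?_⟩,
        mem_insert_self _ _⟩
      · rcases mem_insert.1 hx with rfl | hx
        · omega
        · have := hT hx
          omega
      · intro x hx z hz hxz
        rcases mem_insert.1 hx with rfl | hx' <;> rcases mem_insert.1 hz with rfl | hz'
        · omega
        · have := hT hz'
          omega
        · have := hT hx'
          omega
        · have := hT hx'
          have := hT hz'
          have := hsep x hx' z hz' hxz
          omega
    · intro Y hY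
      exact insert_erase (mem_filter.1 hY).2
    · intro T hT
      refine erase_insert fun h => ?_
      have := (mem_linSepSets.1 hT).1 h
      simp only [mem_Ioc] at this
      omega
  rw [hbij, card_linSepSets]
  rcases b with _ | b
  · simp
  · have : s * (b + 1 + 1) = 2 * s + s * b := by ring
    simp only [Nat.add_sub_cancel]
    congr 1
    omega

lemma filter_cycSepSets_forall_lt {m : ℕ} (b : ℕ) (hsm : s ≤ m) :
    {Y ∈ cycSepSets s m b | ∀ y ∈ Y, s < y} = linSepSets s s (m - s) b := by
  ext Y
  simp only [mem_filter, mem_cycSepSets, mem_linSepSets, isCycSep_iff, IsLinSep, subset_iff,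
    mem_Icc, mem_Ioc, Nat.add_sub_cancel' hsm]
  constructor
  · rintro ⟨⟨hY, hc, hsep⟩, hlt⟩
    exact ⟨fun x hx => ⟨hlt x hx, (hY hx).2⟩, hc,
      fun x hx z hz hxz => (hsep x hx z hz hxz).1⟩
  · rintro ⟨hY, hc, hsep⟩
    refine ⟨⟨fun x hx => ⟨by have := hY hx; omega, (hY hx).2⟩, hc,
      fun x hx z hz hxz => ?_⟩, fun x hx => (hY hx).1⟩
    have := hY hx
    have := hY hz
    exact ⟨hsep x hx z hz hxz, by omega⟩

lemma card_cycSepSets_succ {m : ℕ} (b : ℕ) (hsm : s ≤ m) :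
    #(cycSepSets s m (b + 1)) =
      (m - s * (b + 1)).choose (b + 1) + s * (m - s * (b + 1) - 1).choose b := by
  have hsplit : {Y ∈ cycSepSets s m (b + 1) | ¬∀ y ∈ Y, s < y} =
      (Icc 1 s).biUnion fun y => {Y ∈ cycSepSets s m (b + 1) | y ∈ Y} := by
    ext Y
    simp only [mem_filter, mem_biUnion, mem_Icc, not_forall, not_lt, exists_prop]
    constructor
    · rintro ⟨hY, y, hyY, hys⟩
      exact ⟨y, ⟨(mem_Icc.1 ((mem_cycSepSets.1 hY).1 hyY)).1, hys⟩, hY, hyY⟩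
    · rintro ⟨y, hy, hY, hyY⟩
      exact ⟨hY, y, hyY, hy.2⟩
  have hdisj : (Icc 1 s : Set ℕ).PairwiseDisjoint
      fun y => {Y ∈ cycSepSets s m (b + 1) | y ∈ Y} := by
    intro y hy z hz hyz
    refine disjoint_filter.2 fun Y hY hyY hzY => hyz ?_
    simp only [coe_Icc, Set.mem_Icc] at hy hz
    exact (mem_cycSepSets.1 hY).2.2.eq_of_le_of_le hyY hzY hy.2 hz.2
  rw [← card_filter_add_card_filter_not (p := fun Y => ∀ y ∈ Y, s < y),
    filter_cycSepSets_forall_lt _ hsm, card_linSepSets, hsplit, card_biUnion hdisj,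
    sum_congr rfl fun y hy => card_filter_mem_cycSepSets b (Icc_subset_Icc_right (by omega) hy)
      (by rw [mem_Icc] at hy; omega), sum_const, Nat.card_Icc, smul_eq_mul, Nat.add_sub_cancel]
  congr 2
  rw [Nat.mul_succ]
  omega

end Counting

/-- The number of `s`-separated `(a + 1)`-subsets through a fixed point of a circle of size `x`,
extended to a polynomial in `x`. -/
def pointedCount (s : ℕ) (x : ℤ) (a : ℕ) : ℤ := Ring.choose (x - s * (a + 1) - 1) a

/-- The number of `s`-separated `b`-subsets of a circle of size `y`, extended to a polynomial
in `y`. -/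
def cycleCount (s : ℕ) (y : ℤ) : ℕ → ℤ
  | 0 => 1
  | b + 1 => Ring.choose (y - s * (b + 1)) (b + 1) + s * Ring.choose (y - s * (b + 1) - 1) b

section Polynomial

variable (s : ℕ)

@[simp] lemma cycleCount_zero_right (y : ℤ) : cycleCount s y 0 = 1 := rfl

lemma pointedCount_zero_right (x : ℤ) : pointedCount s x 0 = 1 := Ring.choose_zero_right _

lemma pointedCount_add_one_sub (x : ℤ) (a : ℕ) :
    pointedCount s (x + 1) (a + 1) - pointedCount s x (a + 1) = pointedCount s (x - s) a := by
  have h := Ring.choose_succ_succ (x - s * (a + 2) - 1) a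
  simp only [pointedCount]
  push_cast
  rw [show x + 1 - s * (a + 1 + 1) - 1 = x - s * (a + 2) - 1 + 1 by ring,
    show x - s - s * (a + 1) - 1 = x - s * (a + 2) - 1 by ring,
    show x - s * (a + 1 + 1) - 1 = x - s * (a + 2) - 1 by ring, h]
  ring

lemma cycleCount_add_one_sub (y : ℤ) (b : ℕ) :
    cycleCount s (y + 1) (b + 1) - cycleCount s y (b + 1) = cycleCount s (y - s) b := by
  cases b with
  | zero => simp [cycleCount]
  | succ b =>
    have h₁ := Ring.choose_succ_succ (y - s * (b + 2)) (b + 1)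
    have h₂ := Ring.choose_succ_succ (y - s * (b + 2) - 1) b
    simp only [cycleCount]
    push_cast
    ring_nf at h₁ h₂ ⊢
    linear_combination h₁ + s * h₂

/-- Absorption `(b + 1) C(r, b + 1) = r C(r - 1, b)` at `r = -s(b + 1)` cancels the two terms. -/
lemma cycleCount_zero_left (b : ℕ) : cycleCount s 0 (b + 1) = 0 := by
  have h := Ring.choose_smul_choose (-(s * (b + 1) : ℤ)) (Nat.le_add_left 1 b)
  simp only [Nat.choose_one_right, Ring.choose_one_right, Nat.cast_one, Nat.add_sub_cancel,
    nsmul_eq_mul] at h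
  have hb : ((b : ℤ) + 1) ≠ 0 := by positivity
  apply mul_left_cancel₀ hb
  simp only [cycleCount, zero_sub]
  push_cast at h ⊢
  rw [mul_add, h]
  ring

theorem sum_antidiagonal_cycleCount_mul_pointedCount (c : ℕ) :
    ∀ m N : ℤ, ∑ q ∈ antidiagonal c, cycleCount s N q.1 * pointedCount s m q.2 =
      pointedCount s (m + N) c := by
  induction c with
  | zero => simp [pointedCount_zero_right]
  | succ c ih =>
    intro m N
    suffices hper : Function.Periodic (fun N : ℤ => ∑ q ∈ antidiagonal (c + 1),
        cycleCount s N q.1 * pointedCount s m q.2 - pointedCount s (m + N) (c + 1)) 1 by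
      have h := hper.int_mul_eq N
      simp only [Int.cast_id, mul_one] at h
      rw [← sub_eq_zero, h, Nat.sum_antidiagonal_succ, sum_eq_zero fun q _ => by
        rw [cycleCount_zero_left, zero_mul]]
      simp
    intro N
    have hΔ : ∑ q ∈ antidiagonal (c + 1), cycleCount s (N + 1) q.1 * pointedCount s m q.2 -
        ∑ q ∈ antidiagonal (c + 1), cycleCount s N q.1 * pointedCount s m q.2 =
        pointedCount s (m + N - s) c := by
      rw [← sum_sub_distrib, Nat.sum_antidiagonal_succ,
        show m + N - s = m + (N - s) by ring, ← ih]
      simp only [cycleCount_zero_right, sub_self, zero_add]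
      refine sum_congr rfl fun q _ => ?_
      rw [← sub_mul, cycleCount_add_one_sub]
    have hH := pointedCount_add_one_sub s (m + N) c
    simp only
    rw [show m + (N + 1) = m + N + 1 by ring]
    linear_combination hΔ - hH

end Polynomial

lemma pointedCount_natCast {s x a : ℕ} (h : s * (a + 1) + 1 ≤ x) :
    pointedCount s x a = ((x - s * (a + 1) - 1).choose a : ℕ) := by
  rw [pointedCount, ← Ring.choose_natCast, Nat.cast_sub (by omega), Nat.cast_sub (by omega)]
  push_cast
  rfl

lemma card_cycSepSets_eq_cycleCount {s m b : ℕ} (h : s * b < m) :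
    (#(cycSepSets s m b) : ℤ) = cycleCount s m b := by
  rcases b with _ | b
  · rw [cycSepSets, powersetCard_zero, filter_true_of_mem (by simp [IsCycSep])]
    rfl
  · have h₁ : 1 ≤ m - s * (b + 1) := by omega
    rw [card_cycSepSets_succ b (by nlinarith), cycleCount, Nat.cast_add, Nat.cast_mul,
      ← Ring.choose_natCast, ← Ring.choose_natCast]
    push_cast [Nat.cast_sub h₁, Nat.cast_sub h.le]
    rfl

section MultiCircles

variable {s : ℕ} {n : ℕ → ℕ}

lemma mem_multiCircles {p : ℕ} {x : ℕ × ℕ} :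
    x ∈ multiCircles p n ↔ 1 ≤ x.2 ∧ x.2 ≤ p ∧ 1 ≤ x.1 ∧ x.1 ≤ n x.2 := by
  simp only [multiCircles, mem_biUnion, mem_product, mem_Icc, mem_singleton]
  constructor
  · rintro ⟨i, hi, hx, rfl⟩
    exact ⟨hi.1, hi.2, hx⟩
  · rintro ⟨h₁, h₂, hx⟩
    exact ⟨x.2, ⟨h₁, h₂⟩, hx, rfl⟩

def onCircle (A : Finset (ℕ × ℕ)) (i : ℕ) : Finset ℕ := {x ∈ A | x.2 = i}.image Prod.fst

@[simp] lemma mem_onCircle {A : Finset (ℕ × ℕ)} {i a : ℕ} :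
    a ∈ onCircle A i ↔ (a, i) ∈ A := by
  simp [onCircle]

lemma filter_snd_eq_onCircle_product (A : Finset (ℕ × ℕ)) (i : ℕ) :
    {x ∈ A | x.2 = i} = onCircle A i ×ˢ {i} := by
  ext ⟨a, j⟩
  simp only [mem_filter, mem_product, mem_onCircle, mem_singleton]
  constructor
  · rintro ⟨h, rfl⟩
    exact ⟨h, rfl⟩
  · rintro ⟨h, rfl⟩
    exact ⟨h, rfl⟩

lemma card_onCircle (A : Finset (ℕ × ℕ)) (i : ℕ) :
    #(onCircle A i) = #{x ∈ A | x.2 = i} := by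
  rw [filter_snd_eq_onCircle_product, card_product, card_singleton, mul_one]

lemma product_singleton_subset_multiCircles {p i : ℕ} {Y : Finset ℕ}
    (hY : Y ⊆ Icc 1 (n i)) (hi : i ∈ Icc 1 p) : Y ×ˢ {i} ⊆ multiCircles p n := by
  rintro ⟨a, j⟩ h
  obtain ⟨ha, rfl⟩ : a ∈ Y ∧ i = j := by simpa using h
  exact mem_multiCircles.2 ⟨(mem_Icc.1 hi).1, (mem_Icc.1 hi).2, mem_Icc.1 (hY ha)⟩

lemma onCircle_union_product_singleton {A : Finset (ℕ × ℕ)} {i : ℕ} (Y : Finset ℕ)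
    (hA : ∀ x ∈ A, x.2 ≠ i) : onCircle (A ∪ Y ×ˢ {i}) i = Y := by
  ext a
  simp only [mem_onCircle, mem_union, mem_product, mem_singleton, and_true, or_iff_right_iff_imp]
  exact fun h => absurd rfl (hA _ h)

lemma _root_.IsSepMulti.mono {A B : Finset (ℕ × ℕ)} (h : IsSepMulti n s B) (hAB : A ⊆ B) :
    IsSepMulti n s A :=
  fun x hx y hy => h x (hAB hx) y (hAB hy)

lemma isSepMulti_union_iff {A B : Finset (ℕ × ℕ)} (h : ∀ x ∈ A, ∀ y ∈ B, x.2 ≠ y.2) :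
    IsSepMulti n s (A ∪ B) ↔ IsSepMulti n s A ∧ IsSepMulti n s B := by
  refine ⟨fun hAB => ⟨hAB.mono subset_union_left, hAB.mono subset_union_right⟩,
    fun ⟨hA, hB⟩ x hx y hy => ?_⟩
  rcases mem_union.1 hx with hx | hx <;> rcases mem_union.1 hy with hy | hy
  · exact hA x hx y hy
  · exact fun _ hxy => absurd hxy (h x hx y hy)
  · exact fun _ hxy => absurd hxy.symm (h y hy x hx)
  · exact hB x hx y hy

lemma isSepMulti_product_singleton_iff {Y : Finset ℕ} {i : ℕ} :
    IsSepMulti n s (Y ×ˢ {i}) ↔ IsCycSep s (n i) Y := by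
  simp only [IsSepMulti, IsCycSep, mem_product, mem_singleton, and_imp, Prod.forall, ne_eq,
    Prod.mk.injEq]
  constructor
  · intro h x hx y hy hxy
    exact h x i hx rfl y i hy rfl (fun h => hxy h.1) rfl
  · rintro h x _ hx rfl y _ hy rfl hxy -
    exact h x hx y hy fun h => hxy ⟨h, rfl⟩

lemma _root_.IsSepMulti.isCycSep_onCircle {A : Finset (ℕ × ℕ)} (h : IsSepMulti n s A)
    (i : ℕ) : IsCycSep s (n i) (onCircle A i) :=
  isSepMulti_product_singleton_iff.1
    (filter_snd_eq_onCircle_product A i ▸ h.mono (filter_subset _ _))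

noncomputable def sepSets (s p : ℕ) (n : ℕ → ℕ) (k : ℕ) : Finset (Finset (ℕ × ℕ)) :=
  {A ∈ powersetCard k (multiCircles p n) | IsSepMulti n s A ∧ (1, 1) ∈ A}

lemma mem_sepSets {p k : ℕ} {A : Finset (ℕ × ℕ)} :
    A ∈ sepSets s p n k ↔
      A ⊆ multiCircles p n ∧ #A = k ∧ IsSepMulti n s A ∧ (1, 1) ∈ A := by
  rw [sepSets, mem_filter, mem_powersetCard, and_assoc]

lemma card_sepSets_one (k : ℕ) :
    #(sepSets s 1 n k) = #{Y ∈ cycSepSets s (n 1) k | 1 ∈ Y} := by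
  have hsnd : ∀ {A : Finset (ℕ × ℕ)}, A ⊆ multiCircles 1 n → ∀ x ∈ A, x.2 = 1 :=
    fun hA x hx => by
      have := mem_multiCircles.1 (hA hx)
      omega
  refine card_nbij' (onCircle · 1) (· ×ˢ {1}) ?_ ?_ ?_ ?_
  · intro A hA
    obtain ⟨hA, hc, hsep, h11⟩ := mem_sepSets.1 hA
    simp only [coe_filter, Set.mem_ofPred_eq, mem_cycSepSets, mem_onCircle]
    refine ⟨⟨fun a ha => ?_, ?_, hsep.isCycSep_onCircle 1⟩, h11⟩
    · have := mem_multiCircles.1 (hA (mem_onCircle.1 ha))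
      exact mem_Icc.2 ⟨this.2.2.1, this.2.2.2⟩
    · rw [card_onCircle, filter_true_of_mem (hsnd hA), hc]
  · intro Y hY
    simp only [coe_filter, Set.mem_ofPred_eq, mem_cycSepSets] at hY
    obtain ⟨⟨hY, hc, hsep⟩, h1⟩ := hY
    exact mem_sepSets.2 ⟨product_singleton_subset_multiCircles hY (left_mem_Icc.2 le_rfl),
      by rw [card_product, card_singleton, mul_one, hc], isSepMulti_product_singleton_iff.2 hsep,
      mem_product.2 ⟨h1, mem_singleton_self 1⟩⟩
  · intro A hA
    show onCircle A 1 ×ˢ {1} = A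
    rw [← filter_snd_eq_onCircle_product, filter_true_of_mem (hsnd (mem_sepSets.1 hA).1)]
  · intro Y _
    simpa using onCircle_union_product_singleton (A := ∅) Y (by simp)

lemma filter_snd_ne_mem_sepSets {p k : ℕ} (hp : 1 ≤ p) {A : Finset (ℕ × ℕ)}
    (hA : A ∈ sepSets s (p + 1) n k) :
    {x ∈ A | x.2 ≠ p + 1} ∈ sepSets s p n (k - #(onCircle A (p + 1))) := by
  obtain ⟨hA, hc, hsep, h11⟩ := mem_sepSets.1 hA
  have hcard := card_filter_add_card_filter_not (s := A) (p := fun x => x.2 = p + 1)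
  rw [← card_onCircle] at hcard
  refine mem_sepSets.2 ⟨fun x hx => ?_, by rw [← hc, ← hcard]; simp,
    hsep.mono (filter_subset _ _), mem_filter.2 ⟨h11, by omega⟩⟩
  obtain ⟨hx, hxp⟩ := mem_filter.1 hx
  have := mem_multiCircles.1 (hA hx)
  exact mem_multiCircles.2 (by omega)

lemma union_product_singleton_mem_sepSets {p j b : ℕ} {A : Finset (ℕ × ℕ)} {Y : Finset ℕ}
    (hA : A ∈ sepSets s p n j) (hY : Y ∈ cycSepSets s (n (p + 1)) b) :
    A ∪ Y ×ˢ {p + 1} ∈ sepSets s (p + 1) n (j + b) := by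
  obtain ⟨hA, hc, hsep, h11⟩ := mem_sepSets.1 hA
  obtain ⟨hY, hYc, hYsep⟩ := mem_cycSepSets.1 hY
  have hsnd : ∀ x ∈ A, x.2 ≠ p + 1 := fun x hx => by
    have := mem_multiCircles.1 (hA hx)
    omega
  have hp : 1 ≤ p := (mem_multiCircles.1 (hA h11)).2.1
  refine mem_sepSets.2 ⟨union_subset (fun x hx => ?_)
      (product_singleton_subset_multiCircles hY (right_mem_Icc.2 (by omega))), ?_, ?_,
    mem_union_left _ h11⟩
  · have := mem_multiCircles.1 (hA hx)
    exact mem_multiCircles.2 (by omega)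
  · rw [card_union_of_disjoint (disjoint_left.2 fun x hx hxY =>
      hsnd x hx (mem_singleton.1 (mem_product.1 hxY).2)), card_product, card_singleton, mul_one,
      hc, hYc]
  · refine (isSepMulti_union_iff fun x hx y hy => ?_).2
      ⟨hsep, isSepMulti_product_singleton_iff.2 hYsep⟩
    rw [mem_singleton.1 (mem_product.1 hy).2]
    exact hsnd x hx

lemma card_filter_onCircle_eq {p b k : ℕ} (hp : 1 ≤ p) {Y : Finset ℕ}
    (hY : Y ∈ cycSepSets s (n (p + 1)) b) :
    #{A ∈ sepSets s (p + 1) n k | onCircle A (p + 1) = Y} = #(sepSets s p n (k - b)) := by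
  have hsnd : ∀ {A : Finset (ℕ × ℕ)}, A ∈ sepSets s p n (k - b) →
      ∀ x ∈ A, x.2 ≠ p + 1 :=
    fun hA x hx => by
      have := mem_multiCircles.1 ((mem_sepSets.1 hA).1 hx)
      omega
  refine card_nbij' ({x ∈ · | x.2 ≠ p + 1}) (· ∪ Y ×ˢ {p + 1}) ?_ ?_ ?_ ?_
  · intro A hA
    obtain ⟨hA', rfl⟩ := mem_filter.1 hA
    rw [mem_coe, ← (mem_cycSepSets.1 hY).2.1]
    exact filter_snd_ne_mem_sepSets hp hA'
  · intro A hA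
    have hb : b < k := by
      have := card_pos.2 ⟨_, (mem_sepSets.1 hA).2.2.2⟩
      rw [(mem_sepSets.1 hA).2.1] at this
      omega
    refine mem_filter.2 ⟨?_, onCircle_union_product_singleton Y (hsnd hA)⟩
    simpa [Nat.sub_add_cancel hb.le] using union_product_singleton_mem_sepSets hA hY
  · intro A hA
    obtain ⟨-, rfl⟩ := mem_filter.1 hA
    show {x ∈ A | x.2 ≠ p + 1} ∪ onCircle A (p + 1) ×ˢ {p + 1} = A
    rw [← filter_snd_eq_onCircle_product, union_comm, filter_union_filter_not_eq]
  · intro A hA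
    show {x ∈ A ∪ Y ×ˢ {p + 1} | x.2 ≠ p + 1} = A
    rw [filter_union, filter_true_of_mem (hsnd hA), filter_false_of_mem fun x hx =>
      not_not.2 (mem_singleton.1 (mem_product.1 hx).2), union_empty]

lemma card_sepSets_succ {p : ℕ} (hp : 1 ≤ p) (k : ℕ) :
    #(sepSets s (p + 1) n k) =
      ∑ b ∈ range k, #(cycSepSets s (n (p + 1)) b) * #(sepSets s p n (k - b)) := by
  have hmaps : ∀ A ∈ sepSets s (p + 1) n k,
      onCircle A (p + 1) ∈ (range k).biUnion (cycSepSets s (n (p + 1))) := by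
    intro A hA
    obtain ⟨hA, hc, hsep, h11⟩ := mem_sepSets.1 hA
    have hlt : #(onCircle A (p + 1)) < k := by
      rw [card_onCircle, ← hc]
      exact card_lt_card (filter_ssubset.2 ⟨_, h11, by omega⟩)
    refine mem_biUnion.2 ⟨_, mem_range.2 hlt, mem_cycSepSets.2 ⟨fun a ha => ?_, rfl,
      hsep.isCycSep_onCircle _⟩⟩
    have := mem_multiCircles.1 (hA (mem_onCircle.1 ha))
    exact mem_Icc.2 ⟨this.2.2.1, this.2.2.2⟩
  have hdisj : (range k : Set ℕ).PairwiseDisjoint (cycSepSets s (n (p + 1))) :=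
    fun b _ b' _ hbb' => disjoint_left.2 fun Y hY hY' =>
      hbb' ((mem_cycSepSets.1 hY).2.1.symm.trans (mem_cycSepSets.1 hY').2.1)
  rw [card_eq_sum_card_fiberwise hmaps, sum_biUnion hdisj]
  refine sum_congr rfl fun b _ => ?_
  rw [sum_congr rfl fun Y hY => card_filter_onCircle_eq hp hY, sum_const, smul_eq_mul]

theorem card_sepSets (hs : 1 ≤ s) {p : ℕ} (hp : 1 ≤ p) (c : ℕ)
    (h1 : s * (c + 1) + 1 ≤ n 1) (hi : ∀ i, 2 ≤ i → i ≤ p → s * (c + 1) ≤ n i) :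
    (#(sepSets s p n (c + 1)) : ℤ) = pointedCount s ((∑ i ∈ Icc 1 p, n i : ℕ) : ℤ) c := by
  induction p, hp using Nat.le_induction generalizing c with
  | base =>
    rw [card_sepSets_one, card_filter_mem_cycSepSets c (left_mem_Icc.2 (by omega)) (by omega),
      Icc_self, sum_singleton, pointedCount_natCast h1]
  | succ p hp ih =>
    have hmono : ∀ b ≤ c, s * (c - b + 1) ≤ s * (c + 1) := fun b _ =>
      Nat.mul_le_mul_left s (by omega)
    rw [card_sepSets_succ hp, Nat.cast_sum, sum_Icc_succ_top (by omega), Nat.cast_add,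
      ← sum_antidiagonal_cycleCount_mul_pointedCount,
      Nat.sum_antidiagonal_eq_sum_range_succ (fun b a => cycleCount s _ b * pointedCount s _ a)]
    refine sum_congr rfl fun b hb => ?_
    have hb : b ≤ c := Nat.lt_succ_iff.1 (mem_range.1 hb)
    rw [Nat.cast_mul, card_cycSepSets_eq_cycleCount, show c + 1 - b = c - b + 1 by omega,
      ih (c - b) (by linarith [hmono b hb])
        fun i hi₂ hip => (hmono b hb).trans (hi i hi₂ (by omega))]
    calc s * b ≤ s * c := Nat.mul_le_mul_left s hb
      _ < s * (c + 1) := by nlinarith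
      _ ≤ n (p + 1) := hi _ (by omega) le_rfl

end MultiCircles

end Separated

/-- For `p ≥ 1`, `n 1 ≥ sk+1` and `n i ≥ sk` for `2 ≤ i ≤ p`, the number of
`s`-separated `k`-subsets of the disjoint union of `p` circles containing `(1,1)`
is `C(N - sk - 1, k - 1)` where `N = n 1 + ⋯ + n p`. -/
theorem stmt_7 (p s k : ℕ) (n : ℕ → ℕ) (hp : 1 ≤ p) (hs : 1 ≤ s) (hk : 1 ≤ k)
    (h1 : s * k + 1 ≤ n 1) (hi : ∀ i, 2 ≤ i → i ≤ p → s * k ≤ n i) :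
    {A : Finset (ℕ × ℕ) | A ⊆ multiCircles p n ∧ A.card = k ∧
        IsSepMulti n s A ∧ (1, 1) ∈ A}.ncard =
      ((∑ i ∈ Finset.Icc 1 p, n i) - s * k - 1).choose (k - 1) := by
  obtain ⟨c, rfl⟩ : ∃ c, k = c + 1 := ⟨k - 1, by omega⟩
  have hset : {A : Finset (ℕ × ℕ) | A ⊆ multiCircles p n ∧ A.card = c + 1 ∧
      IsSepMulti n s A ∧ (1, 1) ∈ A} = Separated.sepSets s p n (c + 1) := by
    ext A
    exact Separated.mem_sepSets.symm
  have hN : n 1 ≤ ∑ i ∈ Finset.Icc 1 p, n i :=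
    Finset.single_le_sum (fun i _ => Nat.zero_le (n i)) (Finset.left_mem_Icc.2 hp)
  have h := Separated.card_sepSets hs hp c h1 hi
  rw [Separated.pointedCount_natCast (by omega)] at h
  rw [hset, Set.ncard_coe_finset, Nat.add_sub_cancel]
  exact_mod_cast h
end

section
/- Let nj ≥ sk+1 and ni ≥ sk for all i, let (a,j) be any fixed element of the j-th circle, and N = n1+...+np. The number of s-separated k-subsets of p disjoint circles of sizes n1,...,np containing (a,j) equals C(N - sk - 1, k - 1). -/
open Finset Classical

noncomputable section AuxSep

/-- Board ground set: path of length `a` (tag 0), path of length `b` (tag 1),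
and circles `i ∈ I` (tag `i+2`, size `n i`). -/
def bd (a b : ℕ) (I : Finset ℕ) (n : ℕ → ℕ) : Finset (ℕ × ℕ) :=
  ((Finset.Icc 1 a) ×ˢ ({0} : Finset ℕ)) ∪ ((Finset.Icc 1 b) ×ˢ ({1} : Finset ℕ)) ∪
    I.biUnion (fun i => (Finset.Icc 1 (n i)) ×ˢ ({i + 2} : Finset ℕ))

lemma mem_bd {a b : ℕ} {I : Finset ℕ} {n : ℕ → ℕ} {x : ℕ × ℕ} :
    x ∈ bd a b I n ↔ (1 ≤ x.1 ∧ x.1 ≤ a ∧ x.2 = 0) ∨ (1 ≤ x.1 ∧ x.1 ≤ b ∧ x.2 = 1) ∨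
      (∃ i ∈ I, 1 ≤ x.1 ∧ x.1 ≤ n i ∧ x.2 = i + 2) := by
  obtain ⟨x1, x2⟩ := x
  simp [bd, Finset.mem_union, Finset.mem_biUnion, Finset.mem_product, and_comm, and_assoc,
    and_left_comm, eq_comm]

/-- Pairwise separation requirement on a board. -/
def sepPair (s : ℕ) (n : ℕ → ℕ) (x y : ℕ × ℕ) : Prop :=
  x.2 = y.2 →
    if x.2 ≤ 1 then s + 1 ≤ max x.1 y.1 - min x.1 y.1
    else s + 1 ≤ circDist (n (x.2 - 2)) x.1 y.1

/-- Separation on a board: linear separation on tags `0,1`, circular on circle tags. -/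
def SepB (s : ℕ) (n : ℕ → ℕ) (A : Finset (ℕ × ℕ)) : Prop :=
  ∀ x ∈ A, ∀ y ∈ A, x ≠ y → sepPair s n x y

lemma sepPair_symm {s : ℕ} {n : ℕ → ℕ} {x y : ℕ × ℕ} (h : sepPair s n x y) :
    sepPair s n y x := by
  obtain ⟨x1, x2⟩ := x; obtain ⟨y1, y2⟩ := y
  intro e
  simp only at e
  subst e
  have h2 := h rfl
  unfold circDist at h2 ⊢
  dsimp only at h2 ⊢
  split_ifs at h2 ⊢ <;> omega

lemma sep_lin {s : ℕ} {n : ℕ → ℕ} {x1 y1 t : ℕ} (h : sepPair s n (x1, t) (y1, t))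
    (ht : t ≤ 1) : s + 1 ≤ max x1 y1 - min x1 y1 := by
  have h2 := h rfl
  rwa [if_pos ht] at h2

lemma sep_circ {s : ℕ} {n : ℕ → ℕ} {x1 y1 t : ℕ} (h : sepPair s n (x1, t + 2) (y1, t + 2)) :
    s + 1 ≤ circDist (n t) x1 y1 := by
  have h2 := h rfl
  rw [if_neg (by omega)] at h2
  simpa using h2

lemma SepB_mono {s : ℕ} {n : ℕ → ℕ} {A B : Finset (ℕ × ℕ)} (h : A ⊆ B) (hB : SepB s n B) :
    SepB s n A := fun x hx y hy hxy => hB x (h hx) y (h hy) hxy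

/-- The collection of `s`-separated `r`-subsets of the board. -/
def CS (s : ℕ) (n : ℕ → ℕ) (a b : ℕ) (I : Finset ℕ) (r : ℕ) : Finset (Finset (ℕ × ℕ)) :=
  (bd a b I n).powerset.filter (fun A => A.card = r ∧ SepB s n A)

def cnt (s : ℕ) (n : ℕ → ℕ) (a b : ℕ) (I : Finset ℕ) (r : ℕ) : ℕ := (CS s n a b I r).card

lemma mem_CS {s : ℕ} {n : ℕ → ℕ} {a b : ℕ} {I : Finset ℕ} {r : ℕ} {A : Finset (ℕ × ℕ)} :
    A ∈ CS s n a b I r ↔ A ⊆ bd a b I n ∧ A.card = r ∧ SepB s n A := by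
  simp [CS, Finset.mem_filter, Finset.mem_powerset, and_assoc]

lemma cnt_zero (s : ℕ) (n : ℕ → ℕ) (a b : ℕ) (I : Finset ℕ) : cnt s n a b I 0 = 1 := by
  have : CS s n a b I 0 = {∅} := by
    ext A
    simp only [mem_CS, Finset.mem_singleton, Finset.card_eq_zero]
    constructor
    · rintro ⟨-, h, -⟩; exact h
    · rintro rfl
      exact ⟨Finset.empty_subset _, rfl, fun x hx => absurd hx (Finset.notMem_empty x)⟩
  rw [cnt, this, Finset.card_singleton]

/-- The bijection-counting principle in its older form. -/
lemma card_nbij'_compat {α β : Type*} {s : Finset α} {t : Finset β} (i : α → β) (j : β → α)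
    (hi : ∀ a ∈ s, i a ∈ t) (hj : ∀ a ∈ t, j a ∈ s)
    (left_inv : ∀ a ∈ s, j (i a) = a) (right_inv : ∀ a ∈ t, i (j a) = a) :
    s.card = t.card :=
  Finset.card_nbij' i j (fun a ha => hi a ha) (fun a ha => hj a ha)
    (fun a ha => left_inv a ha) (fun a ha => right_inv a ha)

/-- A generic relabelling bijection between two boards. -/
lemma cnt_relabel {s : ℕ} {n₁ n₂ : ℕ → ℕ} {a₁ b₁ a₂ b₂ : ℕ} {I₁ I₂ : Finset ℕ} {r : ℕ}
    (f g : ℕ × ℕ → ℕ × ℕ)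
    (hfg : ∀ x ∈ bd a₁ b₁ I₁ n₁, g (f x) = x) (hgf : ∀ x ∈ bd a₂ b₂ I₂ n₂, f (g x) = x)
    (hf : ∀ x ∈ bd a₁ b₁ I₁ n₁, f x ∈ bd a₂ b₂ I₂ n₂)
    (hg : ∀ x ∈ bd a₂ b₂ I₂ n₂, g x ∈ bd a₁ b₁ I₁ n₁)
    (hsep : ∀ x ∈ bd a₁ b₁ I₁ n₁, ∀ y ∈ bd a₁ b₁ I₁ n₁, x ≠ y →
      (sepPair s n₁ x y ↔ sepPair s n₂ (f x) (f y))) :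
    cnt s n₁ a₁ b₁ I₁ r = cnt s n₂ a₂ b₂ I₂ r := by
  have hinj : ∀ x ∈ bd a₁ b₁ I₁ n₁, ∀ y ∈ bd a₁ b₁ I₁ n₁, f x = f y → x = y := by
    intro x hx y hy h
    rw [← hfg x hx, ← hfg y hy, h]
  apply card_nbij'_compat (fun A => A.image f) (fun B => B.image g)
  · intro A hA
    rw [mem_CS] at hA ⊢
    obtain ⟨hsub, hcard, hsepA⟩ := hA
    refine ⟨?_, ?_, ?_⟩
    · intro x hx
      obtain ⟨y, hy, rfl⟩ := Finset.mem_image.1 hx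
      exact hf y (hsub hy)
    · rw [Finset.card_image_of_injOn fun x hx y hy => hinj x (hsub hx) y (hsub hy), hcard]
    · intro x hx y hy hxy
      obtain ⟨x', hx', rfl⟩ := Finset.mem_image.1 hx
      obtain ⟨y', hy', rfl⟩ := Finset.mem_image.1 hy
      have hne : x' ≠ y' := fun h => hxy (by rw [h])
      exact (hsep x' (hsub hx') y' (hsub hy') hne).1 (hsepA x' hx' y' hy' hne)
  · intro B hB
    rw [mem_CS] at hB ⊢
    obtain ⟨hsub, hcard, hsepB⟩ := hB
    have hginj : ∀ x ∈ B, ∀ y ∈ B, g x = g y → x = y := by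
      intro x hx y hy h
      rw [← hgf x (hsub hx), ← hgf y (hsub hy), h]
    refine ⟨?_, ?_, ?_⟩
    · intro x hx
      obtain ⟨y, hy, rfl⟩ := Finset.mem_image.1 hx
      exact hg y (hsub hy)
    · rw [Finset.card_image_of_injOn hginj, hcard]
    · intro x hx y hy hxy
      obtain ⟨x', hx', rfl⟩ := Finset.mem_image.1 hx
      obtain ⟨y', hy', rfl⟩ := Finset.mem_image.1 hy
      have hne : x' ≠ y' := fun h => hxy (by rw [h])
      have h1 := hsep (g x') (hg x' (hsub hx')) (g y') (hg y' (hsub hy'))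
        (fun h => hne (by rw [← hgf x' (hsub hx'), ← hgf y' (hsub hy'), h]))
      rw [hgf x' (hsub hx'), hgf y' (hsub hy')] at h1
      exact h1.2 (hsepB x' hx' y' hy' hne)
  · intro A hA
    rw [mem_CS] at hA
    rw [Finset.image_image]
    calc A.image (g ∘ f) = A.image id := Finset.image_congr fun x hx => hfg x (hA.1 hx)
    _ = A := Finset.image_id
  · intro B hB
    rw [mem_CS] at hB
    rw [Finset.image_image]
    calc B.image (f ∘ g) = B.image id := Finset.image_congr fun x hx => hgf x (hB.1 hx)
    _ = B := Finset.image_id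

lemma cnt_swap (s : ℕ) (n : ℕ → ℕ) (a b : ℕ) (I : Finset ℕ) (r : ℕ) :
    cnt s n a b I r = cnt s n b a I r := by
  have hswap : ∀ a' b' : ℕ, ∀ x, x ∈ bd a' b' I n →
      (fun x : ℕ × ℕ => (x.1, if x.2 = 0 then 1 else if x.2 = 1 then 0 else x.2)) x
        ∈ bd b' a' I n := by
    intro a' b' x hx
    rcases mem_bd.1 hx with h | h | ⟨i, hi, h⟩ <;> rw [mem_bd]
    · right; left; simp [h.2.2]; omega
    · left; simp [h.2.2]; omega
    · right; right; exact ⟨i, hi, by simp [h.2.2]; omega⟩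
  apply cnt_relabel (fun x => (x.1, if x.2 = 0 then 1 else if x.2 = 1 then 0 else x.2))
    (fun x => (x.1, if x.2 = 0 then 1 else if x.2 = 1 then 0 else x.2))
  · intro x _; obtain ⟨x1, x2⟩ := x; simp only []; split_ifs <;> simp_all
  · intro x _; obtain ⟨x1, x2⟩ := x; simp only []; split_ifs <;> simp_all
  · exact hswap a b
  · exact hswap b a
  · intro x _ y _ _
    obtain ⟨x1, x2⟩ := x; obtain ⟨y1, y2⟩ := y
    unfold sepPair
    simp only []
    constructor
    · intro h h2
      have : x2 = y2 := by split_ifs at h2 <;> omega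
      subst this
      have := h rfl
      split_ifs at this ⊢ <;> simp_all <;> omega
    · intro h h2
      subst h2
      have := h rfl
      split_ifs at this ⊢ <;> simp_all <;> omega

lemma bd_mono_a {a a' b : ℕ} {I : Finset ℕ} {n : ℕ → ℕ} (h : a ≤ a') :
    bd a b I n ⊆ bd a' b I n := by
  intro x hx
  rcases mem_bd.1 hx with h1 | h1 | h1 <;> rw [mem_bd]
  · left; omega
  · right; left; exact h1
  · right; right; exact h1

lemma cnt_rec_a (s : ℕ) (n : ℕ → ℕ) (a b : ℕ) (I : Finset ℕ) (r : ℕ) :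
    cnt s n (a + 1) b I (r + 1) = cnt s n a b I (r + 1) + cnt s n (a - s) b I r := by
  classical
  have hsplit := Finset.card_filter_add_card_filter_not
    (s := CS s n (a + 1) b I (r + 1)) (fun A => (a + 1, 0) ∈ A)
  have h1 : (Finset.filter (fun A => (a + 1, 0) ∈ A) (CS s n (a + 1) b I (r + 1))).card =
      cnt s n (a - s) b I r := by
    apply card_nbij'_compat (fun A => A.erase (a + 1, 0)) (fun B => insert (a + 1, 0) B)
    · intro A hA
      simp only [Finset.mem_filter, mem_CS] at hA
      obtain ⟨⟨hsub, hcard, hsep⟩, htop⟩ := hA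
      rw [mem_CS]
      refine ⟨?_, by rw [Finset.card_erase_of_mem htop, hcard]; omega, 
        SepB_mono (Finset.erase_subset _ _) hsep⟩
      intro x hx
      obtain ⟨hxne, hxA⟩ := Finset.mem_erase.1 hx
      rcases mem_bd.1 (hsub hxA) with hc | hc | hc <;> rw [mem_bd]
      · left
        obtain ⟨x1, x2⟩ := x
        simp only at hc ⊢
        obtain ⟨hc1, hc2, hc3⟩ := hc
        subst hc3
        have hsp := sep_lin (hsep _ hxA _ htop hxne) (by omega)
        refine ⟨hc1, by omega, rfl⟩
      · right; left; exact hc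
      · right; right; exact hc
    · intro B hB
      rw [mem_CS] at hB
      obtain ⟨hsub, hcard, hsep⟩ := hB
      have htopnot : (a + 1, 0) ∉ B := by
        intro h
        rcases mem_bd.1 (hsub h) with h1 | h1 | h1 <;> simp at h1 <;> omega
      simp only [Finset.mem_filter, mem_CS]
      refine ⟨⟨?_, by rw [Finset.card_insert_of_notMem htopnot, hcard], ?_⟩,
        Finset.mem_insert_self _ _⟩
      · intro x hx
        rcases Finset.mem_insert.1 hx with rfl | hxB
        · rw [mem_bd]; left; simp
        · exact bd_mono_a (by omega) (hsub hxB)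
      · have key : ∀ z ∈ B, sepPair s n (a + 1, 0) z := by
          intro z hz
          obtain ⟨z1, z2⟩ := z
          intro hz2
          simp only at hz2
          subst hz2
          rw [if_pos (by omega : (0:ℕ) ≤ 1)]
          rcases mem_bd.1 (hsub hz) with h1 | h1 | h1 <;> simp at h1 <;> simp <;> omega
        intro x hx y hy hxy
        rcases Finset.mem_insert.1 hx with rfl | hxB <;> rcases Finset.mem_insert.1 hy with rfl | hyB
        · exact absurd rfl hxy
        · exact key y hyB
        · exact sepPair_symm (key x hxB)
        · exact hsep x hxB y hyB hxy
    · intro A hA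
      simp only [Finset.mem_filter] at hA
      exact Finset.insert_erase hA.2
    · intro B hB
      rw [mem_CS] at hB
      have htopnot : (a + 1, 0) ∉ B := by
        intro h
        rcases mem_bd.1 (hB.1 h) with h1 | h1 | h1 <;> simp at h1 <;> omega
      exact Finset.erase_insert htopnot
  have h2 : (Finset.filter (fun A => (a + 1, 0) ∉ A) (CS s n (a + 1) b I (r + 1))).card =
      cnt s n a b I (r + 1) := by
    congr 1
    ext A
    simp only [Finset.mem_filter, mem_CS]
    constructor
    · rintro ⟨⟨hsub, hcard, hsep⟩, htop⟩
      refine ⟨?_, hcard, hsep⟩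
      intro x hx
      rcases mem_bd.1 (hsub hx) with h1 | h1 | h1 <;> rw [mem_bd]
      · left
        refine ⟨h1.1, ?_, h1.2.2⟩
        rcases Nat.lt_or_ge x.1 (a + 1) with h | h
        · omega
        · exfalso
          apply htop
          have hxeq : x = (a + 1, 0) := by
            obtain ⟨x1, x2⟩ := x
            simp only at h1 h ⊢
            have : x1 = a + 1 := by omega
            simp [this, h1.2.2]
          rwa [hxeq] at hx
      · right; left; exact h1
      · right; right; exact h1
    · rintro ⟨hsub, hcard, hsep⟩
      refine ⟨⟨fun x hx => bd_mono_a (by omega) (hsub hx), hcard, hsep⟩, ?_⟩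
      intro h
      rcases mem_bd.1 (hsub h) with h1 | h1 | h1 <;> simp at h1 <;> omega
  rw [cnt, ← hsplit, h1, h2, Nat.add_comm]

lemma cnt_rec_b (s : ℕ) (n : ℕ → ℕ) (a b : ℕ) (I : Finset ℕ) (r : ℕ) :
    cnt s n a (b + 1) I (r + 1) = cnt s n a b I (r + 1) + cnt s n a (b - s) I r := by
  rw [cnt_swap, cnt_rec_a, cnt_swap s n b a, cnt_swap s n (b-s) a]

/-- Sliding lemma: moving one cell between the two paths. -/
lemma cnt_slide (s : ℕ) (n : ℕ → ℕ) : ∀ r : ℕ, ∀ a b : ℕ, ∀ I : Finset ℕ,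
    s * r ≤ a + s → s * r ≤ b + s →
    cnt s n (a + 1) b I r = cnt s n a (b + 1) I r := by
  intro r
  induction r with
  | zero => intro a b I _ _; rw [cnt_zero, cnt_zero]
  | succ r ih =>
    intro a b I ha hb
    have chain : ∀ t : ℕ, ∀ a' b' : ℕ, s * r ≤ a' + s → s * r ≤ b' + s →
        cnt s n (a' + t) b' I r = cnt s n a' (b' + t) I r := by
      intro t
      induction t with
      | zero => intro a' b' _ _; rfl
      | succ t iht =>
        intro a' b' ha' hb'
        have h1 : a' + (t + 1) = (a' + t) + 1 := by omega
        rw [h1, ih (a' + t) b' I (by omega) hb', iht a' (b' + 1) ha' (by omega)]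
        congr 1
        omega
    rcases r with - | r'
    · -- r = 0 inside: counts at level 0 are all 1
      rw [cnt_rec_a, cnt_rec_b, cnt_zero, cnt_zero]
    · have e1 : s * (r' + 1 + 1) = s * (r' + 1) + s := by ring
      have e2 : s * (r' + 1) = s * r' + s := by ring
      rw [cnt_rec_a, cnt_rec_b]
      congr 1
      have h := chain s (a - s) (b - s) (by omega) (by omega)
      rw [Nat.sub_add_cancel (by omega : s ≤ a), Nat.sub_add_cancel (by omega : s ≤ b)] at h
      exact h.symm

/-- Chain of slides. -/
lemma cnt_chain (s : ℕ) (n : ℕ → ℕ) (r : ℕ) (t : ℕ) : ∀ a b : ℕ, ∀ I : Finset ℕ,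
    s * r ≤ a + s → s * r ≤ b + s →
    cnt s n (a + t) b I r = cnt s n a (b + t) I r := by
  induction t with
  | zero => intro a b I _ _; rfl
  | succ t iht =>
    intro a b I ha hb
    have h1 : a + (t + 1) = (a + t) + 1 := by omega
    rw [h1, cnt_slide s n r (a + t) b I (by omega) hb, iht a (b + 1) I ha (by omega)]
    congr 1
    omega

/-- Single-path count. -/
lemma cnt_empty_board (s : ℕ) (n : ℕ → ℕ) (r : ℕ) (hr : 1 ≤ r) :
    cnt s n 0 0 ∅ r = 0 := by
  have : CS s n 0 0 ∅ r = ∅ := by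
    ext A
    simp only [mem_CS, Finset.notMem_empty, iff_false]
    rintro ⟨hsub, hcard, -⟩
    have : A = ∅ := by
      apply Finset.eq_empty_of_forall_notMem
      intro x hx
      rcases mem_bd.1 (hsub hx) with h | h | h
      · omega
      · omega
      · simp at h
    rw [this] at hcard
    simp at hcard
    omega
  rw [cnt, this, Finset.card_empty]

lemma cnt_path (s : ℕ) (n : ℕ → ℕ) : ∀ a : ℕ, ∀ r : ℕ,
    cnt s n a 0 ∅ r = ((a + s) - s * r).choose r := by
  intro a
  induction a using Nat.strong_induction_on with
  | _ a ih =>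
    intro r
    rcases a with - | a
    · rcases r with - | r'
      · rw [cnt_zero]; simp
      · rw [cnt_empty_board s n _ (by omega)]
        have e2 : s * (r' + 1) = s * r' + s := by ring
        have : (0 + s) - s * (r' + 1) = 0 := by omega
        rw [this]
        exact (Nat.choose_eq_zero_of_lt (by omega)).symm
    · rcases r with - | r'
      · rw [cnt_zero]; simp
      · have e2 : s * (r' + 1) = s * r' + s := by ring
        have e4 : r' = 0 ∨ (1 ≤ r' ∧ s ≤ s * r') := by
          rcases r' with - | r''
          · left; rfl
          · right
            have : s * (r'' + 1) = s * r'' + s := by ring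
            exact ⟨by omega, by omega⟩
        rw [cnt_rec_a, ih a (by omega), ih (a - s) (by omega)]
        rcases Nat.lt_or_ge (a + s) (s * (r' + 1)) with hlt | hge
        · rcases e4 with rfl | h
          · have m1 : s * (0 + 1) = s := by ring
            omega
          · obtain ⟨hr1, h⟩ := h
            have t1 : (a + s) - s * (r' + 1) = 0 := by omega
            have t2 : (a + 1 + s) - s * (r' + 1) = 0 := by omega
            have t3 : (a - s + s) - s * r' = 0 := by omega
            rw [t1, t2, t3]
            have c1 : Nat.choose 0 (r' + 1) = 0 := Nat.choose_eq_zero_of_lt (by omega)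
            have c2 : Nat.choose 0 r' = 0 := Nat.choose_eq_zero_of_lt (by omega)
            omega
        · rcases Nat.lt_or_ge a s with has | has
          · have hr0 : r' = 0 := by
              rcases e4 with h | ⟨h1, h2⟩
              · exact h
              · omega
            subst hr0
            have t1 : (a + s) - s * (0 + 1) = a := by omega
            have t2 : (a + 1 + s) - s * (0 + 1) = a + 1 := by omega
            have t3 : (a - s + s) - s * 0 = s := by omega
            rw [t1, t2, t3]
            simp [Nat.choose_one_right]
          · have h1 : (a + 1 + s) - s * (r' + 1) = ((a + s) - s * (r' + 1)) + 1 := by omega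
            have h2 : (a - s + s) - s * r' = (a + s) - s * (r' + 1) := by omega
            rw [h1, h2, Nat.choose_succ_succ]
            simp only [Nat.succ_eq_add_one]
            omega

/-- Partitioning configurations by the unique point in a window
`(w0, w0+s]` on tag `tag`, if any. -/
lemma card_window_split (S : Finset (Finset (ℕ × ℕ))) (tag w0 s : ℕ)
    (huniq : ∀ A ∈ S, ∀ x ∈ A, ∀ y ∈ A, x.2 = tag → y.2 = tag →
      w0 < x.1 → x.1 ≤ w0 + s → w0 < y.1 → y.1 ≤ w0 + s → x = y) :
    S.card = (S.filter (fun A => ∀ x ∈ A, x.2 = tag → ¬(w0 < x.1 ∧ x.1 ≤ w0 + s))).card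
      + ∑ e ∈ Finset.Icc 1 s, (S.filter (fun A => (w0 + e, tag) ∈ A)).card := by
  classical
  set f : Finset (ℕ × ℕ) → ℕ :=
    fun A => (A.filter (fun x => x.2 = tag ∧ w0 < x.1 ∧ x.1 ≤ w0 + s)).sup (fun x => x.1 - w0)
    with hf
  have hmem : ∀ A ∈ S, f A ∈ Finset.Icc 0 s := by
    intro A _
    simp only [Finset.mem_Icc]
    refine ⟨Nat.zero_le _, ?_⟩
    apply Finset.sup_le
    intro x hx
    simp only [Finset.mem_filter] at hx
    omega
  rw [Finset.card_eq_sum_card_fiberwise hmem]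
  have h0 : (0 : ℕ) ∉ Finset.Icc 1 s := by simp
  have hins : Finset.Icc 0 s = insert 0 (Finset.Icc 1 s) := by
    ext u
    simp only [Finset.mem_Icc, Finset.mem_insert]
    omega
  rw [hins, Finset.sum_insert h0]
  congr 1
  · apply congrArg Finset.card
    apply Finset.filter_congr
    intro A hA
    constructor
    · intro hfA x hx hxtag hxw
      have hxf : x ∈ A.filter (fun x => x.2 = tag ∧ w0 < x.1 ∧ x.1 ≤ w0 + s) := by
        simp only [Finset.mem_filter]
        exact ⟨hx, hxtag, hxw.1, hxw.2⟩
      have hle2 : x.1 - w0 ≤ f A := Finset.le_sup (f := fun x : ℕ × ℕ => x.1 - w0) hxf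
      omega
    · intro hav
      have hempty : A.filter (fun x => x.2 = tag ∧ w0 < x.1 ∧ x.1 ≤ w0 + s) = ∅ := by
        apply Finset.eq_empty_of_forall_notMem
        intro x hx
        simp only [Finset.mem_filter] at hx
        exact hav x hx.1 hx.2.1 ⟨hx.2.2.1, hx.2.2.2⟩
      rw [hf]
      simp only [hempty, Finset.sup_empty]
      rfl
  · apply Finset.sum_congr rfl
    intro e he
    simp only [Finset.mem_Icc] at he
    apply congrArg Finset.card
    apply Finset.filter_congr
    intro A hA
    constructor
    · intro hfA
      have hne : (A.filter (fun x => x.2 = tag ∧ w0 < x.1 ∧ x.1 ≤ w0 + s)).Nonempty := by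
        rcases Finset.eq_empty_or_nonempty
          (A.filter (fun x => x.2 = tag ∧ w0 < x.1 ∧ x.1 ≤ w0 + s)) with h | h
        · exfalso
          rw [hf] at hfA
          simp only [h, Finset.sup_empty] at hfA
          have : (⊥ : ℕ) = 0 := rfl
          omega
        · exact h
      obtain ⟨x, hx⟩ := hne
      have hxf := hx
      simp only [Finset.mem_filter] at hxf
      have hsup : f A = x.1 - w0 := by
        apply le_antisymm
        · apply Finset.sup_le
          intro y hy
          simp only [Finset.mem_filter] at hy
          have := huniq A hA y hy.1 x hxf.1 hy.2.1 hxf.2.1 hy.2.2.1 hy.2.2.2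
            hxf.2.2.1 hxf.2.2.2
          rw [this]
        · exact Finset.le_sup (f := fun x : ℕ × ℕ => x.1 - w0) hx
      have hx1 : x.1 = w0 + e := by omega
      have : x = (w0 + e, tag) := by
        obtain ⟨x1, x2⟩ := x
        simp only at hx1 hxf ⊢
        rw [hx1, hxf.2.1]
      rw [← this]
      exact hxf.1
    · intro hmemA
      have hxf : (w0 + e, tag) ∈ A.filter (fun x => x.2 = tag ∧ w0 < x.1 ∧ x.1 ≤ w0 + s) :=
        Finset.mem_filter.2 ⟨hmemA, rfl, (by omega : w0 < w0 + e), (by omega : w0 + e ≤ w0 + s)⟩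
      apply le_antisymm
      · apply Finset.sup_le
        intro y hy
        simp only [Finset.mem_filter] at hy
        have := huniq A hA y hy.1 (w0 + e, tag) hmemA hy.2.1 rfl hy.2.2.1 hy.2.2.2
          (by omega) (by omega)
        rw [this]
        simp only
        omega
      · have hle2 : w0 + e - w0 ≤ f A := Finset.le_sup (f := fun x : ℕ × ℕ => x.1 - w0) hxf
        omega

/-- Helper: positions on a circle tag are within the circle size. -/
lemma bd_circle_pos {a b : ℕ} {I : Finset ℕ} {n : ℕ → ℕ} {x : ℕ × ℕ} {i : ℕ}
    (hx : x ∈ bd a b I n) (ht : x.2 = i + 2) : 1 ≤ x.1 ∧ x.1 ≤ n i := by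
  rcases mem_bd.1 hx with h | h | ⟨i', hi', h1, h2, h3⟩
  · omega
  · omega
  · have : i' = i := by omega
    subst this
    omega

/-- The first case of circle unfolding: no chosen point in the window `(m-s, m]`. -/
lemma peel_avoid (s : ℕ) (n : ℕ → ℕ) (a : ℕ) (I : Finset ℕ) (i : ℕ) (r : ℕ)
    (hi : i ∉ I) (hs : 1 ≤ s) (hm : 2 * s ≤ n i) :
    ((CS s n a 0 (insert i I) r).filter
        (fun A => ∀ x ∈ A, x.2 = i + 2 → ¬(n i - s < x.1 ∧ x.1 ≤ n i - s + s))).card =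
      cnt s n a (n i - s) I r := by
  classical
  apply card_nbij'_compat (fun A => A.image (fun x => if x.2 = i + 2 then (x.1, 1) else x))
    (fun B => B.image (fun x => if x.2 = 1 then (x.1, i + 2) else x))
  · -- forward membership
    intro A hA
    simp only [Finset.mem_filter, mem_CS] at hA
    obtain ⟨⟨hsub, hcard, hsep⟩, hav⟩ := hA
    have hnotag1 : ∀ x ∈ A, x.2 ≠ 1 := by
      intro x hx h1
      rcases mem_bd.1 (hsub hx) with h | h | ⟨i', hi', h'⟩ <;> omega
    have hround : ∀ x ∈ A,
        (fun x : ℕ × ℕ => if x.2 = 1 then (x.1, i + 2) else x)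
          ((fun x : ℕ × ℕ => if x.2 = i + 2 then (x.1, 1) else x) x) = x := by
      intro x hx
      obtain ⟨x1, x2⟩ := x
      by_cases h : x2 = i + 2
      · simp [h]
      · have hx2 : ((x1, x2) : ℕ × ℕ).2 ≠ 1 := hnotag1 _ hx
        simp only at hx2
        simp [h, hx2]
    have hinj : ∀ x ∈ A, ∀ y ∈ A,
        (fun x : ℕ × ℕ => if x.2 = i + 2 then (x.1, 1) else x) x =
          (fun x : ℕ × ℕ => if x.2 = i + 2 then (x.1, 1) else x) y → x = y := by
      intro x hx y hy hxy
      have := hround x hx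
      rw [← hround y hy, ← hxy, this]
    rw [mem_CS]
    refine ⟨?_, ?_, ?_⟩
    · intro x hx
      obtain ⟨x', hx', rfl⟩ := Finset.mem_image.1 hx
      obtain ⟨x1, x2⟩ := x'
      by_cases h : x2 = i + 2
      · simp only [h, if_pos]
        have hb := bd_circle_pos (hsub hx') h
        have hav' := hav _ hx' h
        rw [mem_bd]
        right; left
        have hb' : 1 ≤ x1 ∧ x1 ≤ n i := hb
        have hav2 : ¬(n i - s < x1 ∧ x1 ≤ n i - s + s) := hav'
        exact ⟨(by omega : 1 ≤ x1), (by omega : x1 ≤ n i - s), rfl⟩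
      · simp only [h, if_neg, ite_false]
        rcases mem_bd.1 (hsub hx') with h1 | h1 | ⟨i', hi', h'⟩
        · rw [mem_bd]; left; exact h1
        · simp only at h1; omega
        · rw [mem_bd]; right; right
          refine ⟨i', ?_, h'.1, h'.2.1, h'.2.2⟩
          rcases Finset.mem_insert.1 hi' with rfl | h2
          · exfalso; exact h h'.2.2
          · exact h2
    · rw [Finset.card_image_of_injOn hinj, hcard]
    · intro x hx y hy hxy
      obtain ⟨x', hx', rfl⟩ := Finset.mem_image.1 hx
      obtain ⟨y', hy', rfl⟩ := Finset.mem_image.1 hy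
      have hne : x' ≠ y' := fun h => hxy (by rw [h])
      have hsp := hsep x' hx' y' hy' hne
      obtain ⟨x1, x2⟩ := x'
      obtain ⟨y1, y2⟩ := y'
      by_cases h1 : x2 = i + 2 <;> by_cases h2 : y2 = i + 2
      · subst h1; subst h2
        simp only [if_pos] at hxy ⊢
        intro _
        have hc := sep_circ (t := i) (by simpa [Nat.add_sub_cancel] using hsp)
        have hbx := bd_circle_pos (hsub hx') rfl
        have hby := bd_circle_pos (hsub hy') rfl
        have havx := hav _ hx' rfl
        have havy := hav _ hy' rfl
        simp only at hbx hby havx havy hxy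
        rw [if_pos (by omega : (1:ℕ) ≤ 1)]
        unfold circDist at hc
        simp only at hc ⊢
        have hne' : x1 ≠ y1 := by
          intro h; exact hxy (by rw [h])
        omega
      · simp only [h1, h2, if_pos, if_neg, ite_false]
        intro hteq
        simp only at hteq
        exfalso
        rcases mem_bd.1 (hsub hy') with hc | hc | ⟨i', hi', hc⟩ <;> simp only at hc
        · omega
        · omega
        · omega
      · simp only [h1, h2, if_pos, if_neg, ite_false]
        intro hteq
        simp only at hteq
        exfalso
        rcases mem_bd.1 (hsub hx') with hc | hc | ⟨i', hi', hc⟩ <;> simp only at hc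
        · omega
        · omega
        · omega
      · simp only [h1, h2, if_neg, ite_false]
        exact hsp
  · -- backward membership
    intro B hB
    rw [mem_CS] at hB
    obtain ⟨hsub, hcard, hsep⟩ := hB
    have hnotag : ∀ x ∈ B, x.2 ≠ i + 2 := by
      intro x hx h1
      rcases mem_bd.1 (hsub hx) with h | h | ⟨i', hi', h'⟩
      · omega
      · omega
      · have : i' = i := by omega
        subst this
        exact hi hi'
    have hround : ∀ x ∈ B,
        (fun x : ℕ × ℕ => if x.2 = i + 2 then (x.1, 1) else x)
          ((fun x : ℕ × ℕ => if x.2 = 1 then (x.1, i + 2) else x) x) = x := by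
      intro x hx
      obtain ⟨x1, x2⟩ := x
      by_cases h : x2 = 1
      · simp [h]
      · have hx2 : ((x1, x2) : ℕ × ℕ).2 ≠ i + 2 := hnotag _ hx
        simp only at hx2
        simp [h, hx2]
    have hinj : ∀ x ∈ B, ∀ y ∈ B,
        (fun x : ℕ × ℕ => if x.2 = 1 then (x.1, i + 2) else x) x =
          (fun x : ℕ × ℕ => if x.2 = 1 then (x.1, i + 2) else x) y → x = y := by
      intro x hx y hy hxy
      have := hround x hx
      rw [← hround y hy, ← hxy, this]
    simp only [Finset.mem_filter, mem_CS]
    have hbpos : ∀ x ∈ B, x.2 = 1 → 1 ≤ x.1 ∧ x.1 ≤ n i - s := by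
      intro x hx h1
      rcases mem_bd.1 (hsub hx) with h | h | ⟨i', hi', h'⟩ <;> omega
    refine ⟨⟨?_, ?_, ?_⟩, ?_⟩
    · intro x hx
      obtain ⟨x', hx', rfl⟩ := Finset.mem_image.1 hx
      obtain ⟨x1, x2⟩ := x'
      by_cases h : x2 = 1
      · simp only [h, if_pos]
        have hb' : 1 ≤ x1 ∧ x1 ≤ n i - s := hbpos _ hx' h
        rw [mem_bd]
        right; right
        exact ⟨i, Finset.mem_insert_self i I, (by omega : 1 ≤ x1), (by omega : x1 ≤ n i), rfl⟩
      · simp only [h, if_neg, ite_false]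
        rcases mem_bd.1 (hsub hx') with h1 | h1 | ⟨i', hi', h'⟩
        · rw [mem_bd]; left; exact h1
        · simp only at h1; omega
        · rw [mem_bd]; right; right
          exact ⟨i', Finset.mem_insert_of_mem hi', h'⟩
    · rw [Finset.card_image_of_injOn hinj, hcard]
    · intro x hx y hy hxy
      obtain ⟨x', hx', rfl⟩ := Finset.mem_image.1 hx
      obtain ⟨y', hy', rfl⟩ := Finset.mem_image.1 hy
      have hne : x' ≠ y' := fun h => hxy (by rw [h])
      have hsp := hsep x' hx' y' hy' hne
      obtain ⟨x1, x2⟩ := x'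
      obtain ⟨y1, y2⟩ := y'
      by_cases h1 : x2 = 1 <;> by_cases h2 : y2 = 1
      · subst h1; subst h2
        simp only [if_pos] at hxy ⊢
        intro _
        have hlin := sep_lin (t := 1) hsp (by omega)
        have hbx := hbpos _ hx' rfl
        have hby := hbpos _ hy' rfl
        rw [if_neg (by omega : ¬ (i + 2 ≤ 1))]
        have : i + 2 - 2 = i := by omega
        rw [this]
        unfold circDist
        simp only at hbx hby hlin ⊢
        omega
      · simp only [h1, h2, if_pos, if_neg, ite_false]
        intro hteq
        simp only at hteq
        exfalso
        rcases mem_bd.1 (hsub hy') with hc | hc | ⟨i', hi', hc⟩ <;> simp only at hc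
        · omega
        · omega
        · have hieq : i' = i := by omega
          subst hieq
          exact hi hi'
      · simp only [h1, h2, if_pos, if_neg, ite_false]
        intro hteq
        simp only at hteq
        exfalso
        rcases mem_bd.1 (hsub hx') with hc | hc | ⟨i', hi', hc⟩ <;> simp only at hc
        · omega
        · omega
        · have hieq : i' = i := by omega
          subst hieq
          exact hi hi'

      · simp only [h1, h2, if_neg, ite_false]
        exact hsp
    · -- the image avoids the window
      intro x hx hxt
      obtain ⟨x', hx', rfl⟩ := Finset.mem_image.1 hx
      obtain ⟨x1, x2⟩ := x'
      by_cases h : x2 = 1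
      · simp only [h, if_pos] at hxt ⊢
        have := hbpos _ hx' h
        simp only at this ⊢
        omega
      · simp only [h, if_neg, ite_false] at hxt
        exact absurd hxt (hnotag _ hx')
  · -- round trip 1
    intro A hA
    simp only [Finset.mem_filter, mem_CS] at hA
    obtain ⟨⟨hsub, hcard, hsep⟩, hav⟩ := hA
    have hnotag1 : ∀ x ∈ A, x.2 ≠ 1 := by
      intro x hx h1
      rcases mem_bd.1 (hsub hx) with h | h | ⟨i', hi', h'⟩ <;> omega
    rw [Finset.image_image]
    have : ∀ x ∈ A, ((fun x : ℕ × ℕ => if x.2 = 1 then (x.1, i + 2) else x) ∘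
        (fun x : ℕ × ℕ => if x.2 = i + 2 then (x.1, 1) else x)) x = x := by
      intro x hx
      obtain ⟨x1, x2⟩ := x
      by_cases h : x2 = i + 2
      · simp [h]
      · have hx2 : ((x1, x2) : ℕ × ℕ).2 ≠ 1 := hnotag1 _ hx
        simp only at hx2
        simp [h, hx2]
    calc A.image _ = A.image id := Finset.image_congr this
    _ = A := Finset.image_id
  · -- round trip 2
    intro B hB
    rw [mem_CS] at hB
    obtain ⟨hsub, hcard, hsep⟩ := hB
    have hnotag : ∀ x ∈ B, x.2 ≠ i + 2 := by
      intro x hx h1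
      rcases mem_bd.1 (hsub hx) with h | h | ⟨i', hi', h'⟩
      · omega
      · omega
      · have : i' = i := by omega
        subst this
        exact hi hi'
    rw [Finset.image_image]
    have : ∀ x ∈ B, ((fun x : ℕ × ℕ => if x.2 = i + 2 then (x.1, 1) else x) ∘
        (fun x : ℕ × ℕ => if x.2 = 1 then (x.1, i + 2) else x)) x = x := by
      intro x hx
      obtain ⟨x1, x2⟩ := x
      by_cases h : x2 = 1
      · simp [h]
      · have hx2 : ((x1, x2) : ℕ × ℕ).2 ≠ i + 2 := hnotag _ hx
        simp only at hx2
        simp [h, hx2]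
    calc B.image _ = B.image id := Finset.image_congr this
    _ = B := Finset.image_id

/-- The second case of circle unfolding: the chosen point sits at `n i - s + e`. -/
lemma peel_at (s : ℕ) (n : ℕ → ℕ) (a : ℕ) (I : Finset ℕ) (i : ℕ) (r e : ℕ)
    (hi : i ∉ I) (hs : 1 ≤ s) (hm : 2 * s ≤ n i) (he1 : 1 ≤ e) (he2 : e ≤ s) :
    ((CS s n a 0 (insert i I) (r + 1)).filter
        (fun A => (n i - s + e, i + 2) ∈ A)).card = cnt s n a (n i - (2 * s + 1)) I r := by
  classical
  set w : ℕ × ℕ := (n i - s + e, i + 2) with hw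
  apply card_nbij'_compat
    (fun A => (A.erase w).image (fun x => if x.2 = i + 2 then (x.1 - e, 1) else x))
    (fun B => insert w (B.image (fun x => if x.2 = 1 then (x.1 + e, i + 2) else x)))
  · -- forward membership
    intro A hA
    simp only [Finset.mem_filter, mem_CS] at hA
    obtain ⟨⟨hsub, hcard, hsep⟩, hwA⟩ := hA
    have hrange : ∀ x ∈ A.erase w, x.2 = i + 2 →
        e + 1 ≤ x.1 ∧ x.1 ≤ e + (n i - (2 * s + 1)) := by
      intro x hx hxt
      obtain ⟨hxne, hxA⟩ := Finset.mem_erase.1 hx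
      have hb := bd_circle_pos (hsub hxA) hxt
      have hsp := hsep x hxA w hwA hxne
      obtain ⟨x1, x2⟩ := x
      simp only at hxt hb
      subst hxt
      have hc := sep_circ (t := i) (by simpa [hw, Nat.add_sub_cancel] using hsp)
      have hne1 : x1 ≠ n i - s + e := by
        intro hh
        apply hxne
        rw [hw, hh]
      unfold circDist at hc
      simp only at hc ⊢
      omega
    have hnotag1 : ∀ x ∈ A, x.2 ≠ 1 := by
      intro x hx h1
      rcases mem_bd.1 (hsub hx) with h | h | ⟨i', hi', h'⟩ <;> omega
    have hround : ∀ x ∈ A.erase w,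
        (fun x : ℕ × ℕ => if x.2 = 1 then (x.1 + e, i + 2) else x)
          ((fun x : ℕ × ℕ => if x.2 = i + 2 then (x.1 - e, 1) else x) x) = x := by
      intro x hx
      have hr := hrange x hx
      obtain ⟨x1, x2⟩ := x
      by_cases h : x2 = i + 2
      · simp only [h, if_pos, if_true]
        have hr2 : e + 1 ≤ x1 ∧ x1 ≤ e + (n i - (2 * s + 1)) :=
          hr (show ((x1, x2) : ℕ × ℕ).2 = i + 2 from h)
        have hx1 : x1 - e + e = x1 := by omega
        simp [hx1]
      · have hx2 : ((x1, x2) : ℕ × ℕ).2 ≠ 1 := hnotag1 _ (Finset.mem_of_mem_erase hx)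
        simp only at hx2
        simp [h, hx2]
    have hinj : ∀ x ∈ A.erase w, ∀ y ∈ A.erase w,
        (fun x : ℕ × ℕ => if x.2 = i + 2 then (x.1 - e, 1) else x) x =
          (fun x : ℕ × ℕ => if x.2 = i + 2 then (x.1 - e, 1) else x) y → x = y := by
      intro x hx y hy hxy
      have := hround x hx
      rw [← hround y hy, ← hxy, this]
    rw [mem_CS]
    refine ⟨?_, ?_, ?_⟩
    · intro x hx
      obtain ⟨x', hx', rfl⟩ := Finset.mem_image.1 hx
      obtain ⟨x1, x2⟩ := x'
      by_cases h : x2 = i + 2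
      · simp only [h, if_pos]
        have hr2 : e + 1 ≤ x1 ∧ x1 ≤ e + (n i - (2 * s + 1)) :=
          hrange _ hx' (show ((x1, x2) : ℕ × ℕ).2 = i + 2 from h)
        rw [mem_bd]
        right; left
        exact ⟨(by omega : 1 ≤ x1 - e), (by omega : x1 - e ≤ n i - (2 * s + 1)), rfl⟩
      · simp only [h, if_neg, ite_false]
        rcases mem_bd.1 (hsub (Finset.mem_of_mem_erase hx')) with h1 | h1 | ⟨i', hi', h'⟩
        · rw [mem_bd]; left; exact h1
        · simp only at h1; omega
        · rw [mem_bd]; right; right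
          refine ⟨i', ?_, h'.1, h'.2.1, h'.2.2⟩
          rcases Finset.mem_insert.1 hi' with rfl | h2
          · exfalso; exact h h'.2.2
          · exact h2
    · rw [Finset.card_image_of_injOn hinj, Finset.card_erase_of_mem hwA, hcard]
      omega
    · intro x hx y hy hxy
      obtain ⟨x', hx', rfl⟩ := Finset.mem_image.1 hx
      obtain ⟨y', hy', rfl⟩ := Finset.mem_image.1 hy
      have hne : x' ≠ y' := fun h => hxy (by rw [h])
      have hsp := hsep x' (Finset.mem_of_mem_erase hx') y' (Finset.mem_of_mem_erase hy') hne
      have hrx := hrange x' hx'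
      have hry := hrange y' hy'
      obtain ⟨x1, x2⟩ := x'
      obtain ⟨y1, y2⟩ := y'
      by_cases h1 : x2 = i + 2 <;> by_cases h2 : y2 = i + 2
      · subst h1; subst h2
        simp only [if_pos] at hxy ⊢
        intro _
        have hc := sep_circ (t := i) (by simpa [Nat.add_sub_cancel] using hsp)
        have hrx2 := hrx rfl
        have hry2 := hry rfl
        simp only at hrx2 hry2 hxy
        rw [if_pos (by omega : (1:ℕ) ≤ 1)]
        unfold circDist at hc
        simp only at hc ⊢
        have hne' : x1 ≠ y1 := fun h => hxy (by rw [h])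
        omega
      · simp only [h1, h2, if_pos, if_neg, ite_false]
        intro hteq
        simp only at hteq
        exfalso
        rcases mem_bd.1 (hsub (Finset.mem_of_mem_erase hy')) with hc | hc | ⟨i', hi', hc⟩ <;>
          simp only at hc <;> omega
      · simp only [h1, h2, if_pos, if_neg, ite_false]
        intro hteq
        simp only at hteq
        exfalso
        rcases mem_bd.1 (hsub (Finset.mem_of_mem_erase hx')) with hc | hc | ⟨i', hi', hc⟩ <;>
          simp only at hc <;> omega
      · simp only [h1, h2, if_neg, ite_false]
        exact hsp
  · -- backward membership
    intro B hB
    rw [mem_CS] at hB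
    obtain ⟨hsub, hcard, hsep⟩ := hB
    have hnotag : ∀ x ∈ B, x.2 ≠ i + 2 := by
      intro x hx h1
      rcases mem_bd.1 (hsub hx) with h | h | ⟨i', hi', h'⟩
      · omega
      · omega
      · have hieq : i' = i := by omega
        subst hieq
        exact hi hi'
    have hbpos : ∀ x ∈ B, x.2 = 1 → 1 ≤ x.1 ∧ x.1 ≤ n i - (2 * s + 1) := by
      intro x hx h1
      rcases mem_bd.1 (hsub hx) with h | h | ⟨i', hi', h'⟩ <;> omega
    have hwnotmem : w ∉ B.image (fun x : ℕ × ℕ => if x.2 = 1 then (x.1 + e, i + 2) else x) := by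
      intro hmem
      obtain ⟨x', hx', hxeq⟩ := Finset.mem_image.1 hmem
      obtain ⟨x1, x2⟩ := x'
      by_cases h : x2 = 1
      · simp only [h, if_pos] at hxeq
        have := hbpos _ hx' h
        simp only at this
        rw [hw] at hxeq
        have h1 : x1 + e = n i - s + e := congrArg Prod.fst hxeq
        omega
      · simp only [h, if_neg, ite_false] at hxeq
        apply hnotag _ hx'
        rw [hxeq, hw]
    have hround : ∀ x ∈ B,
        (fun x : ℕ × ℕ => if x.2 = i + 2 then (x.1 - e, 1) else x)
          ((fun x : ℕ × ℕ => if x.2 = 1 then (x.1 + e, i + 2) else x) x) = x := by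
      intro x hx
      obtain ⟨x1, x2⟩ := x
      by_cases h : x2 = 1
      · simp only [h, if_pos, if_true]
        have hx1 : x1 + e - e = x1 := by omega
        simp [hx1]
      · have hx2 : ((x1, x2) : ℕ × ℕ).2 ≠ i + 2 := hnotag _ hx
        simp only at hx2
        simp [h, hx2]
    have hinj : ∀ x ∈ B, ∀ y ∈ B,
        (fun x : ℕ × ℕ => if x.2 = 1 then (x.1 + e, i + 2) else x) x =
          (fun x : ℕ × ℕ => if x.2 = 1 then (x.1 + e, i + 2) else x) y → x = y := by
      intro x hx y hy hxy
      have := hround x hx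
      rw [← hround y hy, ← hxy, this]
    have himgsub : ∀ x ∈ B.image (fun x : ℕ × ℕ => if x.2 = 1 then (x.1 + e, i + 2) else x),
        x ∈ bd a 0 (insert i I) n := by
      intro x hx
      obtain ⟨x', hx', rfl⟩ := Finset.mem_image.1 hx
      obtain ⟨x1, x2⟩ := x'
      by_cases h : x2 = 1
      · simp only [h, if_pos]
        have := hbpos _ hx' h
        simp only at this
        rw [mem_bd]
        right; right
        exact ⟨i, Finset.mem_insert_self i I, (by omega : 1 ≤ x1 + e),
          (by omega : x1 + e ≤ n i), rfl⟩
      · simp only [h, if_neg, ite_false]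
        rcases mem_bd.1 (hsub hx') with h1 | h1 | ⟨i', hi', h'⟩
        · rw [mem_bd]; left; exact h1
        · simp only at h1; omega
        · rw [mem_bd]; right; right
          exact ⟨i', Finset.mem_insert_of_mem hi', h'⟩
    have hsepw : ∀ z ∈ B.image (fun x : ℕ × ℕ => if x.2 = 1 then (x.1 + e, i + 2) else x),
        sepPair s n w z := by
      intro z hz
      obtain ⟨z', hz', rfl⟩ := Finset.mem_image.1 hz
      obtain ⟨z1, z2⟩ := z'
      by_cases h : z2 = 1
      · simp only [h, if_pos]
        intro _
        rw [hw]
        rw [if_neg (by omega : ¬ (i + 2 ≤ 1))]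
        have hbz := hbpos _ hz' h
        simp only at hbz
        have : i + 2 - 2 = i := by omega
        rw [this]
        unfold circDist
        simp only
        omega
      · simp only [h, if_neg, ite_false]
        intro hteq
        exfalso
        apply hnotag _ hz'
        rw [hw] at hteq
        exact hteq.symm
    simp only [Finset.mem_filter, mem_CS]
    refine ⟨⟨?_, ?_, ?_⟩, Finset.mem_insert_self _ _⟩
    · intro x hx
      rcases Finset.mem_insert.1 hx with rfl | hxB
      · rw [mem_bd]
        right; right
        rw [hw]
        exact ⟨i, Finset.mem_insert_self i I, (by omega : 1 ≤ n i - s + e),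
          (by omega : n i - s + e ≤ n i), rfl⟩
      · exact himgsub _ hxB
    · rw [Finset.card_insert_of_notMem hwnotmem, Finset.card_image_of_injOn hinj, hcard]
    · intro x hx y hy hxy
      rcases Finset.mem_insert.1 hx with rfl | hxB <;> rcases Finset.mem_insert.1 hy with rfl | hyB
      · exact absurd rfl hxy
      · exact hsepw y hyB
      · exact sepPair_symm (hsepw x hxB)
      · obtain ⟨x', hx', rfl⟩ := Finset.mem_image.1 hxB
        obtain ⟨y', hy', rfl⟩ := Finset.mem_image.1 hyB
        have hne : x' ≠ y' := fun h => hxy (by rw [h])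
        have hsp := hsep x' hx' y' hy' hne
        obtain ⟨x1, x2⟩ := x'
        obtain ⟨y1, y2⟩ := y'
        by_cases h1 : x2 = 1 <;> by_cases h2 : y2 = 1
        · subst h1; subst h2
          simp only [if_pos] at hxy ⊢
          intro _
          have hlin := sep_lin (t := 1) hsp (by omega)
          have hbx := hbpos _ hx' rfl
          have hby := hbpos _ hy' rfl
          rw [if_neg (by omega : ¬ (i + 2 ≤ 1))]
          have hii : i + 2 - 2 = i := by omega
          rw [hii]
          unfold circDist
          simp only at hbx hby hlin ⊢
          omega
        · simp only [h1, h2, if_pos, if_neg, ite_false]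
          intro hteq
          simp only at hteq
          exfalso
          rcases mem_bd.1 (hsub hy') with hc | hc | ⟨i', hi', hc⟩ <;> simp only at hc
          · omega
          · omega
          · have hieq : i' = i := by omega
            subst hieq
            exact hi hi'
        · simp only [h1, h2, if_pos, if_neg, ite_false]
          intro hteq
          simp only at hteq
          exfalso
          rcases mem_bd.1 (hsub hx') with hc | hc | ⟨i', hi', hc⟩ <;> simp only at hc
          · omega
          · omega
          · have hieq : i' = i := by omega
            subst hieq
            exact hi hi'
        · simp only [h1, h2, if_neg, ite_false]
          exact hsp
  · -- round trip 1
    intro A hA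
    simp only [Finset.mem_filter, mem_CS] at hA
    obtain ⟨⟨hsub, hcard, hsep⟩, hwA⟩ := hA
    have hrange : ∀ x ∈ A.erase w, x.2 = i + 2 →
        e + 1 ≤ x.1 ∧ x.1 ≤ e + (n i - (2 * s + 1)) := by
      intro x hx hxt
      obtain ⟨hxne, hxA⟩ := Finset.mem_erase.1 hx
      have hb := bd_circle_pos (hsub hxA) hxt
      have hsp := hsep x hxA w hwA hxne
      obtain ⟨x1, x2⟩ := x
      simp only at hxt hb
      subst hxt
      have hc := sep_circ (t := i) (by simpa [hw, Nat.add_sub_cancel] using hsp)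
      have hne1 : x1 ≠ n i - s + e := by
        intro hh
        apply hxne
        rw [hw, hh]
      unfold circDist at hc
      simp only at hc ⊢
      omega
    have hnotag1 : ∀ x ∈ A, x.2 ≠ 1 := by
      intro x hx h1
      rcases mem_bd.1 (hsub hx) with h | h | ⟨i', hi', h'⟩ <;> omega
    rw [Finset.image_image]
    have hcomp : ∀ x ∈ A.erase w, ((fun x : ℕ × ℕ => if x.2 = 1 then (x.1 + e, i + 2) else x) ∘
        (fun x : ℕ × ℕ => if x.2 = i + 2 then (x.1 - e, 1) else x)) x = x := by
      intro x hx
      have hr := hrange x hx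
      obtain ⟨x1, x2⟩ := x
      by_cases h : x2 = i + 2
      · have hr2 : e + 1 ≤ x1 ∧ x1 ≤ e + (n i - (2 * s + 1)) :=
          hr (show ((x1, x2) : ℕ × ℕ).2 = i + 2 from h)
        simp only [Function.comp, h, if_pos, if_true]
        have hx1 : x1 - e + e = x1 := by omega
        simp [hx1]
      · have hx2 : ((x1, x2) : ℕ × ℕ).2 ≠ 1 := hnotag1 _ (Finset.mem_of_mem_erase hx)
        simp only at hx2
        simp [Function.comp, h, hx2]
    have himgid : (A.erase w).image
        ((fun x : ℕ × ℕ => if x.2 = 1 then (x.1 + e, i + 2) else x) ∘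
          (fun x : ℕ × ℕ => if x.2 = i + 2 then (x.1 - e, 1) else x)) = A.erase w := by
      calc _ = (A.erase w).image id := Finset.image_congr hcomp
      _ = A.erase w := Finset.image_id
    rw [himgid, Finset.insert_erase hwA]
  · -- round trip 2
    intro B hB
    rw [mem_CS] at hB
    obtain ⟨hsub, hcard, hsep⟩ := hB
    have hnotag : ∀ x ∈ B, x.2 ≠ i + 2 := by
      intro x hx h1
      rcases mem_bd.1 (hsub hx) with h | h | ⟨i', hi', h'⟩
      · omega
      · omega
      · have hieq : i' = i := by omega
        subst hieq
        exact hi hi'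
    have hwnotmem : w ∉ B.image (fun x : ℕ × ℕ => if x.2 = 1 then (x.1 + e, i + 2) else x) := by
      intro hmem
      obtain ⟨x', hx', hxeq⟩ := Finset.mem_image.1 hmem
      obtain ⟨x1, x2⟩ := x'
      by_cases h : x2 = 1
      · simp only [h, if_pos] at hxeq
        have hb := hsub hx'
        rcases mem_bd.1 hb with hc | hc | ⟨i', hi', hc⟩ <;> simp only [h] at hc
        · omega
        · rw [hw] at hxeq
          have h1 : x1 + e = n i - s + e := congrArg Prod.fst hxeq
          omega
        · omega
      · simp only [h, if_neg, ite_false] at hxeq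
        apply hnotag _ hx'
        rw [hxeq, hw]
    rw [Finset.erase_insert hwnotmem, Finset.image_image]
    have hcomp : ∀ x ∈ B, ((fun x : ℕ × ℕ => if x.2 = i + 2 then (x.1 - e, 1) else x) ∘
        (fun x : ℕ × ℕ => if x.2 = 1 then (x.1 + e, i + 2) else x)) x = x := by
      intro x hx
      obtain ⟨x1, x2⟩ := x
      by_cases h : x2 = 1
      · simp only [Function.comp, h, if_pos, if_true]
        have hx1 : x1 + e - e = x1 := by omega
        simp [hx1]
      · have hx2 : ((x1, x2) : ℕ × ℕ).2 ≠ i + 2 := hnotag _ hx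
        simp only at hx2
        simp [Function.comp, h, hx2]
    calc B.image _ = B.image id := Finset.image_congr hcomp
    _ = B := Finset.image_id

lemma cnt_circle_peel (s : ℕ) (n : ℕ → ℕ) (a : ℕ) (I : Finset ℕ) (i : ℕ) (r : ℕ)
    (hi : i ∉ I) (hs : 1 ≤ s) (hm : 2 * s ≤ n i) :
    cnt s n a 0 (insert i I) (r + 1) =
      cnt s n a (n i - s) I (r + 1) + s * cnt s n a (n i - (2 * s + 1)) I r := by
  classical
  have huniq : ∀ A ∈ CS s n a 0 (insert i I) (r + 1), ∀ x ∈ A, ∀ y ∈ A,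
      x.2 = i + 2 → y.2 = i + 2 → n i - s < x.1 → x.1 ≤ n i - s + s →
      n i - s < y.1 → y.1 ≤ n i - s + s → x = y := by
    intro A hA x hx y hy hxt hyt hx1 hx2 hy1 hy2
    rw [mem_CS] at hA
    by_contra hne
    have hsp := hA.2.2 x hx y hy hne
    obtain ⟨x1, x2⟩ := x
    obtain ⟨y1, y2⟩ := y
    simp only at hxt hyt hx1 hx2 hy1 hy2
    subst hxt; subst hyt
    have hc := sep_circ (t := i) (by simpa [Nat.add_sub_cancel] using hsp)
    unfold circDist at hc
    have hbx := bd_circle_pos (hA.1 hx) rfl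
    have hby := bd_circle_pos (hA.1 hy) rfl
    simp only at hbx hby hc
    have hxy : x1 = y1 := by omega
    exact hne (by rw [hxy])
  have hsplit := card_window_split (CS s n a 0 (insert i I) (r + 1)) (i + 2) (n i - s) s huniq
  rw [cnt, hsplit]
  congr 1
  · exact peel_avoid s n a I i (r + 1) hi hs hm
  · have heach : ∀ e ∈ Finset.Icc 1 s,
        ((CS s n a 0 (insert i I) (r + 1)).filter
          (fun A => (n i - s + e, i + 2) ∈ A)).card = cnt s n a (n i - (2 * s + 1)) I r := by
      intro e he
      simp only [Finset.mem_Icc] at he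
      exact peel_at s n a I i r e hi hs hm he.1 he.2
    rw [Finset.sum_congr rfl heach, Finset.sum_const, Nat.card_Icc]
    simp [Nat.add_sub_cancel, mul_comm]

/-- Tag-0 points of a board lie in `[1, a]`, and there are no tag-1 points when `b = 0`. -/
lemma bd_path_pos {a b : ℕ} {I : Finset ℕ} {n : ℕ → ℕ} {x : ℕ × ℕ}
    (hx : x ∈ bd a b I n) (ht : x.2 = 0) : 1 ≤ x.1 ∧ x.1 ≤ a := by
  rcases mem_bd.1 hx with h | h | ⟨i', hi', h'⟩ <;> omega

/-- First window case on a long path: no point in `(l, l+s]`. -/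
lemma win_avoid (s : ℕ) (n : ℕ → ℕ) (l m : ℕ) (I : Finset ℕ) (r : ℕ)
    (hs : 1 ≤ s) (hm : s ≤ m) :
    ((CS s n (l + m) 0 I r).filter
        (fun A => ∀ x ∈ A, x.2 = 0 → ¬(l < x.1 ∧ x.1 ≤ l + s))).card =
      cnt s n l (m - s) I r := by
  classical
  apply card_nbij'_compat
    (fun A => A.image (fun x => if x.2 = 0 then
      (if l + s < x.1 then (x.1 - (l + s), 1) else x) else x))
    (fun B => B.image (fun x => if x.2 = 1 then (x.1 + (l + s), 0) else x))
  · intro A hA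
    simp only [Finset.mem_filter, mem_CS] at hA
    obtain ⟨⟨hsub, hcard, hsep⟩, hav⟩ := hA
    have hnotag1 : ∀ x ∈ A, x.2 ≠ 1 := by
      intro x hx h1
      rcases mem_bd.1 (hsub hx) with h | h | ⟨i', hi', h'⟩ <;> omega
    have hround : ∀ x ∈ A,
        (fun x : ℕ × ℕ => if x.2 = 1 then (x.1 + (l + s), 0) else x)
          ((fun x : ℕ × ℕ => if x.2 = 0 then
            (if l + s < x.1 then (x.1 - (l + s), 1) else x) else x) x) = x := by
      intro x hx
      obtain ⟨x1, x2⟩ := x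
      by_cases h : x2 = 0
      · by_cases h' : l + s < x1
        · simp only [h, h', if_pos, if_true]
          have : x1 - (l + s) + (l + s) = x1 := by omega
          simp [this]
        · simp [h, h']
      · have hx2 : ((x1, x2) : ℕ × ℕ).2 ≠ 1 := hnotag1 _ hx
        simp only at hx2
        simp [h, hx2]
    have hinj : ∀ x ∈ A, ∀ y ∈ A,
        (fun x : ℕ × ℕ => if x.2 = 0 then
          (if l + s < x.1 then (x.1 - (l + s), 1) else x) else x) x =
        (fun x : ℕ × ℕ => if x.2 = 0 then
          (if l + s < x.1 then (x.1 - (l + s), 1) else x) else x) y → x = y := by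
      intro x hx y hy hxy
      have := hround x hx
      rw [← hround y hy, ← hxy, this]
    rw [mem_CS]
    refine ⟨?_, ?_, ?_⟩
    · intro x hx
      obtain ⟨x', hx', rfl⟩ := Finset.mem_image.1 hx
      obtain ⟨x1, x2⟩ := x'
      have hav' := hav _ hx'
      by_cases h : x2 = 0
      · have hb := bd_path_pos (hsub hx') h
        simp only at hb
        have hav2 : ¬ (l < x1 ∧ x1 ≤ l + s) := hav' h
        by_cases h' : l + s < x1
        · simp only [h, h', if_pos, if_true]
          rw [mem_bd]
          right; left
          exact ⟨(by omega : 1 ≤ x1 - (l + s)), (by omega : x1 - (l + s) ≤ m - s), rfl⟩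
        · simp only [h, h', if_pos, if_neg, ite_false, ite_true]
          rw [mem_bd]
          left
          exact ⟨(by omega : 1 ≤ x1), (by omega : x1 ≤ l), rfl⟩
      · simp only [h, if_neg, ite_false]
        rcases mem_bd.1 (hsub hx') with h1 | h1 | ⟨i', hi', h'⟩
        · simp only at h1; omega
        · simp only at h1; omega
        · rw [mem_bd]; right; right
          exact ⟨i', hi', h'⟩
    · rw [Finset.card_image_of_injOn hinj, hcard]
    · intro x hx y hy hxy
      obtain ⟨x', hx', rfl⟩ := Finset.mem_image.1 hx
      obtain ⟨y', hy', rfl⟩ := Finset.mem_image.1 hy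
      have hne : x' ≠ y' := fun h => hxy (by rw [h])
      have hsp := hsep x' hx' y' hy' hne
      obtain ⟨x1, x2⟩ := x'
      obtain ⟨y1, y2⟩ := y'
      by_cases h1 : x2 = 0 <;> by_cases h2 : y2 = 0
      · subst h1; subst h2
        have hlin := sep_lin (t := 0) hsp (by omega)
        by_cases hx' : l + s < x1 <;> by_cases hy' : l + s < y1 <;>
          simp only [hx', hy', if_pos, if_neg, if_true, if_false, ite_true, ite_false]
        · intro _
          rw [if_pos (by omega : (1:ℕ) ≤ 1)]
          simp only
          omega
        · intro hteq
          simp only at hteq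
          omega
        · intro hteq
          simp only at hteq
          omega
        · exact hsp
      · simp only [h1, h2, if_pos, if_neg, ite_false, ite_true]
        by_cases hx' : l + s < x1 <;>
          simp only [hx', if_pos, if_neg, ite_true, ite_false] <;>
          intro hteq <;> simp only at hteq <;> exfalso <;>
          rcases mem_bd.1 (hsub hy') with hc | hc | ⟨i', hi', hc⟩ <;> simp only at hc <;> omega
      · simp only [h1, h2, if_pos, if_neg, ite_false, ite_true]
        by_cases hy' : l + s < y1 <;>
          simp only [hy', if_pos, if_neg, ite_true, ite_false] <;>
          intro hteq <;> simp only at hteq <;> exfalso <;>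
          rcases mem_bd.1 (hsub hx') with hc | hc | ⟨i', hi', hc⟩ <;> simp only at hc <;> omega
      · simp only [h1, h2, if_neg, ite_false]
        exact hsp
  · intro B hB
    rw [mem_CS] at hB
    obtain ⟨hsub, hcard, hsep⟩ := hB
    have hbpos : ∀ x ∈ B, x.2 = 1 → 1 ≤ x.1 ∧ x.1 ≤ m - s := by
      intro x hx h1
      rcases mem_bd.1 (hsub hx) with h | h | ⟨i', hi', h'⟩ <;> omega
    have hround : ∀ x ∈ B,
        (fun x : ℕ × ℕ => if x.2 = 0 then
          (if l + s < x.1 then (x.1 - (l + s), 1) else x) else x)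
          ((fun x : ℕ × ℕ => if x.2 = 1 then (x.1 + (l + s), 0) else x) x) = x := by
      intro x hx
      obtain ⟨x1, x2⟩ := x
      by_cases h : x2 = 1
      · have hb := hbpos _ hx h
        simp only at hb
        simp only [h, if_pos, if_true]
        rw [if_pos (by omega : l + s < x1 + (l + s))]
        have : x1 + (l + s) - (l + s) = x1 := by omega
        simp [this]
      · by_cases h0 : x2 = 0
        · have hb := bd_path_pos (hsub hx) h0
          simp only at hb
          have hne : ¬ (l + s < x1) := by omega
          simp [h, h0, hne]
        · simp [h, h0]
    have hinj : ∀ x ∈ B, ∀ y ∈ B,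
        (fun x : ℕ × ℕ => if x.2 = 1 then (x.1 + (l + s), 0) else x) x =
          (fun x : ℕ × ℕ => if x.2 = 1 then (x.1 + (l + s), 0) else x) y → x = y := by
      intro x hx y hy hxy
      have := hround x hx
      rw [← hround y hy, ← hxy, this]
    simp only [Finset.mem_filter, mem_CS]
    refine ⟨⟨?_, ?_, ?_⟩, ?_⟩
    · intro x hx
      obtain ⟨x', hx', rfl⟩ := Finset.mem_image.1 hx
      obtain ⟨x1, x2⟩ := x'
      by_cases h : x2 = 1
      · have hb := hbpos _ hx' h
        simp only at hb
        simp only [h, if_pos, if_true]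
        rw [mem_bd]
        left
        exact ⟨(by omega : 1 ≤ x1 + (l + s)), (by omega : x1 + (l + s) ≤ l + m), rfl⟩
      · simp only [h, if_neg, ite_false]
        rcases mem_bd.1 (hsub hx') with h1 | h1 | ⟨i', hi', h'⟩
        · rw [mem_bd]; left
          simp only at h1
          exact ⟨h1.1, by omega, h1.2.2⟩
        · simp only at h1; omega
        · rw [mem_bd]; right; right
          exact ⟨i', hi', h'⟩
    · rw [Finset.card_image_of_injOn hinj, hcard]
    · intro x hx y hy hxy
      obtain ⟨x', hx', rfl⟩ := Finset.mem_image.1 hx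
      obtain ⟨y', hy', rfl⟩ := Finset.mem_image.1 hy
      have hne : x' ≠ y' := fun h => hxy (by rw [h])
      have hsp := hsep x' hx' y' hy' hne
      obtain ⟨x1, x2⟩ := x'
      obtain ⟨y1, y2⟩ := y'
      by_cases h1 : x2 = 1 <;> by_cases h2 : y2 = 1
      · subst h1; subst h2
        simp only [if_pos] at hxy ⊢
        intro _
        have hlin := sep_lin (t := 1) hsp (by omega)
        rw [if_pos (by omega : (0:ℕ) ≤ 1)]
        simp only
        omega
      · simp only [h1, h2, if_pos, if_neg, ite_false, ite_true]
        intro hteq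
        simp only at hteq
        subst hteq
        -- x was tag 1 (mapped to tag 0), y is tag 0 : prove separation across the cut
        have hbx := hbpos _ hx' h1
        have hby := bd_path_pos (hsub hy') rfl
        simp only at hbx hby
        rw [if_pos (by omega : (0:ℕ) ≤ 1)]
        simp only
        omega
      · simp only [h1, h2, if_pos, if_neg, ite_false, ite_true]
        intro hteq
        simp only at hteq
        have h0 : x2 = 0 := hteq
        subst h0
        have hby := hbpos _ hy' h2
        have hbx := bd_path_pos (hsub hx') rfl
        simp only at hbx hby
        rw [if_pos (by omega : (0:ℕ) ≤ 1)]
        simp only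
        omega
      · simp only [h1, h2, if_neg, ite_false]
        exact hsp
    · intro x hx hxt
      obtain ⟨x', hx', rfl⟩ := Finset.mem_image.1 hx
      obtain ⟨x1, x2⟩ := x'
      by_cases h : x2 = 1
      · have hb := hbpos _ hx' h
        simp only at hb
        simp only [h, if_pos, if_true] at hxt ⊢
        omega
      · simp only [h, if_neg, ite_false] at hxt ⊢
        have hb := bd_path_pos (hsub hx') hxt
        simp only at hb ⊢
        rcases mem_bd.1 (hsub hx') with hc | hc | ⟨i', hi', hc⟩ <;> simp only at hc <;> omega
  · intro A hA
    simp only [Finset.mem_filter, mem_CS] at hA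
    obtain ⟨⟨hsub, hcard, hsep⟩, hav⟩ := hA
    have hnotag1 : ∀ x ∈ A, x.2 ≠ 1 := by
      intro x hx h1
      rcases mem_bd.1 (hsub hx) with h | h | ⟨i', hi', h'⟩ <;> omega
    rw [Finset.image_image]
    have hcomp : ∀ x ∈ A,
        ((fun x : ℕ × ℕ => if x.2 = 1 then (x.1 + (l + s), 0) else x) ∘
          (fun x : ℕ × ℕ => if x.2 = 0 then
            (if l + s < x.1 then (x.1 - (l + s), 1) else x) else x)) x = x := by
      intro x hx
      obtain ⟨x1, x2⟩ := x
      by_cases h : x2 = 0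
      · by_cases h' : l + s < x1
        · simp only [Function.comp, h, h', if_pos, if_true]
          have : x1 - (l + s) + (l + s) = x1 := by omega
          simp [this]
        · simp [Function.comp, h, h']
      · have hx2 : ((x1, x2) : ℕ × ℕ).2 ≠ 1 := hnotag1 _ hx
        simp only at hx2
        simp [Function.comp, h, hx2]
    calc A.image _ = A.image id := Finset.image_congr hcomp
    _ = A := Finset.image_id
  · intro B hB
    rw [mem_CS] at hB
    obtain ⟨hsub, hcard, hsep⟩ := hB
    have hbpos : ∀ x ∈ B, x.2 = 1 → 1 ≤ x.1 ∧ x.1 ≤ m - s := by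
      intro x hx h1
      rcases mem_bd.1 (hsub hx) with h | h | ⟨i', hi', h'⟩ <;> omega
    rw [Finset.image_image]
    have hcomp : ∀ x ∈ B,
        ((fun x : ℕ × ℕ => if x.2 = 0 then
            (if l + s < x.1 then (x.1 - (l + s), 1) else x) else x) ∘
          (fun x : ℕ × ℕ => if x.2 = 1 then (x.1 + (l + s), 0) else x)) x = x := by
      intro x hx
      obtain ⟨x1, x2⟩ := x
      by_cases h : x2 = 1
      · have hb := hbpos _ hx h
        simp only at hb
        simp only [Function.comp, h, if_pos, if_true]
        rw [if_pos (by omega : l + s < x1 + (l + s))]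
        have : x1 + (l + s) - (l + s) = x1 := by omega
        simp [this]
      · by_cases h0 : x2 = 0
        · have hb := bd_path_pos (hsub hx) h0
          simp only at hb
          have hne : ¬ (l + s < x1) := by omega
          simp [Function.comp, h, h0, hne]
        · simp [Function.comp, h, h0]
    calc B.image _ = B.image id := Finset.image_congr hcomp
    _ = B := Finset.image_id

/-- Second window case on a long path: the point sits at `l + e`. -/
lemma win_at (s : ℕ) (n : ℕ → ℕ) (l m : ℕ) (I : Finset ℕ) (r e : ℕ)
    (hs : 1 ≤ s) (hm : s ≤ m) (he1 : 1 ≤ e) (he2 : e ≤ s) :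
    ((CS s n (l + m) 0 I (r + 1)).filter (fun A => (l + e, 0) ∈ A)).card =
      cnt s n (l + e - (s + 1)) (m - (s + e)) I r := by
  classical
  set w : ℕ × ℕ := (l + e, 0) with hw
  apply card_nbij'_compat
    (fun A => (A.erase w).image (fun x => if x.2 = 0 then
      (if l + e < x.1 then (x.1 - (l + e + s), 1) else x) else x))
    (fun B => insert w (B.image (fun x => if x.2 = 1 then (x.1 + (l + e + s), 0) else x)))
  · intro A hA
    simp only [Finset.mem_filter, mem_CS] at hA
    obtain ⟨⟨hsub, hcard, hsep⟩, hwA⟩ := hA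
    have hrange : ∀ x ∈ A.erase w, x.2 = 0 →
        x.1 ≤ l + e - (s + 1) ∨ (l + e + s + 1 ≤ x.1 ∧ x.1 ≤ l + m) := by
      intro x hx hxt
      obtain ⟨hxne, hxA⟩ := Finset.mem_erase.1 hx
      have hb := bd_path_pos (hsub hxA) hxt
      have hsp := hsep x hxA w hwA hxne
      obtain ⟨x1, x2⟩ := x
      simp only at hxt hb
      subst hxt
      have hlin := sep_lin (t := 0) (by simpa [hw] using hsp)
      have hne1 : x1 ≠ l + e := by
        intro hh
        apply hxne
        rw [hw, hh]
      omega
    have hnotag1 : ∀ x ∈ A, x.2 ≠ 1 := by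
      intro x hx h1
      rcases mem_bd.1 (hsub hx) with h | h | ⟨i', hi', h'⟩ <;> omega
    have hround : ∀ x ∈ A.erase w,
        (fun x : ℕ × ℕ => if x.2 = 1 then (x.1 + (l + e + s), 0) else x)
          ((fun x : ℕ × ℕ => if x.2 = 0 then
            (if l + e < x.1 then (x.1 - (l + e + s), 1) else x) else x) x) = x := by
      intro x hx
      have hr := hrange x hx
      obtain ⟨x1, x2⟩ := x
      by_cases h : x2 = 0
      · have hr2 := hr (show ((x1, x2) : ℕ × ℕ).2 = 0 from h)
        simp only at hr2
        by_cases h' : l + e < x1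
        · simp only [h, h', if_pos, if_true]
          have : x1 - (l + e + s) + (l + e + s) = x1 := by omega
          simp [this]
        · simp [h, h']
      · have hx2 : ((x1, x2) : ℕ × ℕ).2 ≠ 1 := hnotag1 _ (Finset.mem_of_mem_erase hx)
        simp only at hx2
        simp [h, hx2]
    have hinj : ∀ x ∈ A.erase w, ∀ y ∈ A.erase w,
        (fun x : ℕ × ℕ => if x.2 = 0 then
          (if l + e < x.1 then (x.1 - (l + e + s), 1) else x) else x) x =
        (fun x : ℕ × ℕ => if x.2 = 0 then
          (if l + e < x.1 then (x.1 - (l + e + s), 1) else x) else x) y → x = y := by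
      intro x hx y hy hxy
      have := hround x hx
      rw [← hround y hy, ← hxy, this]
    rw [mem_CS]
    refine ⟨?_, ?_, ?_⟩
    · intro x hx
      obtain ⟨x', hx', rfl⟩ := Finset.mem_image.1 hx
      obtain ⟨x1, x2⟩ := x'
      by_cases h : x2 = 0
      · have hr2 := hrange _ hx' (show ((x1, x2) : ℕ × ℕ).2 = 0 from h)
        simp only at hr2
        have hb := bd_path_pos (hsub (Finset.mem_of_mem_erase hx')) h
        simp only at hb
        by_cases h' : l + e < x1
        · simp only [h, h', if_pos, if_true]
          rw [mem_bd]
          right; left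
          exact ⟨(by omega : 1 ≤ x1 - (l + e + s)),
            (by omega : x1 - (l + e + s) ≤ m - (s + e)), rfl⟩
        · simp only [h, h', if_pos, if_neg, ite_false, ite_true]
          rw [mem_bd]
          left
          exact ⟨(by omega : 1 ≤ x1), (by omega : x1 ≤ l + e - (s + 1)), rfl⟩
      · simp only [h, if_neg, ite_false]
        rcases mem_bd.1 (hsub (Finset.mem_of_mem_erase hx')) with h1 | h1 | ⟨i', hi', h'⟩
        · simp only at h1; omega
        · simp only at h1; omega
        · rw [mem_bd]; right; right
          exact ⟨i', hi', h'⟩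
    · rw [Finset.card_image_of_injOn hinj, Finset.card_erase_of_mem hwA, hcard]
      omega
    · intro x hx y hy hxy
      obtain ⟨x', hx', rfl⟩ := Finset.mem_image.1 hx
      obtain ⟨y', hy', rfl⟩ := Finset.mem_image.1 hy
      have hne : x' ≠ y' := fun h => hxy (by rw [h])
      have hsp := hsep x' (Finset.mem_of_mem_erase hx') y' (Finset.mem_of_mem_erase hy') hne
      have hrx := hrange x' hx'
      have hry := hrange y' hy'
      obtain ⟨x1, x2⟩ := x'
      obtain ⟨y1, y2⟩ := y'
      by_cases h1 : x2 = 0 <;> by_cases h2 : y2 = 0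
      · subst h1; subst h2
        have hlin := sep_lin (t := 0) hsp (by omega)
        have hrx2 := hrx rfl
        have hry2 := hry rfl
        simp only at hrx2 hry2
        by_cases hx'' : l + e < x1 <;> by_cases hy'' : l + e < y1 <;>
          simp only [hx'', hy'', if_pos, if_neg, if_true, if_false, ite_true, ite_false]
        · intro _
          rw [if_pos (by omega : (1:ℕ) ≤ 1)]
          simp only
          omega
        · intro hteq
          simp only at hteq
          omega
        · intro hteq
          simp only at hteq
          omega
        · exact hsp
      · simp only [h1, h2, if_pos, if_neg, ite_false, ite_true]
        by_cases hx'' : l + e < x1 <;>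
          simp only [hx'', if_pos, if_neg, ite_true, ite_false] <;>
          intro hteq <;> simp only at hteq <;> exfalso <;>
          rcases mem_bd.1 (hsub (Finset.mem_of_mem_erase hy')) with hc | hc | ⟨i', hi', hc⟩ <;>
            simp only at hc <;> omega
      · simp only [h1, h2, if_pos, if_neg, ite_false, ite_true]
        by_cases hy'' : l + e < y1 <;>
          simp only [hy'', if_pos, if_neg, ite_true, ite_false] <;>
          intro hteq <;> simp only at hteq <;> exfalso <;>
          rcases mem_bd.1 (hsub (Finset.mem_of_mem_erase hx')) with hc | hc | ⟨i', hi', hc⟩ <;>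
            simp only at hc <;> omega
      · simp only [h1, h2, if_neg, ite_false]
        exact hsp
  · intro B hB
    rw [mem_CS] at hB
    obtain ⟨hsub, hcard, hsep⟩ := hB
    have hbpos : ∀ x ∈ B, x.2 = 1 → 1 ≤ x.1 ∧ x.1 ≤ m - (s + e) := by
      intro x hx h1
      rcases mem_bd.1 (hsub hx) with h | h | ⟨i', hi', h'⟩ <;> omega
    have hbpos0 : ∀ x ∈ B, x.2 = 0 → 1 ≤ x.1 ∧ x.1 ≤ l + e - (s + 1) := by
      intro x hx h0
      rcases mem_bd.1 (hsub hx) with h | h | ⟨i', hi', h'⟩ <;> omega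
    have hwnotmem : w ∉ B.image
        (fun x : ℕ × ℕ => if x.2 = 1 then (x.1 + (l + e + s), 0) else x) := by
      intro hmem
      obtain ⟨x', hx', hxeq⟩ := Finset.mem_image.1 hmem
      obtain ⟨x1, x2⟩ := x'
      by_cases h : x2 = 1
      · simp only [h, if_pos, if_true] at hxeq
        have hb := hbpos _ hx' h
        simp only at hb
        rw [hw] at hxeq
        have h1 : x1 + (l + e + s) = l + e := congrArg Prod.fst hxeq
        omega
      · simp only [h, if_neg, ite_false] at hxeq
        rw [hw] at hxeq
        have hp1 : x1 = l + e := congrArg Prod.fst hxeq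
        have hp2 : x2 = 0 := congrArg Prod.snd hxeq
        have hb := hbpos0 _ hx' hp2
        simp only at hb
        omega
    have hround : ∀ x ∈ B,
        (fun x : ℕ × ℕ => if x.2 = 0 then
          (if l + e < x.1 then (x.1 - (l + e + s), 1) else x) else x)
          ((fun x : ℕ × ℕ => if x.2 = 1 then (x.1 + (l + e + s), 0) else x) x) = x := by
      intro x hx
      obtain ⟨x1, x2⟩ := x
      by_cases h : x2 = 1
      · simp only [h, if_pos, if_true]
        rw [if_pos (by omega : l + e < x1 + (l + e + s))]
        have : x1 + (l + e + s) - (l + e + s) = x1 := by omega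
        simp [this]
      · by_cases h0 : x2 = 0
        · have hb := hbpos0 _ hx h0
          simp only at hb
          have hne : ¬ (l + e < x1) := by omega
          simp [h, h0, hne]
        · simp [h, h0]
    have hinj : ∀ x ∈ B, ∀ y ∈ B,
        (fun x : ℕ × ℕ => if x.2 = 1 then (x.1 + (l + e + s), 0) else x) x =
          (fun x : ℕ × ℕ => if x.2 = 1 then (x.1 + (l + e + s), 0) else x) y → x = y := by
      intro x hx y hy hxy
      have := hround x hx
      rw [← hround y hy, ← hxy, this]
    have himgsub : ∀ x ∈ B.image
        (fun x : ℕ × ℕ => if x.2 = 1 then (x.1 + (l + e + s), 0) else x),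
        x ∈ bd (l + m) 0 I n := by
      intro x hx
      obtain ⟨x', hx', rfl⟩ := Finset.mem_image.1 hx
      obtain ⟨x1, x2⟩ := x'
      by_cases h : x2 = 1
      · simp only [h, if_pos, if_true]
        have hb := hbpos _ hx' h
        simp only at hb
        rw [mem_bd]
        left
        exact ⟨(by omega : 1 ≤ x1 + (l + e + s)), (by omega : x1 + (l + e + s) ≤ l + m), rfl⟩
      · simp only [h, if_neg, ite_false]
        rcases mem_bd.1 (hsub hx') with h1 | h1 | ⟨i', hi', h'⟩
        · rw [mem_bd]; left
          simp only at h1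
          exact ⟨h1.1, by omega, h1.2.2⟩
        · simp only at h1; omega
        · rw [mem_bd]; right; right
          exact ⟨i', hi', h'⟩
    have hsepw : ∀ z ∈ B.image
        (fun x : ℕ × ℕ => if x.2 = 1 then (x.1 + (l + e + s), 0) else x),
        sepPair s n w z := by
      intro z hz
      obtain ⟨z', hz', rfl⟩ := Finset.mem_image.1 hz
      obtain ⟨z1, z2⟩ := z'
      by_cases h : z2 = 1
      · simp only [h, if_pos, if_true]
        intro _
        rw [hw]
        rw [if_pos (by omega : (0:ℕ) ≤ 1)]
        have hb := hbpos _ hz' h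
        simp only at hb ⊢
        omega
      · by_cases h0 : z2 = 0
        · simp only [h, if_neg, ite_false]
          intro _
          rw [hw]
          rw [if_pos (by omega : (0:ℕ) ≤ 1)]
          have hb := hbpos0 _ hz' h0
          simp only at hb ⊢
          omega
        · simp only [h, if_neg, ite_false]
          intro hteq
          rw [hw] at hteq
          exact absurd hteq.symm h0
    simp only [Finset.mem_filter, mem_CS]
    refine ⟨⟨?_, ?_, ?_⟩, Finset.mem_insert_self _ _⟩
    · intro x hx
      rcases Finset.mem_insert.1 hx with rfl | hxB
      · rw [mem_bd]
        left
        rw [hw]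
        exact ⟨(by omega : 1 ≤ l + e), (by omega : l + e ≤ l + m), rfl⟩
      · exact himgsub _ hxB
    · rw [Finset.card_insert_of_notMem hwnotmem, Finset.card_image_of_injOn hinj, hcard]
    · intro x hx y hy hxy
      rcases Finset.mem_insert.1 hx with rfl | hxB <;> rcases Finset.mem_insert.1 hy with rfl | hyB
      · exact absurd rfl hxy
      · exact hsepw y hyB
      · exact sepPair_symm (hsepw x hxB)
      · obtain ⟨x', hx', rfl⟩ := Finset.mem_image.1 hxB
        obtain ⟨y', hy', rfl⟩ := Finset.mem_image.1 hyB
        have hne : x' ≠ y' := fun h => hxy (by rw [h])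
        have hsp := hsep x' hx' y' hy' hne
        obtain ⟨x1, x2⟩ := x'
        obtain ⟨y1, y2⟩ := y'
        by_cases h1 : x2 = 1 <;> by_cases h2 : y2 = 1
        · subst h1; subst h2
          simp only [if_pos] at hxy ⊢
          intro _
          have hlin := sep_lin (t := 1) hsp (by omega)
          rw [if_pos (by omega : (0:ℕ) ≤ 1)]
          simp only
          omega
        · simp only [h1, h2, if_pos, if_neg, ite_false, ite_true]
          intro hteq
          simp only at hteq
          have h0 : y2 = 0 := hteq.symm
          subst h0
          have hbx := hbpos _ hx' h1
          have hby := hbpos0 _ hy' rfl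
          simp only at hbx hby
          rw [if_pos (by omega : (0:ℕ) ≤ 1)]
          simp only
          omega
        · simp only [h1, h2, if_pos, if_neg, ite_false, ite_true]
          intro hteq
          simp only at hteq
          have h0 : x2 = 0 := hteq
          subst h0
          have hby := hbpos _ hy' h2
          have hbx := hbpos0 _ hx' rfl
          simp only at hbx hby
          rw [if_pos (by omega : (0:ℕ) ≤ 1)]
          simp only
          omega
        · simp only [h1, h2, if_neg, ite_false]
          exact hsp
  · intro A hA
    simp only [Finset.mem_filter, mem_CS] at hA
    obtain ⟨⟨hsub, hcard, hsep⟩, hwA⟩ := hA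
    have hrange : ∀ x ∈ A.erase w, x.2 = 0 →
        x.1 ≤ l + e - (s + 1) ∨ (l + e + s + 1 ≤ x.1 ∧ x.1 ≤ l + m) := by
      intro x hx hxt
      obtain ⟨hxne, hxA⟩ := Finset.mem_erase.1 hx
      have hb := bd_path_pos (hsub hxA) hxt
      have hsp := hsep x hxA w hwA hxne
      obtain ⟨x1, x2⟩ := x
      simp only at hxt hb
      subst hxt
      have hlin := sep_lin (t := 0) (by simpa [hw] using hsp)
      have hne1 : x1 ≠ l + e := by
        intro hh
        apply hxne
        rw [hw, hh]
      omega
    have hnotag1 : ∀ x ∈ A, x.2 ≠ 1 := by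
      intro x hx h1
      rcases mem_bd.1 (hsub hx) with h | h | ⟨i', hi', h'⟩ <;> omega
    rw [Finset.image_image]
    have hcomp : ∀ x ∈ A.erase w,
        ((fun x : ℕ × ℕ => if x.2 = 1 then (x.1 + (l + e + s), 0) else x) ∘
          (fun x : ℕ × ℕ => if x.2 = 0 then
            (if l + e < x.1 then (x.1 - (l + e + s), 1) else x) else x)) x = x := by
      intro x hx
      have hr := hrange x hx
      obtain ⟨x1, x2⟩ := x
      by_cases h : x2 = 0
      · have hr2 := hr (show ((x1, x2) : ℕ × ℕ).2 = 0 from h)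
        simp only at hr2
        by_cases h' : l + e < x1
        · simp only [Function.comp, h, h', if_pos, if_true]
          have : x1 - (l + e + s) + (l + e + s) = x1 := by omega
          simp [this]
        · simp [Function.comp, h, h']
      · have hx2 : ((x1, x2) : ℕ × ℕ).2 ≠ 1 := hnotag1 _ (Finset.mem_of_mem_erase hx)
        simp only at hx2
        simp [Function.comp, h, hx2]
    have himgid : (A.erase w).image
        ((fun x : ℕ × ℕ => if x.2 = 1 then (x.1 + (l + e + s), 0) else x) ∘
          (fun x : ℕ × ℕ => if x.2 = 0 then
            (if l + e < x.1 then (x.1 - (l + e + s), 1) else x) else x)) = A.erase w := by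
      calc _ = (A.erase w).image id := Finset.image_congr hcomp
      _ = A.erase w := Finset.image_id
    rw [himgid, Finset.insert_erase hwA]
  · intro B hB
    rw [mem_CS] at hB
    obtain ⟨hsub, hcard, hsep⟩ := hB
    have hbpos : ∀ x ∈ B, x.2 = 1 → 1 ≤ x.1 ∧ x.1 ≤ m - (s + e) := by
      intro x hx h1
      rcases mem_bd.1 (hsub hx) with h | h | ⟨i', hi', h'⟩ <;> omega
    have hbpos0 : ∀ x ∈ B, x.2 = 0 → 1 ≤ x.1 ∧ x.1 ≤ l + e - (s + 1) := by
      intro x hx h0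
      rcases mem_bd.1 (hsub hx) with h | h | ⟨i', hi', h'⟩ <;> omega
    have hwnotmem : w ∉ B.image
        (fun x : ℕ × ℕ => if x.2 = 1 then (x.1 + (l + e + s), 0) else x) := by
      intro hmem
      obtain ⟨x', hx', hxeq⟩ := Finset.mem_image.1 hmem
      obtain ⟨x1, x2⟩ := x'
      by_cases h : x2 = 1
      · simp only [h, if_pos, if_true] at hxeq
        have hb := hbpos _ hx' h
        simp only at hb
        rw [hw] at hxeq
        have h1 : x1 + (l + e + s) = l + e := congrArg Prod.fst hxeq
        omega
      · simp only [h, if_neg, ite_false] at hxeq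
        rw [hw] at hxeq
        have hp1 : x1 = l + e := congrArg Prod.fst hxeq
        have hp2 : x2 = 0 := congrArg Prod.snd hxeq
        have hb := hbpos0 _ hx' hp2
        simp only at hb
        omega
    rw [Finset.erase_insert hwnotmem, Finset.image_image]
    have hcomp : ∀ x ∈ B,
        ((fun x : ℕ × ℕ => if x.2 = 0 then
            (if l + e < x.1 then (x.1 - (l + e + s), 1) else x) else x) ∘
          (fun x : ℕ × ℕ => if x.2 = 1 then (x.1 + (l + e + s), 0) else x)) x = x := by
      intro x hx
      obtain ⟨x1, x2⟩ := x
      by_cases h : x2 = 1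
      · simp only [Function.comp, h, if_pos, if_true]
        rw [if_pos (by omega : l + e < x1 + (l + e + s))]
        have : x1 + (l + e + s) - (l + e + s) = x1 := by omega
        simp [this]
      · by_cases h0 : x2 = 0
        · have hb := hbpos0 _ hx h0
          simp only at hb
          have hne : ¬ (l + e < x1) := by omega
          simp [Function.comp, h, h0, hne]
        · simp [Function.comp, h, h0]
    calc B.image _ = B.image id := Finset.image_congr hcomp
    _ = B := Finset.image_id

/-- Window splitting on a long path. -/
lemma cnt_window (s : ℕ) (n : ℕ → ℕ) (l m : ℕ) (I : Finset ℕ) (r : ℕ)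
    (hs : 1 ≤ s) (hm : s ≤ m) :
    cnt s n (l + m) 0 I (r + 1) =
      cnt s n l (m - s) I (r + 1) +
        ∑ e ∈ Finset.Icc 1 s, cnt s n (l + e - (s + 1)) (m - (s + e)) I r := by
  classical
  have huniq : ∀ A ∈ CS s n (l + m) 0 I (r + 1), ∀ x ∈ A, ∀ y ∈ A,
      x.2 = 0 → y.2 = 0 → l < x.1 → x.1 ≤ l + s → l < y.1 → y.1 ≤ l + s → x = y := by
    intro A hA x hx y hy hxt hyt hx1 hx2 hy1 hy2
    rw [mem_CS] at hA
    by_contra hne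
    have hsp := hA.2.2 x hx y hy hne
    obtain ⟨x1, x2⟩ := x
    obtain ⟨y1, y2⟩ := y
    simp only at hxt hyt hx1 hx2 hy1 hy2
    subst hxt; subst hyt
    have hlin := sep_lin (t := 0) hsp (by omega)
    have hxy : x1 = y1 := by omega
    exact hne (by rw [hxy])
  have hsplit := card_window_split (CS s n (l + m) 0 I (r + 1)) 0 l s huniq
  rw [cnt, hsplit]
  congr 1
  · exact win_avoid s n l m I (r + 1) hs hm
  · apply Finset.sum_congr rfl
    intro e he
    simp only [Finset.mem_Icc] at he
    exact win_at s n l m I r e hs hm he.1 he.2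

/-- Merging a circle into the path. -/
lemma cnt_merge (s : ℕ) (n : ℕ → ℕ) (l : ℕ) (I : Finset ℕ) (i : ℕ) (r : ℕ)
    (hi : i ∉ I) (hs : 1 ≤ s) (hl : s * r ≤ l + s) (hm : s * (r + 1) ≤ n i) :
    cnt s n l 0 (insert i I) r = cnt s n (l + n i) 0 I r := by
  rcases r with - | r'
  · rw [cnt_zero, cnt_zero]
  · have f1 : s * (r' + 1 + 1) = s * (r' + 1) + s := by ring
    have f2 : s * (r' + 1) = s * r' + s := by ring
    have hm2s : 2 * s ≤ n i := by omega
    rw [cnt_circle_peel s n l I i r' hi hs hm2s,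
      cnt_window s n l (n i) I r' hs (by omega)]
    congr 1
    rcases r' with - | r''
    · have : ∀ e ∈ Finset.Icc 1 s, cnt s n (l + e - (s + 1)) (n i - (s + e)) I 0 = 1 :=
        fun e _ => cnt_zero s n _ _ I
      rw [Finset.sum_congr rfl this, Finset.sum_const, cnt_zero]
      simp [Nat.card_Icc]
    · have f3 : s * (r'' + 1 + 1 + 1) = s * (r'' + 1) + s + s := by ring
      have f4 : s * (r'' + 1) = s * r'' + s := by ring
      have key : ∀ e ∈ Finset.Icc 1 s, cnt s n (l + e - (s + 1)) (n i - (s + e)) I (r'' + 1) =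
          cnt s n l (n i - (2 * s + 1)) I (r'' + 1) := by
        intro e he
        simp only [Finset.mem_Icc] at he
        have h1 : l + e - (s + 1) = l - (s + 1 - e) := by omega
        have h2 : n i - (s + e) = (n i - (2 * s + 1)) + (s + 1 - e) := by omega
        rw [h1, h2]
        have hch := cnt_chain s n (r'' + 1) (s + 1 - e) (l - (s + 1 - e))
          (n i - (2 * s + 1)) I (by omega) (by omega)
        rw [Nat.sub_add_cancel (by omega : s + 1 - e ≤ l)] at hch
        exact hch.symm
      rw [Finset.sum_congr rfl key, Finset.sum_const]
      simp [Nat.card_Icc, mul_comm]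

/-- Peeling all circles. -/
lemma cnt_board (s : ℕ) (n : ℕ → ℕ) (r : ℕ) (hs : 1 ≤ s) : ∀ I : Finset ℕ, ∀ l : ℕ,
    s * r ≤ l + s → (∀ i ∈ I, s * (r + 1) ≤ n i) →
    cnt s n l 0 I r = ((l + ∑ i ∈ I, n i + s) - s * r).choose r := by
  intro I
  induction I using Finset.induction_on with
  | empty =>
    intro l hl _
    rw [cnt_path]
    simp
  | @insert i I hiI ihI =>
    intro l hl hIn
    rw [cnt_merge s n l I i r hiI hs hl (hIn i (Finset.mem_insert_self i I)),
      ihI (l + n i) (by omega) (fun u hu => hIn u (Finset.mem_insert_of_mem hu)),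
      Finset.sum_insert hiI]
    congr 1
    omega

/-- Rotation unfolding map for the anchored circle. -/
def phiF (a nj y : ℕ) : ℕ := if a < y then y - a else y + nj - a

/-- Inverse of the rotation unfolding. -/
def psiI (a nj s u : ℕ) : ℕ := if u + s + a ≤ nj then u + s + a else u + s + a - nj

lemma phi_mem {s a nj y : ℕ} (ha1 : 1 ≤ a) (ha2 : a ≤ nj) (hy1 : 1 ≤ y) (hy2 : y ≤ nj)
    (hne : y ≠ a) :
    (s + 1 ≤ circDist nj a y) ↔ (s + 1 ≤ phiF a nj y ∧ phiF a nj y ≤ nj - s - 1) := by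
  unfold circDist phiF
  by_cases h : a < y <;> simp only [h, if_pos, if_neg, ite_true, ite_false] <;> omega

lemma phi_pair {s a nj y z : ℕ} (ha1 : 1 ≤ a) (ha2 : a ≤ nj)
    (hy1 : 1 ≤ y) (hy2 : y ≤ nj) (hz1 : 1 ≤ z) (hz2 : z ≤ nj)
    (hyr : s + 1 ≤ phiF a nj y ∧ phiF a nj y ≤ nj - s - 1)
    (hzr : s + 1 ≤ phiF a nj z ∧ phiF a nj z ≤ nj - s - 1) :
    (s + 1 ≤ circDist nj y z) ↔
      (s + 1 ≤ max (phiF a nj y - s) (phiF a nj z - s) -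
        min (phiF a nj y - s) (phiF a nj z - s)) := by
  unfold circDist phiF at *
  by_cases h1 : a < y <;> by_cases h2 : a < z <;>
    simp only [h1, h2, if_pos, if_neg, ite_true, ite_false] at hyr hzr ⊢ <;> omega

lemma psi_phi {s a nj y : ℕ} (ha1 : 1 ≤ a) (ha2 : a ≤ nj) (hy1 : 1 ≤ y) (hy2 : y ≤ nj)
    (hyr : s + 1 ≤ phiF a nj y ∧ phiF a nj y ≤ nj - s - 1) :
    psiI a nj s (phiF a nj y - s) = y := by
  unfold phiF psiI at *
  by_cases h1 : a < y <;>
    simp only [h1, if_pos, if_neg, ite_true, ite_false] at hyr ⊢ <;>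
    split_ifs <;> omega

lemma phi_psi {s a nj u : ℕ} (ha1 : 1 ≤ a) (ha2 : a ≤ nj) (hu1 : 1 ≤ u)
    (hu2 : u ≤ nj - (2 * s + 1)) :
    phiF a nj (psiI a nj s u) - s = u ∧ 1 ≤ psiI a nj s u ∧ psiI a nj s u ≤ nj ∧
      psiI a nj s u ≠ a ∧ s + 1 ≤ phiF a nj (psiI a nj s u) ∧
      phiF a nj (psiI a nj s u) ≤ nj - s - 1 := by
  unfold phiF psiI
  split_ifs <;> omega

lemma mem_multiCircles {p : ℕ} {n : ℕ → ℕ} {x : ℕ × ℕ} :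
    x ∈ multiCircles p n ↔ 1 ≤ x.2 ∧ x.2 ≤ p ∧ 1 ≤ x.1 ∧ x.1 ≤ n x.2 := by
  obtain ⟨x1, x2⟩ := x
  simp only [multiCircles, Finset.mem_biUnion, Finset.mem_Icc, Finset.mem_product,
    Finset.mem_singleton]
  constructor
  · rintro ⟨i, ⟨hi1, hi2⟩, h1, h2⟩
    have h2' : x2 = i := h2
    subst h2'
    exact ⟨hi1, hi2, h1.1, h1.2⟩
  · rintro ⟨h1, h2, h3, h4⟩
    exact ⟨x2, ⟨h1, h2⟩, ⟨h3, h4⟩, rfl⟩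

end AuxSep

/-- For any fixed element `(a,j)` of the `j`-th circle, with `n j ≥ sk+1` and
`n i ≥ sk` for all circles, the number of `s`-separated `k`-subsets of `p` disjoint
circles containing `(a,j)` is `C(N - sk - 1, k - 1)`. -/
theorem stmt_8 (p s k a j : ℕ) (n : ℕ → ℕ) (hs : 1 ≤ s) (hk : 1 ≤ k)
    (hj1 : 1 ≤ j) (hjp : j ≤ p) (ha1 : 1 ≤ a) (ha2 : a ≤ n j)
    (hj : s * k + 1 ≤ n j) (hi : ∀ i, 1 ≤ i → i ≤ p → s * k ≤ n i) :
    {A : Finset (ℕ × ℕ) | A ⊆ multiCircles p n ∧ A.card = k ∧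
        IsSepMulti n s A ∧ (a, j) ∈ A}.ncard =
      ((∑ i ∈ Finset.Icc 1 p, n i) - s * k - 1).choose (k - 1) := by
  classical
  obtain ⟨k', rfl⟩ : ∃ k', k = k' + 1 := ⟨k - 1, by omega⟩
  have hcircd : ∀ nn x y : ℕ, circDist nn x y = circDist nn y x := by
    intro nn x y
    unfold circDist
    omega
  have hset : {A : Finset (ℕ × ℕ) | A ⊆ multiCircles p n ∧ A.card = k' + 1 ∧
      IsSepMulti n s A ∧ (a, j) ∈ A} =
      ↑((multiCircles p n).powerset.filter
        (fun A => A.card = k' + 1 ∧ IsSepMulti n s A ∧ (a, j) ∈ A)) := by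
    ext A
    simp only [Set.mem_setOf_eq, Finset.mem_coe, Finset.mem_filter, Finset.mem_powerset]
  rw [hset, Set.ncard_coe_finset]
  have hjIcc : j ∈ Finset.Icc 1 p := by
    simp only [Finset.mem_Icc]
    omega
  set I : Finset ℕ := (Finset.Icc 1 p).erase j with hI
  have hbij : ((multiCircles p n).powerset.filter
      (fun A => A.card = k' + 1 ∧ IsSepMulti n s A ∧ (a, j) ∈ A)).card =
      cnt s n (n j - (2 * s + 1)) 0 I k' := by
    apply card_nbij'_compat
      (fun A => (A.erase (a, j)).image
        (fun x => if x.2 = j then (phiF a (n j) x.1 - s, 0) else (x.1, x.2 + 2)))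
      (fun B => insert (a, j) (B.image
        (fun x => if x.2 = 0 then (psiI a (n j) s x.1, j) else (x.1, x.2 - 2))))
    · intro A hA
      simp only [Finset.mem_filter, Finset.mem_powerset] at hA
      obtain ⟨hsub, hcard, hsep, haA⟩ := hA
      have hrange : ∀ x ∈ A.erase (a, j), x.2 = j →
          1 ≤ x.1 ∧ x.1 ≤ n j ∧ x.1 ≠ a ∧ s + 1 ≤ phiF a (n j) x.1 ∧
            phiF a (n j) x.1 ≤ n j - s - 1 := by
        intro x hx hxt
        obtain ⟨hxne, hxA⟩ := Finset.mem_erase.1 hx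
        have hb := mem_multiCircles.1 (hsub hxA)
        obtain ⟨x1, x2⟩ := x
        simp only at hxt hb
        subst hxt
        have hxa : x1 ≠ a := by
          intro hh
          exact hxne (by rw [hh])
        have hd := hsep _ hxA _ haA hxne rfl
        simp only at hd
        rw [hcircd] at hd
        have hr := (phi_mem (s := s) ha1 ha2 (by omega) (by omega) hxa).1 hd
        exact ⟨by omega, by omega, hxa, hr.1, hr.2⟩
      have hround : ∀ x ∈ A.erase (a, j),
          (fun x : ℕ × ℕ => if x.2 = 0 then (psiI a (n j) s x.1, j) else (x.1, x.2 - 2))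
            ((fun x : ℕ × ℕ => if x.2 = j then (phiF a (n j) x.1 - s, 0)
              else (x.1, x.2 + 2)) x) = x := by
        intro x hx
        have hr := hrange x hx
        obtain ⟨x1, x2⟩ := x
        by_cases h : x2 = j
        · have hr2 : 1 ≤ x1 ∧ x1 ≤ n j ∧ x1 ≠ a ∧ s + 1 ≤ phiF a (n j) x1 ∧
              phiF a (n j) x1 ≤ n j - s - 1 := hr (show ((x1, x2) : ℕ × ℕ).2 = j from h)
          have hps := psi_phi (s := s) ha1 ha2 hr2.1 hr2.2.1 ⟨hr2.2.2.2.1, hr2.2.2.2.2⟩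
          simp [h, hps]
        · have hb := mem_multiCircles.1 (hsub (Finset.mem_of_mem_erase hx))
          simp only at hb
          simp only [h, if_neg, ite_false]
          rw [if_neg (by omega : ¬ (x2 + 2 = 0))]
          have : x2 + 2 - 2 = x2 := by omega
          rw [this]
      have hinj : ∀ x ∈ A.erase (a, j), ∀ y ∈ A.erase (a, j),
          (fun x : ℕ × ℕ => if x.2 = j then (phiF a (n j) x.1 - s, 0) else (x.1, x.2 + 2)) x =
          (fun x : ℕ × ℕ => if x.2 = j then (phiF a (n j) x.1 - s, 0) else (x.1, x.2 + 2)) y →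
          x = y := by
        intro x hx y hy hxy
        have := hround x hx
        rw [← hround y hy, ← hxy, this]
      rw [mem_CS]
      refine ⟨?_, ?_, ?_⟩
      · intro x hx
        obtain ⟨x', hx', rfl⟩ := Finset.mem_image.1 hx
        obtain ⟨x1, x2⟩ := x'
        by_cases h : x2 = j
        · have hr2 : 1 ≤ x1 ∧ x1 ≤ n j ∧ x1 ≠ a ∧ s + 1 ≤ phiF a (n j) x1 ∧
              phiF a (n j) x1 ≤ n j - s - 1 :=
            hrange _ hx' (show ((x1, x2) : ℕ × ℕ).2 = j from h)
          simp only [h, if_pos, if_true]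
          rw [mem_bd]
          left
          exact ⟨(by omega : 1 ≤ phiF a (n j) x1 - s),
            (by omega : phiF a (n j) x1 - s ≤ n j - (2 * s + 1)), rfl⟩
        · have hb := mem_multiCircles.1 (hsub (Finset.mem_of_mem_erase hx'))
          simp only at hb
          simp only [h, if_neg, ite_false]
          rw [mem_bd]
          right; right
          refine ⟨x2, ?_, hb.2.2.1, hb.2.2.2, rfl⟩
          rw [hI]
          exact Finset.mem_erase.2 ⟨h, by simp only [Finset.mem_Icc]; omega⟩
      · rw [Finset.card_image_of_injOn hinj, Finset.card_erase_of_mem haA, hcard]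
        omega
      · intro x hx y hy hxy
        obtain ⟨x', hx', rfl⟩ := Finset.mem_image.1 hx
        obtain ⟨y', hy', rfl⟩ := Finset.mem_image.1 hy
        have hne : x' ≠ y' := fun h => hxy (by rw [h])
        have hsp := hsep x' (Finset.mem_of_mem_erase hx') y' (Finset.mem_of_mem_erase hy') hne
        obtain ⟨x1, x2⟩ := x'
        obtain ⟨y1, y2⟩ := y'
        by_cases h1 : x2 = j <;> by_cases h2 : y2 = j
        · have hrx : 1 ≤ x1 ∧ x1 ≤ n j ∧ x1 ≠ a ∧ s + 1 ≤ phiF a (n j) x1 ∧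
              phiF a (n j) x1 ≤ n j - s - 1 :=
            hrange _ hx' (show ((x1, x2) : ℕ × ℕ).2 = j from h1)
          have hry : 1 ≤ y1 ∧ y1 ≤ n j ∧ y1 ≠ a ∧ s + 1 ≤ phiF a (n j) y1 ∧
              phiF a (n j) y1 ≤ n j - s - 1 :=
            hrange _ hy' (show ((y1, y2) : ℕ × ℕ).2 = j from h2)
          simp only [h1, h2, if_pos, ite_true] at hxy ⊢
          intro _
          rw [if_pos (by omega : (0:ℕ) ≤ 1)]
          have hd : s + 1 ≤ circDist (n j) x1 y1 := by
            have h3 : s + 1 ≤ circDist (n x2) x1 y1 :=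
              hsp (show ((x1, x2) : ℕ × ℕ).2 = ((y1, y2) : ℕ × ℕ).2 from by
                simp only; omega)
            rw [← h1]
            exact h3
          exact (phi_pair (s := s) ha1 ha2 hrx.1 hrx.2.1 hry.1 hry.2.1
            ⟨hrx.2.2.2.1, hrx.2.2.2.2⟩ ⟨hry.2.2.2.1, hry.2.2.2.2⟩).1 hd
        · simp only [h1, h2, if_pos, if_neg, ite_false, ite_true]
          intro hteq
          simp only at hteq
          omega
        · simp only [h1, h2, if_pos, if_neg, ite_false, ite_true]
          intro hteq
          simp only at hteq
          omega
        · simp only [h1, h2, if_neg, ite_false]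
          intro hteq
          simp only at hteq
          have hyx : x2 = y2 := by omega
          subst hyx
          rw [if_neg (by omega : ¬ (x2 + 2 ≤ 1))]
          have hxx : x2 + 2 - 2 = x2 := by omega
          rw [hxx]
          have hd := hsp rfl
          simp only at hd ⊢
          exact hd
    · intro B hB
      rw [mem_CS] at hB
      obtain ⟨hsub, hcard, hsep⟩ := hB
      have hbpos0 : ∀ x ∈ B, x.2 = 0 → 1 ≤ x.1 ∧ x.1 ≤ n j - (2 * s + 1) := by
        intro x hx h0
        rcases mem_bd.1 (hsub hx) with h | h | ⟨i', hi', h'⟩ <;> omega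
      have hbtag : ∀ x ∈ B, x.2 ≠ 0 → ∃ i', i' ∈ I ∧ x.2 = i' + 2 ∧ 1 ≤ x.1 ∧ x.1 ≤ n i' := by
        intro x hx h0
        rcases mem_bd.1 (hsub hx) with h | h | ⟨i', hi', h'⟩
        · omega
        · omega
        · exact ⟨i', hi', h'.2.2, h'.1, h'.2.1⟩
      have hIcc : ∀ i', i' ∈ I → 1 ≤ i' ∧ i' ≤ p ∧ i' ≠ j := by
        intro i' hi'
        rw [hI] at hi'
        obtain ⟨h1, h2⟩ := Finset.mem_erase.1 hi'
        simp only [Finset.mem_Icc] at h2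
        exact ⟨h2.1, h2.2, h1⟩
      have hanot : (a, j) ∉ B.image
          (fun x : ℕ × ℕ => if x.2 = 0 then (psiI a (n j) s x.1, j) else (x.1, x.2 - 2)) := by
        intro hmem
        obtain ⟨x', hx', hxeq⟩ := Finset.mem_image.1 hmem
        obtain ⟨x1, x2⟩ := x'
        by_cases h : x2 = 0
        · simp only [h, if_pos, if_true] at hxeq
          have hb := hbpos0 _ hx' h
          simp only at hb
          have hpp := phi_psi (s := s) ha1 ha2 hb.1 hb.2
          have h1 : psiI a (n j) s x1 = a := congrArg Prod.fst hxeq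
          exact hpp.2.2.2.1 h1
        · simp only [h, if_neg, ite_false] at hxeq
          obtain ⟨i', hi', ht, -⟩ := hbtag _ hx' h
          have h2 : x2 - 2 = j := congrArg Prod.snd hxeq
          have := (hIcc i' hi').2.2
          omega
      have hround : ∀ x ∈ B,
          (fun x : ℕ × ℕ => if x.2 = j then (phiF a (n j) x.1 - s, 0) else (x.1, x.2 + 2))
            ((fun x : ℕ × ℕ => if x.2 = 0 then (psiI a (n j) s x.1, j)
              else (x.1, x.2 - 2)) x) = x := by
        intro x hx
        obtain ⟨x1, x2⟩ := x
        by_cases h : x2 = 0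
        · have hb := hbpos0 _ hx h
          simp only at hb
          have hpp := phi_psi (s := s) ha1 ha2 hb.1 hb.2
          simp [h, hpp.1]
        · obtain ⟨i', hi', ht, -⟩ := hbtag _ hx h
          have hti : x2 = i' + 2 := ht
          have hij := (hIcc i' hi').2.2
          simp only [h, if_neg, ite_false]
          rw [if_neg (by omega : ¬ (x2 - 2 = j))]
          have : x2 - 2 + 2 = x2 := by omega
          rw [this]
      have hinj : ∀ x ∈ B, ∀ y ∈ B,
          (fun x : ℕ × ℕ => if x.2 = 0 then (psiI a (n j) s x.1, j) else (x.1, x.2 - 2)) x =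
          (fun x : ℕ × ℕ => if x.2 = 0 then (psiI a (n j) s x.1, j) else (x.1, x.2 - 2)) y →
          x = y := by
        intro x hx y hy hxy
        have := hround x hx
        rw [← hround y hy, ← hxy, this]
      have hsepa : ∀ z ∈ B.image
          (fun x : ℕ × ℕ => if x.2 = 0 then (psiI a (n j) s x.1, j) else (x.1, x.2 - 2)),
          ∀ hza : z ≠ (a, j), z.2 = j → s + 1 ≤ circDist (n j) z.1 a := by
        intro z hz hza hzt
        obtain ⟨z', hz', rfl⟩ := Finset.mem_image.1 hz
        obtain ⟨z1, z2⟩ := z'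
        by_cases h : z2 = 0
        · simp only [h, if_pos, if_true] at hzt ⊢
          have hb := hbpos0 _ hz' h
          simp only at hb
          have hpp := phi_psi (s := s) ha1 ha2 hb.1 hb.2
          rw [hcircd]
          exact (phi_mem (s := s) ha1 ha2 hpp.2.1 hpp.2.2.1 hpp.2.2.2.1).2
            ⟨hpp.2.2.2.2.1, hpp.2.2.2.2.2⟩
        · simp only [h, if_neg, ite_false] at hzt
          obtain ⟨i', hi', ht, -⟩ := hbtag _ hz' h
          have hti : z2 = i' + 2 := ht
          have hij := (hIcc i' hi').2.2
          omega
      simp only [Finset.mem_filter, Finset.mem_powerset]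
      refine ⟨?_, ?_, ?_, Finset.mem_insert_self _ _⟩
      · intro x hx
        rcases Finset.mem_insert.1 hx with rfl | hxB
        · rw [mem_multiCircles]
          exact ⟨hj1, hjp, ha1, ha2⟩
        · obtain ⟨x', hx', rfl⟩ := Finset.mem_image.1 hxB
          obtain ⟨x1, x2⟩ := x'
          by_cases h : x2 = 0
          · have hb := hbpos0 _ hx' h
            simp only at hb
            have hpp := phi_psi (s := s) ha1 ha2 hb.1 hb.2
            simp only [h, if_pos, if_true]
            rw [mem_multiCircles]
            exact ⟨hj1, hjp, hpp.2.1, hpp.2.2.1⟩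
          · obtain ⟨i', hi', ht, hb1, hb2⟩ := hbtag _ hx' h
            have hti : x2 = i' + 2 := ht
            have hic := hIcc i' hi'
            simp only [h, if_neg, ite_false]
            rw [mem_multiCircles]
            simp only
            rw [hti]
            have : i' + 2 - 2 = i' := by omega
            rw [this]
            exact ⟨hic.1, hic.2.1, hb1, hb2⟩
      · rw [Finset.card_insert_of_notMem hanot, Finset.card_image_of_injOn hinj, hcard]
      · intro x hx y hy hxy hxyt
        rcases Finset.mem_insert.1 hx with rfl | hxB <;>
          rcases Finset.mem_insert.1 hy with rfl | hyB
        · exact absurd rfl hxy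
        · have hyj : y.2 = j := hxyt.symm
          have h2 := hsepa y hyB (Ne.symm hxy) hyj
          have h3 : s + 1 ≤ circDist (n j) a y.1 := by
            rw [hcircd]
            exact h2
          exact h3
        · have hxj : x.2 = j := hxyt
          have h2 := hsepa x hxB hxy hxj
          show s + 1 ≤ circDist (n x.2) x.1 (a, j).1
          rw [hxj]
          exact h2
        · obtain ⟨x', hx', rfl⟩ := Finset.mem_image.1 hxB
          obtain ⟨y', hy', rfl⟩ := Finset.mem_image.1 hyB
          have hne : x' ≠ y' := fun h => hxy (by rw [h])
          have hsp := hsep x' hx' y' hy' hne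
          obtain ⟨x1, x2⟩ := x'
          obtain ⟨y1, y2⟩ := y'
          by_cases h1 : x2 = 0 <;> by_cases h2 : y2 = 0
          · subst h1; subst h2
            simp only [if_pos] at hxyt ⊢
            have hbx := hbpos0 _ hx' rfl
            have hby := hbpos0 _ hy' rfl
            simp only at hbx hby
            have hppx := phi_psi (s := s) ha1 ha2 hbx.1 hbx.2
            have hppy := phi_psi (s := s) ha1 ha2 hby.1 hby.2
            have hlin := sep_lin (t := 0) hsp (by omega)
            apply (phi_pair (s := s) ha1 ha2 hppx.2.1 hppx.2.2.1 hppy.2.1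
              hppy.2.2.1 ⟨hppx.2.2.2.2.1, hppx.2.2.2.2.2⟩
              ⟨hppy.2.2.2.2.1, hppy.2.2.2.2.2⟩).2
            rw [hppx.1, hppy.1]
            exact hlin
          · simp only [h1, h2, if_pos, if_neg, ite_false, ite_true] at hxyt
            obtain ⟨i', hi', ht, -⟩ := hbtag _ hy' h2
            have hti : y2 = i' + 2 := ht
            have hij := (hIcc i' hi').2.2
            have hxyt' : j = y2 - 2 := hxyt
            omega
          · simp only [h1, h2, if_pos, if_neg, ite_false, ite_true] at hxyt
            obtain ⟨i', hi', ht, -⟩ := hbtag _ hx' h1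
            have hti : x2 = i' + 2 := ht
            have hij := (hIcc i' hi').2.2
            have hxyt' : x2 - 2 = j := hxyt
            omega
          · simp only [h1, h2, if_neg, ite_false] at hxyt ⊢
            obtain ⟨ix, hix, htx, -⟩ := hbtag _ hx' h1
            have htix : x2 = ix + 2 := htx
            obtain ⟨iy, hiy, hty, -⟩ := hbtag _ hy' h2
            have htiy : y2 = iy + 2 := hty
            have hxyt' : x2 - 2 = y2 - 2 := hxyt
            have hyx : x2 = y2 := by omega
            subst hyx
            have hd := sep_circ (t := ix) (x1 := x1) (y1 := y1)
              (by rw [← htix]; exact hsp)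
            have : x2 - 2 = ix := by omega
            rw [this]
            exact hd
    · intro A hA
      simp only [Finset.mem_filter, Finset.mem_powerset] at hA
      obtain ⟨hsub, hcard, hsep, haA⟩ := hA
      have hrange : ∀ x ∈ A.erase (a, j), x.2 = j →
          1 ≤ x.1 ∧ x.1 ≤ n j ∧ x.1 ≠ a ∧ s + 1 ≤ phiF a (n j) x.1 ∧
            phiF a (n j) x.1 ≤ n j - s - 1 := by
        intro x hx hxt
        obtain ⟨hxne, hxA⟩ := Finset.mem_erase.1 hx
        have hb := mem_multiCircles.1 (hsub hxA)
        obtain ⟨x1, x2⟩ := x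
        simp only at hxt hb
        subst hxt
        have hxa : x1 ≠ a := by
          intro hh
          exact hxne (by rw [hh])
        have hd := hsep _ hxA _ haA hxne rfl
        simp only at hd
        rw [hcircd] at hd
        have hr := (phi_mem (s := s) ha1 ha2 (by omega) (by omega) hxa).1 hd
        exact ⟨by omega, by omega, hxa, hr.1, hr.2⟩
      rw [Finset.image_image]
      have hcomp : ∀ x ∈ A.erase (a, j),
          ((fun x : ℕ × ℕ => if x.2 = 0 then (psiI a (n j) s x.1, j) else (x.1, x.2 - 2)) ∘
            (fun x : ℕ × ℕ => if x.2 = j then (phiF a (n j) x.1 - s, 0)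
              else (x.1, x.2 + 2))) x = x := by
        intro x hx
        have hr := hrange x hx
        obtain ⟨x1, x2⟩ := x
        by_cases h : x2 = j
        · have hr2 : 1 ≤ x1 ∧ x1 ≤ n j ∧ x1 ≠ a ∧ s + 1 ≤ phiF a (n j) x1 ∧
              phiF a (n j) x1 ≤ n j - s - 1 := hr (show ((x1, x2) : ℕ × ℕ).2 = j from h)
          have hps := psi_phi (s := s) ha1 ha2 hr2.1 hr2.2.1 ⟨hr2.2.2.2.1, hr2.2.2.2.2⟩
          simp [Function.comp, h, hps]
        · have hb := mem_multiCircles.1 (hsub (Finset.mem_of_mem_erase hx))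
          simp only at hb
          simp only [Function.comp, h, if_neg, ite_false]
          rw [if_neg (by omega : ¬ (x2 + 2 = 0))]
          have : x2 + 2 - 2 = x2 := by omega
          rw [this]
      have himgid : (A.erase (a, j)).image
          ((fun x : ℕ × ℕ => if x.2 = 0 then (psiI a (n j) s x.1, j) else (x.1, x.2 - 2)) ∘
            (fun x : ℕ × ℕ => if x.2 = j then (phiF a (n j) x.1 - s, 0)
              else (x.1, x.2 + 2))) = A.erase (a, j) := by
        calc _ = (A.erase (a, j)).image id := Finset.image_congr hcomp
        _ = A.erase (a, j) := Finset.image_id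
      rw [himgid, Finset.insert_erase haA]
    · intro B hB
      rw [mem_CS] at hB
      obtain ⟨hsub, hcard, hsep⟩ := hB
      have hbpos0 : ∀ x ∈ B, x.2 = 0 → 1 ≤ x.1 ∧ x.1 ≤ n j - (2 * s + 1) := by
        intro x hx h0
        rcases mem_bd.1 (hsub hx) with h | h | ⟨i', hi', h'⟩ <;> omega
      have hbtag : ∀ x ∈ B, x.2 ≠ 0 → ∃ i', i' ∈ I ∧ x.2 = i' + 2 ∧ 1 ≤ x.1 ∧ x.1 ≤ n i' := by
        intro x hx h0
        rcases mem_bd.1 (hsub hx) with h | h | ⟨i', hi', h'⟩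
        · omega
        · omega
        · exact ⟨i', hi', h'.2.2, h'.1, h'.2.1⟩
      have hIcc : ∀ i', i' ∈ I → 1 ≤ i' ∧ i' ≤ p ∧ i' ≠ j := by
        intro i' hi'
        rw [hI] at hi'
        obtain ⟨h1, h2⟩ := Finset.mem_erase.1 hi'
        simp only [Finset.mem_Icc] at h2
        exact ⟨h2.1, h2.2, h1⟩
      have hanot : (a, j) ∉ B.image
          (fun x : ℕ × ℕ => if x.2 = 0 then (psiI a (n j) s x.1, j) else (x.1, x.2 - 2)) := by
        intro hmem
        obtain ⟨x', hx', hxeq⟩ := Finset.mem_image.1 hmem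
        obtain ⟨x1, x2⟩ := x'
        by_cases h : x2 = 0
        · simp only [h, if_pos, if_true] at hxeq
          have hb := hbpos0 _ hx' h
          simp only at hb
          have hpp := phi_psi (s := s) ha1 ha2 hb.1 hb.2
          have h1 : psiI a (n j) s x1 = a := congrArg Prod.fst hxeq
          exact hpp.2.2.2.1 h1
        · simp only [h, if_neg, ite_false] at hxeq
          obtain ⟨i', hi', ht, -⟩ := hbtag _ hx' h
          have h2 : x2 - 2 = j := congrArg Prod.snd hxeq
          have := (hIcc i' hi').2.2
          omega
      rw [Finset.erase_insert hanot, Finset.image_image]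
      have hcomp : ∀ x ∈ B,
          ((fun x : ℕ × ℕ => if x.2 = j then (phiF a (n j) x.1 - s, 0) else (x.1, x.2 + 2)) ∘
            (fun x : ℕ × ℕ => if x.2 = 0 then (psiI a (n j) s x.1, j)
              else (x.1, x.2 - 2))) x = x := by
        intro x hx
        obtain ⟨x1, x2⟩ := x
        by_cases h : x2 = 0
        · have hb := hbpos0 _ hx h
          simp only at hb
          have hpp := phi_psi (s := s) ha1 ha2 hb.1 hb.2
          simp [Function.comp, h, hpp.1]
        · obtain ⟨i', hi', ht, -⟩ := hbtag _ hx h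
          have hti : x2 = i' + 2 := ht
          have hij := (hIcc i' hi').2.2
          simp only [Function.comp, h, if_neg, ite_false]
          rw [if_neg (by omega : ¬ (x2 - 2 = j))]
          have : x2 - 2 + 2 = x2 := by omega
          rw [this]
      calc B.image _ = B.image id := Finset.image_congr hcomp
      _ = B := Finset.image_id
  rw [hbij]
  have f1 : s * (k' + 1) = s * k' + s := by ring
  have hIm : ∀ i ∈ I, s * (k' + 1) ≤ n i := by
    intro i hi'
    rw [hI] at hi'
    obtain ⟨hne, hIcc2⟩ := Finset.mem_erase.1 hi'
    simp only [Finset.mem_Icc] at hIcc2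
    exact hi i hIcc2.1 hIcc2.2
  rw [cnt_board s n k' hs I (n j - (2 * s + 1)) (by omega) hIm]
  have hsum : ∑ i ∈ Finset.Icc 1 p, n i = n j + ∑ i ∈ I, n i := by
    rw [hI]
    exact (Finset.add_sum_erase _ n hjIcc).symm
  rw [hsum]
  have hkk : k' + 1 - 1 = k' := by omega
  rw [hkk]
  rcases k' with - | k''
  · simp
  · have f2 : s * (k'' + 1) = s * k'' + s := by ring
    congr 1
    omega
end

section
/- For n1, n2 ≥ sk+1, the identity (n1+n2)/k * C(n1+n2 - sk - 1, k-1) = ∑_{j=0}^{k} (n1/(n1 - sj)) C(n1 - sj, j) * (n2/(n2 - s(k-j))) C(n2 - s(k-j), k-j) holds. -/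
/-!
Write `F s a j` for `(a / (a - s j)) C(a - s j, j)`. For `j ≥ 1` it equals
`C(a - s j, j) + s C(a - s j - 1, j - 1) = (a / j) C(a - s j - 1, j - 1)`, a polynomial in `a`,
so it makes sense for every integer `a`. Two applications of Pascal's rule give
`F s (a + 1) (j + 1) = F s a (j + 1) + F s (a - s) j`, and `F s 0 (j + 1) = 0`. With these, the
Hagen–Rothe convolution `F s (a + b) k = ∑ F s a i * F s b (k - i)` follows by induction on `k`
and then on the integer `a`. The theorem is this convolution at `a = n1`, `b = n2`, where both
closed forms of `F` appear.
-/

open Finset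

lemma succ_mul_ringChoose_succ (r : ℤ) (j : ℕ) :
    (j + 1) * Ring.choose r (j + 1) = r * Ring.choose (r - 1) j := by
  simpa using Ring.choose_smul_choose r (Nat.le_add_left 1 j)

/-- For `a ≠ s * j` this is `a / (a - s * j) * Ring.choose (a - s * j) j`
(see `sub_mul_eq_mul_choose`). -/
def circularChoose (s : ℕ) (a : ℤ) : ℕ → ℤ
  | 0 => 1
  | j + 1 => Ring.choose (a - s * (j + 1)) (j + 1) + s * Ring.choose (a - s * (j + 1) - 1) j

namespace circularChoose

variable (s : ℕ)

@[simp] lemma zero_right (a : ℤ) : circularChoose s a 0 = 1 := rfl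

lemma succ_right (a : ℤ) (j : ℕ) :
    circularChoose s a (j + 1) =
      Ring.choose (a - s * (j + 1)) (j + 1) + s * Ring.choose (a - s * (j + 1) - 1) j := rfl

lemma succ_mul_succ_right (a : ℤ) (j : ℕ) :
    (j + 1) * circularChoose s a (j + 1) = a * Ring.choose (a - s * (j + 1) - 1) j := by
  rw [succ_right, mul_add, succ_mul_ringChoose_succ]
  ring

lemma sub_mul_eq_mul_choose (a : ℤ) (j : ℕ) :
    (a - s * j) * circularChoose s a j = a * Ring.choose (a - s * j) j := by
  cases j with
  | zero => simp
  | succ j =>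
    have h₁ := succ_mul_succ_right s a j
    have h₂ := succ_mul_ringChoose_succ (a - s * (j + 1)) j
    refine mul_left_cancel₀ (by positivity : ((j : ℤ) + 1) ≠ 0) ?_
    push_cast
    linear_combination (a - s * (j + 1)) * h₁ - a * h₂

lemma zero_succ (j : ℕ) : circularChoose s 0 (j + 1) = 0 := by
  have h := succ_mul_succ_right s 0 j
  rw [zero_mul] at h
  exact (mul_eq_zero.mp h).resolve_left (by positivity)

lemma one_right (a : ℤ) : circularChoose s a 1 = a := by
  simp [succ_right]

lemma succ_succ (a : ℤ) (j : ℕ) :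
    circularChoose s (a + 1) (j + 1) = circularChoose s a (j + 1) + circularChoose s (a - s) j := by
  cases j with
  | zero => simp [one_right]
  | succ j =>
    set x := a - s * (j + 2)
    have e₁ : a + 1 - s * ((j + 1 : ℕ) + 1) = x + 1 := by push_cast; ring
    have e₂ : a - s * ((j + 1 : ℕ) + 1) = x := by push_cast; ring
    have e₃ : a - s - s * (j + 1) = x := by ring
    have pascal_x :
        Ring.choose x (j + 1) = Ring.choose (x - 1) j + Ring.choose (x - 1) (j + 1) := by
      simpa using Ring.choose_succ_succ (x - 1) j
    rw [succ_right, succ_right, succ_right, e₁, e₂, e₃, add_sub_cancel_right,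
      Ring.choose_succ_succ, pascal_x]
    ring

/-- The Hagen–Rothe convolution. -/
theorem add_eq_sum_antidiagonal (k : ℕ) (a b : ℤ) :
    circularChoose s (a + b) k =
      ∑ p ∈ antidiagonal k, circularChoose s a p.1 * circularChoose s b p.2 := by
  induction k generalizing a with
  | zero => simp
  | succ k ih =>
    -- both sides obey the same first-order recurrence in `a` and agree at `a = 0`
    have step : ∀ a : ℤ,
        ∑ p ∈ antidiagonal (k + 1), circularChoose s (a + 1) p.1 * circularChoose s b p.2 =
          ∑ p ∈ antidiagonal (k + 1), circularChoose s a p.1 * circularChoose s b p.2 +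
            circularChoose s (a - s + b) k := by
      intro a
      simp only [Nat.sum_antidiagonal_succ, zero_right, succ_succ, add_mul, sum_add_distrib, ih]
      ring
    have succ_succ_add : ∀ a : ℤ, circularChoose s (a + 1 + b) (k + 1) =
        circularChoose s (a + b) (k + 1) + circularChoose s (a - s + b) k := by
      intro a
      rw [add_right_comm, succ_succ, sub_add_eq_add_sub]
    induction a with
    | zero => simp [Nat.sum_antidiagonal_succ, zero_succ]
    | succ i hi => rw [succ_succ_add, step, hi]
    | pred i hi =>
      have h₁ := succ_succ_add (-i - 1)
      have h₂ := step (-i - 1)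
      rw [sub_add_cancel] at h₁ h₂
      linarith

lemma natCast_eq_div_mul_choose {n j : ℕ} (h : s * j < n) :
    (circularChoose s n j : ℚ) = n / (n - s * j) * ((n - s * j).choose j : ℚ) := by
  have key := sub_mul_eq_mul_choose s n j
  rw [show (n : ℤ) - s * j = (n - s * j : ℕ) by push_cast [h.le]; rfl,
    Ring.choose_natCast] at key
  have keyQ : ((n - s * j : ℕ) : ℚ) * circularChoose s n j = n * (n - s * j).choose j := by
    exact_mod_cast key
  rw [Nat.cast_sub h.le] at keyQ
  push_cast at keyQ
  rw [div_mul_eq_mul_div, eq_div_iff (sub_ne_zero.mpr (by exact_mod_cast h.ne')), mul_comm, keyQ]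

lemma natCast_eq_div_mul_choose_pred {n k : ℕ} (hk : 0 < k) (h : s * k < n) :
    (circularChoose s n k : ℚ) = n / k * ((n - s * k - 1).choose (k - 1) : ℚ) := by
  obtain ⟨j, rfl⟩ := Nat.exists_eq_add_one_of_ne_zero hk.ne'
  have key := succ_mul_succ_right s n j
  rw [show (n : ℤ) - s * (j + 1) - 1 = (n - s * (j + 1) - 1 : ℕ) by
    rw [Nat.cast_sub (by omega), Nat.cast_sub h.le]; push_cast; ring, Ring.choose_natCast] at key
  have keyQ :
      ((j : ℚ) + 1) * circularChoose s n (j + 1) = n * (n - s * (j + 1) - 1).choose j := by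
    exact_mod_cast key
  rw [Nat.add_sub_cancel, div_mul_eq_mul_div, eq_div_iff (by positivity), mul_comm]
  push_cast
  exact keyQ

end circularChoose

theorem stmt_11_general (s k n1 n2 : ℕ) (hk : 1 ≤ k)
    (h1 : s * k + 1 ≤ n1) (h2 : s * k + 1 ≤ n2) :
    ((n1 + n2 : ℕ) : ℚ) / (k : ℚ) * ((n1 + n2 - s * k - 1).choose (k - 1) : ℚ) =
      ∑ j ∈ Finset.range (k + 1),
        ((n1 : ℚ) / ((n1 : ℚ) - (s : ℚ) * (j : ℚ))) * ((n1 - s * j).choose j : ℚ) *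
          (((n2 : ℚ) / ((n2 : ℚ) - (s : ℚ) * ((k : ℚ) - (j : ℚ)))) *
            ((n2 - s * (k - j)).choose (k - j) : ℚ)) := by
  calc _ = (circularChoose s (n1 + n2 : ℕ) k : ℚ) :=
        (circularChoose.natCast_eq_div_mul_choose_pred s hk (by omega)).symm
    _ = ∑ j ∈ range (k + 1), (circularChoose s n1 j : ℚ) * circularChoose s n2 (k - j) := by
        rw [Nat.cast_add, circularChoose.add_eq_sum_antidiagonal,
          Nat.sum_antidiagonal_eq_sum_range_succ_mk]
        push_cast
        rfl
    _ = _ := sum_congr rfl fun j hj => by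
        have hj : j ≤ k := Nat.lt_succ_iff.mp (mem_range.mp hj)
        have hj₁ : s * j < n1 := lt_of_le_of_lt (Nat.mul_le_mul_left s hj) h1
        have hj₂ : s * (k - j) < n2 := lt_of_le_of_lt (Nat.mul_le_mul_left s (k.sub_le j)) h2
        rw [circularChoose.natCast_eq_div_mul_choose s hj₁,
          circularChoose.natCast_eq_div_mul_choose s hj₂, Nat.cast_sub hj]

/-- Combinatorial identity: for `n1, n2 ≥ sk+1`,
`(n1+n2)/k * C(n1+n2-sk-1, k-1) = ∑_{j=0}^{k} (n1/(n1-sj)) C(n1-sj, j) * (n2/(n2-s(k-j))) C(n2-s(k-j), k-j)`. -/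
theorem stmt_11 (s k n1 n2 : ℕ) (hs : 1 ≤ s) (hk : 1 ≤ k)
    (h1 : s * k + 1 ≤ n1) (h2 : s * k + 1 ≤ n2) :
    ((n1 + n2 : ℕ) : ℚ) / (k : ℚ) * ((n1 + n2 - s * k - 1).choose (k - 1) : ℚ) =
      ∑ j ∈ Finset.range (k + 1),
        ((n1 : ℚ) / ((n1 : ℚ) - (s : ℚ) * (j : ℚ))) * ((n1 - s * j).choose j : ℚ) *
          (((n2 : ℚ) / ((n2 : ℚ) - (s : ℚ) * ((k : ℚ) - (j : ℚ)))) *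
            ((n2 - s * (k - j)).choose (k - j) : ℚ)) :=
  stmt_11_general s k n1 n2 hk h1 h2
end
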